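/- arXiv:1705.01293 — 13 statements merged into one kernel-verified Lean document; each statement's English description precedes it below -/
import Mathlib

section
/- Let (S, *, n) be a symmetric composition algebra and let e ∈ S be an idempotent (e ≠ 0, e*e = e). Then the map τ : x ↦ e*(e*x) satisfies τ(x) = n(e,x)e − x*e for all x, and τ is an algebra automorphism of (S, *) with τ³ = id. -/
open QuadraticMap

/-- For an idempotent `e` of a symmetric composition algebra `(S,*,n)`,
the map `τ : x ↦ e*(e*x)` satisfies `τ(x) = n(e,x)e − x*e` and is an algebra
automorphism of `(S,*)` with `τ³ = id`. -/
theorem idempotent_automorphism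
    {F S : Type*} [Field F] [AddCommGroup S] [Module F S]
    (mul : S →ₗ[F] S →ₗ[F] S)
    (n : QuadraticForm F S)
    (hcomp : ∀ x y : S, n (mul x y) = n x * n y)
    (hnondeg : ∀ x : S, (∀ y : S, polar n x y = 0) → x = 0)
    (hassoc : ∀ x y z : S, polar n (mul x y) z = polar n x (mul y z))
    (e : S) (he : e ≠ 0) (hee : mul e e = e)
    (τ : S → S) (hτ : ∀ x, τ x = mul e (mul e x)) :
    (∀ x : S, τ x = polar n e x • e - mul x e) ∧
    IsLinearMap F τ ∧
    (∀ x y : S, τ (mul x y) = mul (τ x) (τ y)) ∧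
    Function.Bijective τ ∧
    (∀ x : S, τ (τ (τ x)) = x) := by
  -- the polar form of `n` evaluated on a sum
  have hn : ∀ x z : S, n (x + z) = n x + n z + polar n x z := by
    intro x z; simp only [QuadraticMap.polar]; ring
  -- linearized composition law (second slot)
  have hmulB : ∀ x y z : S, polar n (mul x y) (mul x z) = n x * polar n y z := by
    intro x y z
    simp only [QuadraticMap.polar, ← map_add, hcomp]
    ring
  -- linearized composition law (first slot)
  have hmulB2 : ∀ x y z : S, polar n (mul x y) (mul z y) = n y * polar n x z := by
    intro x y z
    have hadd : mul (x + z) y = mul x y + mul z y := by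
      rw [map_add mul x z]; rfl
    simp only [QuadraticMap.polar, ← hadd, hcomp]
    ring
  -- fully linearized composition law
  have hfull : ∀ x y z w : S, polar n (mul x y) (mul z w) + polar n (mul z y) (mul x w)
      = polar n x z * polar n y w := by
    intro x y z w
    have h := hmulB (x + z) y w
    have hadd : ∀ u : S, mul (x + z) u = mul x u + mul z u := by
      intro u; rw [map_add mul x z]; rfl
    rw [hadd, hadd, polar_add_left, polar_add_right, polar_add_right, hn] at h
    have h1 := hmulB x y w
    have h2 := hmulB z y w
    linear_combination h - h1 - h2
  have hfull2 : ∀ x y z w : S, polar n (mul x y) (mul z w) + polar n (mul x w) (mul z y)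
      = polar n y w * polar n x z := by
    intro x y z w
    have h := hmulB2 x (y + w) z
    rw [map_add (mul x) y w, map_add (mul z) y w, polar_add_left, polar_add_right,
      polar_add_right, hn] at h
    have h1 := hmulB2 x y z
    have h2 := hmulB2 x w z
    linear_combination h - h1 - h2
  -- the fundamental identities (x*y)*x = n(x) y and x*(y*x) = n(x) y
  have h4 : ∀ x y : S, mul (mul x y) x = n x • y := by
    intro x y
    have key : ∀ z, polar n (mul (mul x y) x - n x • y) z = 0 := by
      intro z
      rw [polar_sub_left, polar_smul_left, hassoc, hmulB, smul_eq_mul, sub_self]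
    exact sub_eq_zero.mp (hnondeg _ key)
  have h5 : ∀ x y : S, mul x (mul y x) = n x • y := by
    intro x y
    have key : ∀ z, polar n (mul x (mul y x) - n x • y) z = 0 := by
      intro z
      rw [polar_sub_left, polar_smul_left, polar_comm _ (mul x (mul y x)) z, ← hassoc,
        hmulB2, smul_eq_mul, polar_comm n y z, sub_self]
    exact sub_eq_zero.mp (hnondeg _ key)
  -- the idempotent has norm one
  have hne : n e = 1 := by
    have h := h4 e e
    rw [hee, hee] at h
    have h2 : (n e - 1) • e = 0 := by rw [sub_smul, one_smul, ← h, sub_self]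
    rcases smul_eq_zero.mp h2 with h3 | h3
    · exact sub_eq_zero.mp h3
    · exact absurd h3 he
  -- linearized fundamental identities
  have h6 : ∀ x y z : S, mul (mul x y) z + mul (mul z y) x = polar n x z • y := by
    intro x y z
    have key : ∀ w, polar n (mul (mul x y) z + mul (mul z y) x - polar n x z • y) w = 0 := by
      intro w
      rw [polar_sub_left, polar_add_left, polar_smul_left, hassoc (mul x y) z w,
        hassoc (mul z y) x w, hfull, smul_eq_mul, sub_self]
    exact sub_eq_zero.mp (hnondeg _ key)
  have h7 : ∀ x y z : S, mul x (mul y z) + mul z (mul y x) = polar n x z • y := by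
    intro x y z
    have key : ∀ w, polar n (mul x (mul y z) + mul z (mul y x) - polar n x z • y) w = 0 := by
      intro w
      rw [polar_sub_left, polar_add_left, polar_smul_left,
        polar_comm _ (mul x (mul y z)) w, polar_comm _ (mul z (mul y x)) w,
        ← hassoc w x (mul y z), ← hassoc w z (mul y x), hfull2 w x y z,
        smul_eq_mul, polar_comm n w y, sub_self]
    exact sub_eq_zero.mp (hnondeg _ key)
  -- the key identity allowing to prove multiplicativity of τ
  have key : ∀ x y : S, mul (mul x e) (mul y e)
      = polar n e (mul x y) • e - mul (mul x y) e - polar n e y • mul e x + polar n e x • y := by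
    intro x y
    have main : ∀ z, polar n (mul (mul x e) (mul y e)
        - (polar n e (mul x y) • e - mul (mul x y) e - polar n e y • mul e x + polar n e x • y)) z
        = 0 := by
      intro z
      have e1 : mul (mul y e) z = polar n y z • e - mul (mul z e) y :=
        eq_sub_of_add_eq (h6 y e z)
      have e2 : mul (mul z e) e = polar n z e • e - mul e z := by
        have h := h6 z e e; rw [hee] at h; exact eq_sub_of_add_eq h
      have e3 : mul y (mul e z) = polar n y z • e - mul z (mul e y) :=
        eq_sub_of_add_eq (h7 y e z)
      have e4 : mul e (mul (mul z e) y)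
          = polar n e y • mul z e - (polar n z e • mul y e - mul y (mul e z)) := by
        have h := h7 e (mul z e) y
        rw [e2, _root_.map_sub, _root_.map_smul] at h
        exact eq_sub_of_add_eq h
      have e5 : mul (mul e y) x = polar n e x • y - mul (mul x y) e :=
        eq_sub_of_add_eq (h6 e y x)
      have b1 : polar n (mul x e) e = polar n x e := by
        rw [hassoc, hee]
      have c1 : polar n x (mul z e) = polar n z (mul e x) := by
        rw [polar_comm n x (mul z e), hassoc]
      have c2 : polar n x (mul z (mul e y))
          = polar n e x * polar n z y - polar n z (mul (mul x y) e) := by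
        rw [polar_comm n x (mul z (mul e y)), hassoc, e5, polar_sub_right, polar_smul_right,
          smul_eq_mul]
      have c3 : polar n e (mul x y) = polar n x (mul y e) := by
        rw [polar_comm n e (mul x y), hassoc]
      have L : polar n (mul (mul x e) (mul y e)) z
          = - (polar n e y * polar n z (mul e x)) + polar n e z * polar n x (mul y e)
            + polar n e x * polar n z y - polar n z (mul (mul x y) e) := by
        rw [hassoc (mul x e) (mul y e) z, e1, polar_sub_right, polar_smul_right, b1,
          hassoc x e (mul (mul z e) y), e4, e3]
        simp only [polar_sub_right, polar_smul_right, smul_eq_mul]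
        rw [c1, c2]
        have d2 : polar n z e = polar n e z := polar_comm n z e
        rw [d2]
        ring_nf
      rw [polar_sub_left, L]
      simp only [polar_add_left, polar_sub_left, polar_smul_left, smul_eq_mul]
      rw [c3, polar_comm n (mul (mul x y) e) z, polar_comm n (mul e x) z, polar_comm n y z]
      ring
    exact sub_eq_zero.mp (hnondeg _ main)
  -- the explicit formula for τ
  have hτ' : ∀ x, τ x = polar n e x • e - mul x e := by
    intro x
    rw [hτ]
    have h := h7 e e x
    rw [hee] at h
    exact eq_sub_of_add_eq h
  have hBee : polar n e e = 2 := by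
    rw [polar_self, hne]; norm_num
  have hBeme : ∀ x, polar n e (mul e x) = polar n e x := by
    intro x; rw [← hassoc, hee]
  have hBexe : ∀ x, polar n e (mul x e) = polar n e x := by
    intro x; rw [polar_comm n e (mul x e), hassoc, hee, polar_comm]
  have hmee : ∀ x, mul e (mul x e) = x := by
    intro x; rw [h5 e x, hne, one_smul]
  have hmexe : ∀ x, mul (mul e x) e = x := by
    intro x; rw [h4 e x, hne, one_smul]
  have hmxee : ∀ x, mul (mul x e) e = polar n e x • e - mul e x := by
    intro x
    have h := h6 x e e
    rw [hee, polar_comm n x e] at h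
    exact eq_sub_of_add_eq h
  -- τ is linear
  have hlin : IsLinearMap F τ := by
    constructor
    · intro x y
      rw [hτ', hτ', hτ', polar_add_right, map_add, LinearMap.add_apply, add_smul]
      abel
    · intro c x
      rw [hτ', hτ', polar_smul_right, _root_.map_smul, LinearMap.smul_apply, smul_sub,
        smul_smul, smul_eq_mul]
  -- τ³ = id
  have hτ3 : ∀ x : S, τ (τ (τ x)) = x := by
    have hτ2 : ∀ x : S, τ (τ x) = polar n e x • e - mul e x := by
      intro x
      rw [hτ' (τ x), hτ' x, polar_sub_right, polar_smul_right, hBee, hBexe, smul_eq_mul,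
        _root_.map_sub, _root_.map_smul, LinearMap.sub_apply, LinearMap.smul_apply, hee, hmxee]
      module
    intro x
    rw [hτ' (τ (τ x)), hτ2, polar_sub_right, polar_smul_right, hBee, hBeme, smul_eq_mul,
      _root_.map_sub, _root_.map_smul, LinearMap.sub_apply, LinearMap.smul_apply, hee, hmexe]
    module
  -- τ is multiplicative
  have hmulτ : ∀ x y : S, τ (mul x y) = mul (τ x) (τ y) := by
    intro x y
    rw [hτ', hτ', hτ']
    simp only [_root_.map_sub, _root_.map_smul, LinearMap.sub_apply, LinearMap.smul_apply]
    rw [hee, hmee, hmxee, key]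
    module
  refine ⟨hτ', hlin, hmulτ, ?_, hτ3⟩
  exact ⟨fun a b h => by rw [← hτ3 a, ← hτ3 b, h], fun x => ⟨τ (τ x), hτ3 x⟩⟩
end

section
/- Let (S, *, n) be a symmetric composition algebra with idempotent e. Define a new multiplication x·y = (e*x)*(y*e). Then (S, ·, n) is a Hurwitz algebra with unit element e, and the original product is recovered as x*y = τ(x̄)·τ²(ȳ), where x̄ = n(e,x)e − x and τ(x) = e*(e*x). -/
open QuadraticMap

/-- For an idempotent `e` of a symmetric composition algebra `(S,*,n)`,
the product `x·y = (e*x)*(y*e)` makes `(S,·,n)` a Hurwitz algebra with unit `e`, and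
the original product is recovered as `x*y = τ(x̄)·τ²(ȳ)` where `x̄ = n(e,x)e − x`
and `τ(x) = e*(e*x)`. -/
theorem petersson_recovery
    {F S : Type*} [Field F] [AddCommGroup S] [Module F S]
    (mul : S →ₗ[F] S →ₗ[F] S)
    (n : QuadraticForm F S)
    (hcomp : ∀ x y : S, n (mul x y) = n x * n y)
    (hnondeg : ∀ x : S, (∀ y : S, polar n x y = 0) → x = 0)
    (hassoc : ∀ x y z : S, polar n (mul x y) z = polar n x (mul y z))
    (e : S) (he : e ≠ 0) (hee : mul e e = e)
    (cdot : S → S → S) (hcdot : ∀ x y, cdot x y = mul (mul e x) (mul y e))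
    (bar : S → S) (hbar : ∀ x, bar x = polar n e x • e - x)
    (τ : S → S) (hτ : ∀ x, τ x = mul e (mul e x)) :
    (∀ x : S, cdot e x = x ∧ cdot x e = x) ∧
    (∀ x y : S, n (cdot x y) = n x * n y) ∧
    (∀ x y : S, mul x y = cdot (τ (bar x)) (τ (τ (bar y)))) := by
  -- linearized composition laws
  have leftlin : ∀ x y z : S, polar n (mul x y) (mul x z) = n x * polar n y z := by
    intro x y z
    simp only [polar]
    rw [← map_add, hcomp, hcomp, hcomp]
    ring
  have rightlin : ∀ x y z : S, polar n (mul x z) (mul y z) = polar n x y * n z := by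
    intro x y z
    simp only [polar]
    rw [← LinearMap.add_apply, ← map_add, hcomp, hcomp, hcomp]
    ring
  -- (x*y)*x = n(x) y
  have key1 : ∀ x y : S, mul (mul x y) x = n x • y := by
    intro x y
    have hz : ∀ z : S, polar n (mul (mul x y) x - n x • y) z = 0 := by
      intro z
      rw [polar_sub_left, polar_smul_left, hassoc, leftlin, smul_eq_mul]
      ring
    exact sub_eq_zero.mp (hnondeg _ hz)
  -- x*(y*x) = n(x) y
  have key2 : ∀ x y : S, mul x (mul y x) = n x • y := by
    intro x y
    have hz : ∀ z : S, polar n (mul x (mul y x) - n x • y) z = 0 := by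
      intro z
      rw [polar_sub_left, polar_smul_left, polar_comm, ← hassoc, rightlin,
        polar_comm n y z, smul_eq_mul]
      ring
    exact sub_eq_zero.mp (hnondeg _ hz)
  -- n e = 1
  have ne1 : n e = 1 := by
    have h := key1 e e
    rw [hee, hee] at h
    have h2 : (n e - 1) • e = 0 := by
      rw [sub_smul, one_smul, ← h]
      exact sub_self e
    have h3 := (smul_eq_zero.mp h2).resolve_right he
    exact sub_eq_zero.mp h3
  have LR : ∀ x : S, mul e (mul x e) = x := by
    intro x; rw [key2 e x, ne1, one_smul]
  have RL : ∀ x : S, mul (mul e x) e = x := by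
    intro x; rw [key1 e x, ne1, one_smul]
  -- e*(e*z) = ⟨e,z⟩ e - z*e
  have hL2 : ∀ z : S, mul e (mul e z) = polar n e z • e - mul z e := by
    intro z
    have h := key2 (z + e) e
    have hexp : mul (z + e) (mul e (z + e)) =
        mul z (mul e z) + mul z (mul e e) + (mul e (mul e z) + mul e (mul e e)) := by
      simp only [map_add, LinearMap.add_apply]; abel
    rw [hexp, key2 z e, hee, hee] at h
    have hn : n (z + e) = n z + n e + polar n z e := by
      simp only [polar]; ring
    rw [hn, ne1] at h
    have hc : polar n e z = polar n z e := polar_comm n e z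
    rw [hc]
    calc mul e (mul e z)
        = (n z • e + mul z e + (mul e (mul e z) + e)) - n z • e - mul z e - e := by abel
      _ = (n z + 1 + polar n z e) • e - n z • e - mul z e - e := by rw [h]
      _ = polar n z e • e - mul z e := by rw [add_smul, add_smul, one_smul]; abel
  -- e*(e*(e*z)) = bar z
  have hL3 : ∀ z : S, mul e (mul e (mul e z)) = bar z := by
    intro z
    rw [hL2 z, _root_.map_sub, _root_.map_smul, hee, LR, hbar]
  -- bar is an involution
  have hbarbar : ∀ z : S, bar (bar z) = z := by
    intro z
    have hq : polar n e (bar z) = polar n e z := by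
      rw [hbar, polar_sub_right, polar_smul_right, polar_self, ne1, smul_eq_mul]
      simp [two_smul]
      ring
    rw [hbar (bar z), hq, hbar z]
    exact sub_sub_cancel _ _
  refine ⟨?_, ?_, ?_⟩
  · intro x
    constructor
    · rw [hcdot, hee, LR]
    · rw [hcdot, hee, RL]
  · intro x y
    rw [hcdot, hcomp, hcomp, hcomp, ne1]
    ring
  · intro x y
    have hA : mul e (τ (bar x)) = x := by
      rw [hτ, hL3, hbarbar]
    have hB : mul (τ (τ (bar y))) e = y := by
      rw [hτ, hτ, hL3 (bar y), hbarbar, RL]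
    rw [hcdot, hA, hB]
end

section
/- Let (S, *, n) be a symmetric composition algebra with idempotent e, and let τ(x) = e*(e*x). Then the fixed subalgebra Fix(τ) = {x ∈ S : τ(x) = x} equals the centralizer Centr(e) = {x ∈ S : e*x = x*e}. -/
open QuadraticMap

/-- For an idempotent `e` of a symmetric composition algebra `(S,*,n)`
and `τ(x) = e*(e*x)`, the fixed subalgebra `Fix(τ)` equals the centralizer of `e`. -/
theorem fix_eq_centralizer
    {F S : Type*} [Field F] [AddCommGroup S] [Module F S]
    (mul : S →ₗ[F] S →ₗ[F] S)
    (n : QuadraticForm F S)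
    (hcomp : ∀ x y : S, n (mul x y) = n x * n y)
    (hnondeg : ∀ x : S, (∀ y : S, polar n x y = 0) → x = 0)
    (hassoc : ∀ x y z : S, polar n (mul x y) z = polar n x (mul y z))
    (e : S) (he : e ≠ 0) (hee : mul e e = e) :
    {x : S | mul e (mul e x) = x} = {x : S | mul e x = mul x e} := by
  -- linearization of the composition law in the second variable
  have lin1 : ∀ x u v : S, polar n (mul x u) (mul x v) = n x * polar n u v := by
    intro x u v
    simp only [QuadraticMap.polar, ← map_add, hcomp]
    ring
  -- linearization in the first variable
  have lin2 : ∀ x u v : S, polar n (mul u x) (mul v x) = n x * polar n u v := by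
    intro x u v
    have : mul (u + v) x = mul u x + mul v x := by
      rw [map_add]; rfl
    simp only [QuadraticMap.polar, ← this, hcomp]
    ring
  -- (x*y)*x = n(x) • y
  have hright : ∀ x y : S, mul (mul x y) x = n x • y := by
    intro x y
    have key : ∀ z : S, polar n (mul (mul x y) x - n x • y) z = 0 := by
      intro z
      rw [polar_sub_left, polar_smul_left, hassoc, lin1, smul_eq_mul, sub_self]
    have := hnondeg _ key
    rwa [sub_eq_zero] at this
  -- x*(y*x) = n(x) • y
  have hleft : ∀ x y : S, mul x (mul y x) = n x • y := by
    intro x y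
    have key : ∀ z : S, polar n (mul x (mul y x) - n x • y) z = 0 := by
      intro z
      rw [polar_sub_left, polar_smul_left, polar_comm (⇑n) (mul x (mul y x)) z,
        ← hassoc, lin2, smul_eq_mul, polar_comm (⇑n) y z, sub_self]
    have := hnondeg _ key
    rwa [sub_eq_zero] at this
  -- n e = 1
  have hne : n e = 1 := by
    have h1 : mul (mul e e) e = n e • e := hright e e
    rw [hee, hee] at h1
    have h2 : (n e - 1) • e = 0 := by
      rw [sub_smul, one_smul, ← h1, sub_self]
    rcases smul_eq_zero.mp h2 with h | h
    · exact sub_eq_zero.mp h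
    · exact absurd h he
  ext x
  simp only [Set.mem_setOf_eq]
  constructor
  · intro h
    have : mul (mul e (mul e x)) e = n e • (mul e x) := hright e (mul e x)
    rw [h, hne, one_smul] at this
    exact this.symm
  · intro h
    have : mul e (mul x e) = n e • x := hleft e x
    rw [← h, hne, one_smul] at this
    exact this
end

section
/- Let (C, ·, n) be a Cayley (octonion) algebra over a field F and let w ∈ C with w³ = 1. Then the map φ : x ↦ w·x·w² is an algebra automorphism of C; it is the identity if w ∈ F·1, and has order exactly 3 otherwise. -/
open QuadraticMap



private theorem linA {F C : Type*} [Field F] [AddCommGroup C] [Module F C]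
    (mul : C →ₗ[F] C →ₗ[F] C)
    (hla : ∀ x y : C, mul x (mul x y) = mul (mul x x) y)
    (p q r : C) :
    mul p (mul q r) + mul q (mul p r) = mul (mul p q) r + mul (mul q p) r := by
  have key : (mul p (mul q r) + mul q (mul p r)) - (mul (mul p q) r + mul (mul q p) r)
      = (mul (p + q) (mul (p + q) r) - mul (mul (p + q) (p + q)) r)
        - (mul p (mul p r) - mul (mul p p) r) - (mul q (mul q r) - mul (mul q q) r) := by
    simp only [map_add, LinearMap.add_apply]
    abel
  rw [hla (p + q) r, hla p r, hla q r] at key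
  simp only [sub_self, sub_zero, zero_sub, neg_zero] at key
  exact sub_eq_zero.mp key

private theorem linB {F C : Type*} [Field F] [AddCommGroup C] [Module F C]
    (mul : C →ₗ[F] C →ₗ[F] C)
    (hra : ∀ x y : C, mul (mul x y) y = mul x (mul y y))
    (p q r : C) :
    mul (mul p q) r + mul (mul p r) q = mul p (mul q r) + mul p (mul r q) := by
  have key : (mul (mul p q) r + mul (mul p r) q) - (mul p (mul q r) + mul p (mul r q))
      = (mul (mul p (q + r)) (q + r) - mul p (mul (q + r) (q + r)))
        - (mul (mul p q) q - mul p (mul q q)) - (mul (mul p r) r - mul p (mul r r)) := by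
    simp only [map_add, LinearMap.add_apply]
    abel
  rw [hra p (q + r), hra p q, hra p r] at key
  simp only [sub_self, sub_zero, zero_sub, neg_zero] at key
  exact sub_eq_zero.mp key

private theorem flexc {F C : Type*} [Field F] [AddCommGroup C] [Module F C]
    (mul : C →ₗ[F] C →ₗ[F] C)
    (hla : ∀ x y : C, mul x (mul x y) = mul (mul x x) y)
    (hra : ∀ x y : C, mul (mul x y) y = mul x (mul y y))
    (x y : C) :
    mul (mul x y) x = mul x (mul y x) := by
  have h := linA mul hla x y x
  rw [hra y x] at h
  exact (add_right_cancel h).symm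

private theorem P1c {F C : Type*} [Field F] [AddCommGroup C] [Module F C]
    (mul : C →ₗ[F] C →ₗ[F] C)
    (hla : ∀ x y : C, mul x (mul x y) = mul (mul x x) y)
    (hra : ∀ x y : C, mul (mul x y) y = mul x (mul y y))
    (a u : C) :
    mul (mul (mul a a) a) u = mul (mul a a) (mul a u) := by
  have lA := linA mul hla
  have lB := linB mul hra
  have z0 : (mul a (mul (mul a a) u + mul (mul a u) a)) - (mul a (mul a (mul a u) + mul a (mul u a))) = 0 := by rw [lB a a u]; exact sub_self _
  have z1 : (mul (mul (mul a a) u + mul (mul a u) a) a) - (mul (mul a (mul a u) + mul a (mul u a)) a) = 0 := by rw [lB a a u]; exact sub_self _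
  have z2 : (mul a (mul a (mul u a) + mul u (mul a a))) - (mul a (mul (mul a u) a + mul (mul u a) a)) = 0 := by rw [lA a u a]; exact sub_self _
  have z3 : (mul (mul u (mul a a) + mul a (mul u a)) a) - (mul (mul (mul u a) a + mul (mul a u) a) a) = 0 := by rw [lA u a a]; exact sub_self _
  have z4 : ((mul (mul a a) (mul a u) + mul (mul a (mul a u)) a)) - ((mul a (mul a (mul a u)) + mul a (mul (mul a u) a))) = 0 := by rw [lB a a (mul a u)]; exact sub_self _
  have z5 : ((mul a (mul u (mul a a)) + mul u (mul a (mul a a)))) - ((mul (mul a u) (mul a a) + mul (mul u a) (mul a a))) = 0 := by rw [lA a u (mul a a)]; exact sub_self _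
  have z6 : ((mul (mul a u) (mul a a) + mul (mul a (mul a a)) u)) - ((mul a (mul u (mul a a)) + mul a (mul (mul a a) u))) = 0 := by rw [lB a u (mul a a)]; exact sub_self _
  have z7 : ((mul (mul u a) (mul a a) + mul (mul u (mul a a)) a)) - ((mul u (mul a (mul a a)) + mul u (mul (mul a a) a))) = 0 := by rw [lB u a (mul a a)]; exact sub_self _
  have z8 : ((mul a (mul (mul a a) u) + mul (mul a a) (mul a u))) - ((mul (mul a (mul a a)) u + mul (mul (mul a a) a) u)) = 0 := by rw [lA a (mul a a) u]; exact sub_self _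
  have z9 : ((mul a (mul (mul a u) a) + mul (mul a u) (mul a a))) - ((mul (mul a (mul a u)) a + mul (mul (mul a u) a) a)) = 0 := by rw [lA a (mul a u) a]; exact sub_self _
  have z10 : ((mul a (mul (mul u a) a) + mul (mul u a) (mul a a))) - ((mul (mul a (mul u a)) a + mul (mul (mul u a) a) a)) = 0 := by rw [lA a (mul u a) a]; exact sub_self _
  have z11 : (mul u (mul a (mul a a))) - (mul u (mul (mul a a) a)) = 0 := by rw [hla a a]; exact sub_self _
  have z12 : (mul (mul a (mul a a)) u) - (mul (mul (mul a a) a) u) = 0 := by rw [hla a a]; exact sub_self _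
  have z13 : (mul (mul a (mul a u)) a) - (mul (mul (mul a a) u) a) = 0 := by rw [hla a u]; exact sub_self _
  have key : (mul (mul (mul a a) a) u) - (mul (mul a a) (mul a u)) = ((-1 : ℤ) • ((mul a (mul (mul a a) u + mul (mul a u) a)) - (mul a (mul a (mul a u) + mul a (mul u a))))) + ((2 : ℤ) • ((mul (mul (mul a a) u + mul (mul a u) a) a) - (mul (mul a (mul a u) + mul a (mul u a)) a))) + ((-1 : ℤ) • ((mul a (mul a (mul u a) + mul u (mul a a))) - (mul a (mul (mul a u) a + mul (mul u a) a)))) + ((1 : ℤ) • ((mul (mul u (mul a a) + mul a (mul u a)) a) - (mul (mul (mul u a) a + mul (mul a u) a) a))) + ((1 : ℤ) • (((mul (mul a a) (mul a u) + mul (mul a (mul a u)) a)) - ((mul a (mul a (mul a u)) + mul a (mul (mul a u) a))))) + ((-2 : ℤ) • (((mul a (mul u (mul a a)) + mul u (mul a (mul a a)))) - ((mul (mul a u) (mul a a) + mul (mul u a) (mul a a))))) + ((-3 : ℤ) • (((mul (mul a u) (mul a a) + mul (mul a (mul a a)) u)) - ((mul a (mul u (mul a a)) + mul a (mul (mul a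 a) u))))) + ((-1 : ℤ) • (((mul (mul u a) (mul a a) + mul (mul u (mul a a)) a)) - ((mul u (mul a (mul a a)) + mul u (mul (mul a a) a))))) + ((-2 : ℤ) • (((mul a (mul (mul a a) u) + mul (mul a a) (mul a u))) - ((mul (mul a (mul a a)) u + mul (mul (mul a a) a) u)))) + ((1 : ℤ) • (((mul a (mul (mul a u) a) + mul (mul a u) (mul a a))) - ((mul (mul a (mul a u)) a + mul (mul (mul a u) a) a)))) + ((-1 : ℤ) • (((mul a (mul (mul u a) a) + mul (mul u a) (mul a a))) - ((mul (mul a (mul u a)) a + mul (mul (mul u a) a) a)))) + ((1 : ℤ) • ((mul u (mul a (mul a a))) - (mul u (mul (mul a a) a)))) + ((1 : ℤ) • ((mul (mul a (mul a a)) u) - (mul (mul (mul a a) a) u))) + ((2 : ℤ) • ((mul (mul a (mul a u)) a) - (mul (mul (mul a a) u) a))) := by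
    simp only [map_add, LinearMap.add_apply]
    abel
  rw [z0, z1, z2, z3, z4, z5, z6, z7, z8, z9, z10, z11, z12, z13] at key
  simp only [smul_zero, add_zero, zero_add] at key
  exact sub_eq_zero.mp key

private theorem MMc {F C : Type*} [Field F] [AddCommGroup C] [Module F C]
    (mul : C →ₗ[F] C →ₗ[F] C)
    (hla : ∀ x y : C, mul x (mul x y) = mul (mul x x) y)
    (hra : ∀ x y : C, mul (mul x y) y = mul x (mul y y))
    (a u v : C) :
    mul (mul a u) (mul v a) = mul a (mul (mul u v) a) := by
  have lA := linA mul hla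
  have lB := linB mul hra
  have z0 : (mul v (mul (mul a a) u + mul (mul a u) a)) - (mul v (mul a (mul a u) + mul a (mul u a))) = 0 := by rw [lB a a u]; exact sub_self _
  have z1 : (mul a (mul a (mul u v) + mul u (mul a v))) - (mul a (mul (mul a u) v + mul (mul u a) v)) = 0 := by rw [lA a u v]; exact sub_self _
  have z2 : (mul a (mul (mul a u) v + mul (mul a v) u)) - (mul a (mul a (mul u v) + mul a (mul v u))) = 0 := by rw [lB a u v]; exact sub_self _
  have z3 : (mul u (mul (mul a v) a + mul (mul a a) v)) - (mul u (mul a (mul v a) + mul a (mul a v))) = 0 := by rw [lB a v a]; exact sub_self _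
  have z4 : (mul a (mul a (mul v u) + mul v (mul a u))) - (mul a (mul (mul a v) u + mul (mul v a) u)) = 0 := by rw [lA a v u]; exact sub_self _
  have z5 : (mul v (mul u (mul a a) + mul a (mul u a))) - (mul v (mul (mul u a) a + mul (mul a u) a)) = 0 := by rw [lA u a a]; exact sub_self _
  have z6 : (mul a (mul (mul u a) v + mul (mul u v) a)) - (mul a (mul u (mul a v) + mul u (mul v a))) = 0 := by rw [lB u a v]; exact sub_self _
  have z7 : (mul (mul (mul u v) a + mul (mul u a) v) a) - (mul (mul u (mul v a) + mul u (mul a v)) a) = 0 := by rw [lB u v a]; exact sub_self _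
  have z8 : (mul (mul v (mul a a) + mul a (mul v a)) u) - (mul (mul (mul v a) a + mul (mul a v) a) u) = 0 := by rw [lA v a a]; exact sub_self _
  have z9 : (mul (mul v (mul u a) + mul u (mul v a)) a) - (mul (mul (mul v u) a + mul (mul u v) a) a) = 0 := by rw [lA v u a]; exact sub_self _
  have z10 : ((mul (mul a a) (mul v u) + mul (mul a (mul v u)) a)) - ((mul a (mul a (mul v u)) + mul a (mul (mul v u) a))) = 0 := by rw [lB a a (mul v u)]; exact sub_self _
  have z11 : ((mul a (mul u (mul a v)) + mul u (mul a (mul a v)))) - ((mul (mul a u) (mul a v) + mul (mul u a) (mul a v))) = 0 := by rw [lA a u (mul a v)]; exact sub_self _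
  have z12 : ((mul (mul a u) (mul a v) + mul (mul a (mul a v)) u)) - ((mul a (mul u (mul a v)) + mul a (mul (mul a v) u))) = 0 := by rw [lB a u (mul a v)]; exact sub_self _
  have z13 : ((mul a (mul u (mul v a)) + mul u (mul a (mul v a)))) - ((mul (mul a u) (mul v a) + mul (mul u a) (mul v a))) = 0 := by rw [lA a u (mul v a)]; exact sub_self _
  have z14 : ((mul (mul a u) (mul v a) + mul (mul a (mul v a)) u)) - ((mul a (mul u (mul v a)) + mul a (mul (mul v a) u))) = 0 := by rw [lB a u (mul v a)]; exact sub_self _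
  have z15 : ((mul a (mul v (mul a u)) + mul v (mul a (mul a u)))) - ((mul (mul a v) (mul a u) + mul (mul v a) (mul a u))) = 0 := by rw [lA a v (mul a u)]; exact sub_self _
  have z16 : ((mul (mul u a) (mul a v) + mul (mul u (mul a v)) a)) - ((mul u (mul a (mul a v)) + mul u (mul (mul a v) a))) = 0 := by rw [lB u a (mul a v)]; exact sub_self _
  have z17 : ((mul (mul v u) (mul a a) + mul (mul v (mul a a)) u)) - ((mul v (mul u (mul a a)) + mul v (mul (mul a a) u))) = 0 := by rw [lB v u (mul a a)]; exact sub_self _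
  have z18 : ((mul a (mul (mul a v) u) + mul (mul a v) (mul a u))) - ((mul (mul a (mul a v)) u + mul (mul (mul a v) a) u)) = 0 := by rw [lA a (mul a v) u]; exact sub_self _
  have z19 : ((mul a (mul (mul v a) u) + mul (mul v a) (mul a u))) - ((mul (mul a (mul v a)) u + mul (mul (mul v a) a) u)) = 0 := by rw [lA a (mul v a) u]; exact sub_self _
  have z20 : ((mul a (mul (mul v u) a) + mul (mul v u) (mul a a))) - ((mul (mul a (mul v u)) a + mul (mul (mul v u) a) a)) = 0 := by rw [lA a (mul v u) a]; exact sub_self _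
  have z21 : ((mul v (mul (mul u a) a) + mul (mul u a) (mul v a))) - ((mul (mul v (mul u a)) a + mul (mul (mul u a) v) a)) = 0 := by rw [lA v (mul u a) a]; exact sub_self _
  have z22 : (mul u (mul a (mul a v))) - (mul u (mul (mul a a) v)) = 0 := by rw [hla a v]; exact sub_self _
  have z23 : (mul a (mul a (mul v u))) - (mul (mul a a) (mul v u)) = 0 := by rw [hla a (mul v u)]; exact sub_self _
  have key : (mul (mul a u) (mul v a)) - (mul a (mul (mul u v) a)) = ((1 : ℤ) • ((mul v (mul (mul a a) u + mul (mul a u) a)) - (mul v (mul a (mul a u) + mul a (mul u a))))) + ((-1 : ℤ) • ((mul a (mul a (mul u v) + mul u (mul a v))) - (mul a (mul (mul a u) v + mul (mul u a) v)))) + ((-1 : ℤ) • ((mul a (mul (mul a u) v + mul (mul a v) u)) - (mul a (mul a (mul u v) + mul a (mul v u))))) + ((1 : ℤ) • ((mul u (mul (mul a v) a + mul (mul a a) v)) - (mul u (mul a (mul v a) + mul a (mul a v))))) + ((-1 : ℤ) • ((mul a (mul a (mul v u) + mul v (mul a u))) - (mul a (mul (mul a v) u + mul (mul v a) u)))) +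 ((1 : ℤ) • ((mul v (mul u (mul a a) + mul a (mul u a))) - (mul v (mul (mul u a) a + mul (mul a u) a)))) + ((-1 : ℤ) • ((mul a (mul (mul u a) v + mul (mul u v) a)) - (mul a (mul u (mul a v) + mul u (mul v a))))) + ((1 : ℤ) • ((mul (mul (mul u v) a + mul (mul u a) v) a) - (mul (mul u (mul v a) + mul u (mul a v)) a))) + ((-1 : ℤ) • ((mul (mul v (mul a a) + mul a (mul v a)) u) - (mul (mul (mul v a) a + mul (mul a v) a) u))) + ((1 : ℤ) • ((mul (mul v (mul u a) + mul u (mul v a)) a) - (mul (mul (mul v u) a + mul (mul u v) a) a))) + ((-1 : ℤ) • (((mul (mul a a) (mul v u) + mul (mul a (mul v u)) a)) - ((mul a (mul a (mul v u)) + mul a (mul (mul v u) a))))) + ((1 : ℤ) • (((mul a (mul u (mul a v)) + mul u (mul a (mul a v)))) - ((mul (mul a u) (mul a v) + mul (mul u a) (mul a v))))) + ((1 : ℤ) • (((mul (mul a u) (mul a v) + mul (mul a (mul a v)) u)) - ((mul a (mul u (mul a v)) + mul a (mul (mul a v) u))))) + ((1 : ℤ) • (((mul a (mul u (mul v a)) +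 mul u (mul a (mul v a)))) - ((mul (mul a u) (mul v a) + mul (mul u a) (mul v a))))) + ((2 : ℤ) • (((mul (mul a u) (mul v a) + mul (mul a (mul v a)) u)) - ((mul a (mul u (mul v a)) + mul a (mul (mul v a) u))))) + ((1 : ℤ) • (((mul a (mul v (mul a u)) + mul v (mul a (mul a u)))) - ((mul (mul a v) (mul a u) + mul (mul v a) (mul a u))))) + ((1 : ℤ) • (((mul (mul u a) (mul a v) + mul (mul u (mul a v)) a)) - ((mul u (mul a (mul a v)) + mul u (mul (mul a v) a))))) + ((1 : ℤ) • (((mul (mul v u) (mul a a) + mul (mul v (mul a a)) u)) - ((mul v (mul u (mul a a)) + mul v (mul (mul a a) u))))) + ((1 : ℤ) • (((mul a (mul (mul a v) u) + mul (mul a v) (mul a u))) - ((mul (mul a (mul a v)) u + mul (mul (mul a v) a) u)))) + ((1 : ℤ) • (((mul a (mul (mul v a) u) + mul (mul v a) (mul a u))) - ((mul (mul a (mul v a)) u + mul (mul (mul v a) a) u)))) + ((-1 : ℤ) • (((mul a (mul (mul v u) a) + mul (mul v u) (mul a a))) - ((mul (mul a (mul v u)) a + mul (mul (mul v u) a) a))))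 + ((1 : ℤ) • (((mul v (mul (mul u a) a) + mul (mul u a) (mul v a))) - ((mul (mul v (mul u a)) a + mul (mul (mul u a) v) a)))) + ((1 : ℤ) • ((mul u (mul a (mul a v))) - (mul u (mul (mul a a) v)))) + ((-1 : ℤ) • ((mul a (mul a (mul v u))) - (mul (mul a a) (mul v u)))) := by
    simp only [map_add, LinearMap.add_apply]
    abel
  rw [z0, z1, z2, z3, z4, z5, z6, z7, z8, z9, z10, z11, z12, z13, z14, z15, z16, z17, z18, z19, z20, z21, z22, z23] at key
  simp only [smul_zero, add_zero, zero_add] at key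
  exact sub_eq_zero.mp key

private theorem RMc {F C : Type*} [Field F] [AddCommGroup C] [Module F C]
    (mul : C →ₗ[F] C →ₗ[F] C)
    (hla : ∀ x y : C, mul x (mul x y) = mul (mul x x) y)
    (hra : ∀ x y : C, mul (mul x y) y = mul x (mul y y))
    (a u v : C) :
    mul (mul (mul u a) v) a = mul u (mul a (mul v a)) := by
  have lA := linA mul hla
  have lB := linB mul hra
  have z0 : (mul v (mul (mul a a) u + mul (mul a u) a)) - (mul v (mul a (mul a u) + mul a (mul u a))) = 0 := by rw [lB a a u]; exact sub_self _
  have z1 : (mul (mul (mul a a) u + mul (mul a u) a) v) - (mul (mul a (mul a u) + mul a (mul u a)) v) = 0 := by rw [lB a a u]; exact sub_self _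
  have z2 : (mul (mul a (mul u a) + mul u (mul a a)) v) - (mul (mul (mul a u) a + mul (mul u a) a) v) = 0 := by rw [lA a u a]; exact sub_self _
  have z3 : (mul a (mul a (mul u v) + mul u (mul a v))) - (mul a (mul (mul a u) v + mul (mul u a) v)) = 0 := by rw [lA a u v]; exact sub_self _
  have z4 : (mul a (mul (mul a u) v + mul (mul a v) u)) - (mul a (mul a (mul u v) + mul a (mul v u))) = 0 := by rw [lB a u v]; exact sub_self _
  have z5 : (mul u (mul a (mul v a) + mul v (mul a a))) - (mul u (mul (mul a v) a + mul (mul v a) a)) = 0 := by rw [lA a v a]; exact sub_self _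
  have z6 : (mul u (mul (mul a v) a + mul (mul a a) v)) - (mul u (mul a (mul v a) + mul a (mul a v))) = 0 := by rw [lB a v a]; exact sub_self _
  have z7 : (mul a (mul a (mul v u) + mul v (mul a u))) - (mul a (mul (mul a v) u + mul (mul v a) u)) = 0 := by rw [lA a v u]; exact sub_self _
  have z8 : (mul v (mul u (mul a a) + mul a (mul u a))) - (mul v (mul (mul u a) a + mul (mul a u) a)) = 0 := by rw [lA u a a]; exact sub_self _
  have z9 : (mul (mul (mul u v) a + mul (mul u a) v) a) - (mul (mul u (mul v a) + mul u (mul a v)) a) = 0 := by rw [lB u v a]; exact sub_self _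
  have z10 : (mul (mul v (mul a a) + mul a (mul v a)) u) - (mul (mul (mul v a) a + mul (mul a v) a) u) = 0 := by rw [lA v a a]; exact sub_self _
  have z11 : (mul (mul v (mul u a) + mul u (mul v a)) a) - (mul (mul (mul v u) a + mul (mul u v) a) a) = 0 := by rw [lA v u a]; exact sub_self _
  have z12 : ((mul (mul a a) (mul u v) + mul (mul a (mul u v)) a)) - ((mul a (mul a (mul u v)) + mul a (mul (mul u v) a))) = 0 := by rw [lB a a (mul u v)]; exact sub_self _
  have z13 : ((mul (mul a a) (mul v u) + mul (mul a (mul v u)) a)) - ((mul a (mul a (mul v u)) + mul a (mul (mul v u) a))) = 0 := by rw [lB a a (mul v u)]; exact sub_self _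
  have z14 : ((mul a (mul u (mul a v)) + mul u (mul a (mul a v)))) - ((mul (mul a u) (mul a v) + mul (mul u a) (mul a v))) = 0 := by rw [lA a u (mul a v)]; exact sub_self _
  have z15 : ((mul (mul a u) (mul a v) + mul (mul a (mul a v)) u)) - ((mul a (mul u (mul a v)) + mul a (mul (mul a v) u))) = 0 := by rw [lB a u (mul a v)]; exact sub_self _
  have z16 : ((mul a (mul u (mul v a)) + mul u (mul a (mul v a)))) - ((mul (mul a u) (mul v a) + mul (mul u a) (mul v a))) = 0 := by rw [lA a u (mul v a)]; exact sub_self _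
  have z17 : ((mul (mul a u) (mul v a) + mul (mul a (mul v a)) u)) - ((mul a (mul u (mul v a)) + mul a (mul (mul v a) u))) = 0 := by rw [lB a u (mul v a)]; exact sub_self _
  have z18 : ((mul a (mul v (mul a u)) + mul v (mul a (mul a u)))) - ((mul (mul a v) (mul a u) + mul (mul v a) (mul a u))) = 0 := by rw [lA a v (mul a u)]; exact sub_self _
  have z19 : ((mul (mul u a) (mul a v) + mul (mul u (mul a v)) a)) - ((mul u (mul a (mul a v)) + mul u (mul (mul a v) a))) = 0 := by rw [lB u a (mul a v)]; exact sub_self _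
  have z20 : ((mul (mul u a) (mul v a) + mul (mul u (mul v a)) a)) - ((mul u (mul a (mul v a)) + mul u (mul (mul v a) a))) = 0 := by rw [lB u a (mul v a)]; exact sub_self _
  have z21 : ((mul u (mul v (mul a a)) + mul v (mul u (mul a a)))) - ((mul (mul u v) (mul a a) + mul (mul v u) (mul a a))) = 0 := by rw [lA u v (mul a a)]; exact sub_self _
  have z22 : ((mul (mul u v) (mul a a) + mul (mul u (mul a a)) v)) - ((mul u (mul v (mul a a)) + mul u (mul (mul a a) v))) = 0 := by rw [lB u v (mul a a)]; exact sub_self _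
  have z23 : ((mul (mul v u) (mul a a) + mul (mul v (mul a a)) u)) - ((mul v (mul u (mul a a)) + mul v (mul (mul a a) u))) = 0 := by rw [lB v u (mul a a)]; exact sub_self _
  have z24 : ((mul a (mul (mul a u) v) + mul (mul a u) (mul a v))) - ((mul (mul a (mul a u)) v + mul (mul (mul a u) a) v)) = 0 := by rw [lA a (mul a u) v]; exact sub_self _
  have z25 : ((mul a (mul (mul a v) u) + mul (mul a v) (mul a u))) - ((mul (mul a (mul a v)) u + mul (mul (mul a v) a) u)) = 0 := by rw [lA a (mul a v) u]; exact sub_self _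
  have z26 : ((mul a (mul (mul u a) v) + mul (mul u a) (mul a v))) - ((mul (mul a (mul u a)) v + mul (mul (mul u a) a) v)) = 0 := by rw [lA a (mul u a) v]; exact sub_self _
  have z27 : ((mul a (mul (mul u v) a) + mul (mul u v) (mul a a))) - ((mul (mul a (mul u v)) a + mul (mul (mul u v) a) a)) = 0 := by rw [lA a (mul u v) a]; exact sub_self _
  have z28 : ((mul a (mul (mul v a) u) + mul (mul v a) (mul a u))) - ((mul (mul a (mul v a)) u + mul (mul (mul v a) a) u)) = 0 := by rw [lA a (mul v a) u]; exact sub_self _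
  have z29 : ((mul a (mul (mul v u) a) + mul (mul v u) (mul a a))) - ((mul (mul a (mul v u)) a + mul (mul (mul v u) a) a)) = 0 := by rw [lA a (mul v u) a]; exact sub_self _
  have z30 : ((mul u (mul (mul a a) v) + mul (mul a a) (mul u v))) - ((mul (mul u (mul a a)) v + mul (mul (mul a a) u) v)) = 0 := by rw [lA u (mul a a) v]; exact sub_self _
  have z31 : ((mul v (mul (mul u a) a) + mul (mul u a) (mul v a))) - ((mul (mul v (mul u a)) a + mul (mul (mul u a) v) a)) = 0 := by rw [lA v (mul u a) a]; exact sub_self _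
  have z32 : (mul v (mul a (mul a u))) - (mul v (mul (mul a a) u)) = 0 := by rw [hla a u]; exact sub_self _
  have z33 : (mul (mul a (mul a u)) v) - (mul (mul (mul a a) u) v) = 0 := by rw [hla a u]; exact sub_self _
  have z34 : (mul u (mul a (mul a v))) - (mul u (mul (mul a a) v)) = 0 := by rw [hla a v]; exact sub_self _
  have z35 : (mul a (mul a (mul v u))) - (mul (mul a a) (mul v u)) = 0 := by rw [hla a (mul v u)]; exact sub_self _
  have key : (mul (mul (mul u a) v) a) - (mul u (mul a (mul v a))) = ((3 : ℤ) • ((mul v (mul (mul a a) u + mul (mul a u) a)) - (mul v (mul a (mul a u) + mul a (mul u a))))) + ((2 : ℤ) • ((mul (mul (mul a a) u + mul (mul a u) a) v) - (mul (mul a (mul a u) + mul a (mul u a)) v))) + ((1 : ℤ) • ((mul (mul a (mul u a) + mul u (mul a a)) v) - (mul (mul (mul a u) a + mul (mul u a) a) v))) + ((-1 : ℤ) • ((mul a (mul a (mul u v) + mul u (mul a v))) - (mul a (mul (mul a u) v + mul (mul u a) v)))) + ((-2 : ℤ) • ((mul a (mul (mul a u) v + mul (mul a v) u)) - (mul a (mul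 a (mul u v) + mul a (mul v u))))) + ((-1 : ℤ) • ((mul u (mul a (mul v a) + mul v (mul a a))) - (mul u (mul (mul a v) a + mul (mul v a) a)))) + ((3 : ℤ) • ((mul u (mul (mul a v) a + mul (mul a a) v)) - (mul u (mul a (mul v a) + mul a (mul a v))))) + ((-2 : ℤ) • ((mul a (mul a (mul v u) + mul v (mul a u))) - (mul a (mul (mul a v) u + mul (mul v a) u)))) + ((3 : ℤ) • ((mul v (mul u (mul a a) + mul a (mul u a))) - (mul v (mul (mul u a) a + mul (mul a u) a)))) + ((4 : ℤ) • ((mul (mul (mul u v) a + mul (mul u a) v) a) - (mul (mul u (mul v a) + mul u (mul a v)) a))) + ((-2 : ℤ) • ((mul (mul v (mul a a) + mul a (mul v a)) u) - (mul (mul (mul v a) a + mul (mul a v) a) u))) + ((3 : ℤ) • ((mul (mul v (mul u a) + mul u (mul v a)) a) - (mul (mul (mul v u) a + mul (mul u v) a) a))) + ((1 : ℤ) • (((mul (mul a a) (mul u v) + mul (mul a (mul u v)) a)) - ((mul a (mul a (mul u v)) + mul a (mul (mul u v) a))))) + ((-3 : ℤ) • (((mul (mul a a) (mul v u) + mul (mul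 a (mul v u)) a)) - ((mul a (mul a (mul v u)) + mul a (mul (mul v u) a))))) + ((3 : ℤ) • (((mul a (mul u (mul a v)) + mul u (mul a (mul a v)))) - ((mul (mul a u) (mul a v) + mul (mul u a) (mul a v))))) + ((2 : ℤ) • (((mul (mul a u) (mul a v) + mul (mul a (mul a v)) u)) - ((mul a (mul u (mul a v)) + mul a (mul (mul a v) u))))) + ((4 : ℤ) • (((mul a (mul u (mul v a)) + mul u (mul a (mul v a)))) - ((mul (mul a u) (mul v a) + mul (mul u a) (mul v a))))) + ((4 : ℤ) • (((mul (mul a u) (mul v a) + mul (mul a (mul v a)) u)) - ((mul a (mul u (mul v a)) + mul a (mul (mul v a) u))))) + ((2 : ℤ) • (((mul a (mul v (mul a u)) + mul v (mul a (mul a u)))) - ((mul (mul a v) (mul a u) + mul (mul v a) (mul a u))))) + ((4 : ℤ) • (((mul (mul u a) (mul a v) + mul (mul u (mul a v)) a)) - ((mul u (mul a (mul a v)) + mul u (mul (mul a v) a))))) + ((1 : ℤ) • (((mul (mul u a) (mul v a) + mul (mul u (mul v a)) a)) - ((mul u (mul a (mul v a)) + mul u (mul (mul v a) a))))) + ((-1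 : ℤ) • (((mul u (mul v (mul a a)) + mul v (mul u (mul a a)))) - ((mul (mul u v) (mul a a) + mul (mul v u) (mul a a))))) + ((-2 : ℤ) • (((mul (mul u v) (mul a a) + mul (mul u (mul a a)) v)) - ((mul u (mul v (mul a a)) + mul u (mul (mul a a) v))))) + ((2 : ℤ) • (((mul (mul v u) (mul a a) + mul (mul v (mul a a)) u)) - ((mul v (mul u (mul a a)) + mul v (mul (mul a a) u))))) + ((1 : ℤ) • (((mul a (mul (mul a u) v) + mul (mul a u) (mul a v))) - ((mul (mul a (mul a u)) v + mul (mul (mul a u) a) v)))) + ((2 : ℤ) • (((mul a (mul (mul a v) u) + mul (mul a v) (mul a u))) - ((mul (mul a (mul a v)) u + mul (mul (mul a v) a) u)))) + ((-1 : ℤ) • (((mul a (mul (mul u a) v) + mul (mul u a) (mul a v))) - ((mul (mul a (mul u a)) v + mul (mul (mul u a) a) v)))) + ((1 : ℤ) • (((mul a (mul (mul u v) a) + mul (mul u v) (mul a a))) - ((mul (mul a (mul u v)) a + mul (mul (mul u v) a) a)))) + ((2 : ℤ) • (((mul a (mul (mul v a) u) + mul (mul v a) (mul a u))) - ((mul (mul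 a (mul v a)) u + mul (mul (mul v a) a) u)))) + ((-3 : ℤ) • (((mul a (mul (mul v u) a) + mul (mul v u) (mul a a))) - ((mul (mul a (mul v u)) a + mul (mul (mul v u) a) a)))) + ((-1 : ℤ) • (((mul u (mul (mul a a) v) + mul (mul a a) (mul u v))) - ((mul (mul u (mul a a)) v + mul (mul (mul a a) u) v)))) + ((3 : ℤ) • (((mul v (mul (mul u a) a) + mul (mul u a) (mul v a))) - ((mul (mul v (mul u a)) a + mul (mul (mul u a) v) a)))) + ((1 : ℤ) • ((mul v (mul a (mul a u))) - (mul v (mul (mul a a) u)))) + ((3 : ℤ) • ((mul (mul a (mul a u)) v) - (mul (mul (mul a a) u) v))) + ((4 : ℤ) • ((mul u (mul a (mul a v))) - (mul u (mul (mul a a) v)))) + ((-3 : ℤ) • ((mul a (mul a (mul v u))) - (mul (mul a a) (mul v u)))) := by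
    simp only [map_add, LinearMap.add_apply]
    abel
  rw [z0, z1, z2, z3, z4, z5, z6, z7, z8, z9, z10, z11, z12, z13, z14, z15, z16, z17, z18, z19, z20, z21, z22, z23, z24, z25, z26, z27, z28, z29, z30, z31, z32, z33, z34, z35] at key
  simp only [smul_zero, add_zero, zero_add] at key
  exact sub_eq_zero.mp key

private theorem cayleyOneNe {F C : Type*} [Field F] [AddCommGroup C] [Module F C]
    (mul : C →ₗ[F] C →ₗ[F] C) (one : C)
    (hone : ∀ x : C, mul one x = x ∧ mul x one = x)
    (hdim : Module.finrank F C = 8) : one ≠ 0 := by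
  intro h
  have hall : ∀ x : C, x = 0 := fun x => by
    rw [← (hone x).1, h, map_zero, LinearMap.zero_apply]
  have hs : Subsingleton C := ⟨fun a b => by rw [hall a, hall b]⟩
  have h0 : Module.finrank F C = 0 := Module.finrank_zero_of_subsingleton
  rw [hdim] at h0
  exact absurd h0 (by norm_num)

private theorem commutant {F C : Type*} [Field F] [AddCommGroup C] [Module F C]
    (mul : C →ₗ[F] C →ₗ[F] C) (one : C)
    (hone : ∀ x : C, mul one x = x ∧ mul x one = x)
    (n : QuadraticForm F C)
    (hcomp : ∀ x y : C, n (mul x y) = n x * n y)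
    (hnondeg : ∀ x : C, (∀ y : C, QuadraticMap.polar n x y = 0) → x = 0)
    (hdim : Module.finrank F C = 8)
    (hla : ∀ x y : C, mul x (mul x y) = mul (mul x x) y)
    (t : C) (hcm : ∀ x : C, mul t x = mul x t) :
    t ∈ Submodule.span F ({one} : Set C) := by
  have h1l : ∀ x : C, mul one x = x := fun x => (hone x).1
  have h1r : ∀ x : C, mul x one = x := fun x => (hone x).2
  have hone0 : one ≠ 0 := cayleyOneNe mul one hone hdim
  have hn1 : n one = 1 := by
    have h := hcomp one one
    rw [h1l one] at h
    have h' : n one * (n one - 1) = 0 := by linear_combination -h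
    rcases mul_eq_zero.mp h' with h0 | h0
    · exfalso
      have hall0 : ∀ x : C, n x = 0 := fun x => by
        have hx := hcomp x one
        rw [h1r x, h0, mul_zero] at hx
        exact hx
      have : ∀ x : C, x = 0 := fun x =>
        hnondeg x (fun y => by simp [QuadraticMap.polar, hall0])
      exact hone0 (this one)
    · exact sub_eq_zero.mp h0
  have hsc : ∀ x y z : C, QuadraticMap.polar n (mul x y) (mul x z) = n x * QuadraticMap.polar n y z := by
    intro x y z
    have e1 : n (mul x y + mul x z) = n x * n (y + z) := by
      rw [← map_add, hcomp]
    simp only [QuadraticMap.polar]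
    rw [e1, hcomp, hcomp]
    have e3 : n (y + z) = n y + n z + QuadraticMap.polar n y z := QuadraticMap.map_add n y z
    rw [e3, QuadraticMap.polar]
    ring
  have hlin4 : ∀ x u y z : C, QuadraticMap.polar n (mul x y) (mul u z) + QuadraticMap.polar n (mul u y) (mul x z)
      = QuadraticMap.polar n x u * QuadraticMap.polar n y z := by
    intro x u y z
    have h := hsc (x + u) y z
    simp only [map_add, LinearMap.add_apply, QuadraticMap.polar_add_left, QuadraticMap.polar_add_right] at h
    have hx := hsc x y z
    have hu := hsc u y z
    have hnadd : n (x + u) = n x + n u + QuadraticMap.polar n x u := QuadraticMap.map_add n x u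
    linear_combination h - hx - hu + QuadraticMap.polar n y z * hnadd
  have hCH : ∀ x : C, mul x x = QuadraticMap.polar n x one • x - n x • one := by
    intro x
    have key : ∀ z : C, QuadraticMap.polar n (mul x x - (QuadraticMap.polar n x one • x - n x • one)) z = 0 := by
      intro z
      have h := hlin4 x one x z
      rw [h1l x, h1l z] at h
      have h2 := hsc x one z
      rw [h1r x] at h2
      simp only [QuadraticMap.polar_sub_left, QuadraticMap.polar_smul_left, smul_eq_mul]
      linear_combination h - h2
    exact sub_eq_zero.mp (hnondeg _ key)
  have hcomm5 : ∀ x y : C, mul x y + mul y x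
      = QuadraticMap.polar n x one • y + QuadraticMap.polar n y one • x - QuadraticMap.polar n x y • one := by
    intro x y
    have h := hCH (x + y)
    have e1 : mul (x + y) (x + y) = mul x x + mul x y + mul y x + mul y y := by
      simp only [map_add, LinearMap.add_apply]; abel
    have e2 : QuadraticMap.polar n (x + y) one = QuadraticMap.polar n x one + QuadraticMap.polar n y one :=
      QuadraticMap.polar_add_left _ _ _ _
    have e3 : n (x + y) = n x + n y + QuadraticMap.polar n x y := QuadraticMap.map_add n x y
    rw [e1, hCH x, hCH y, e2, e3] at h
    have h' : mul x y + mul y x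
        = ((QuadraticMap.polar n x one + QuadraticMap.polar n y one) • (x + y)
            - (n x + n y + QuadraticMap.polar n x y) • one)
          - (QuadraticMap.polar n x one • x - n x • one)
          - (QuadraticMap.polar n y one • y - n y • one) := by
      rw [← h]; abel
    rw [h']; module
  obtain ⟨u0, hu0⟩ : ∃ u : C, QuadraticMap.polar n u one ≠ 0 := by
    by_contra hno
    push_neg at hno
    exact hone0 (hnondeg one (fun y => by rw [QuadraticMap.polar_comm]; exact hno y))
  obtain ⟨z, -, hz⟩ : ∃ z ∈ (⊤ : Submodule F C), z ∉ Submodule.span F ({one, t} : Set C) := by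
    classical
    refine SetLike.exists_of_lt (span_lt_top_of_card_lt_finrank ?_)
    have hcard : ({one, t} : Set C).toFinset.card ≤ 2 := by
      rw [Set.toFinset_insert, Set.toFinset_singleton]
      exact (Finset.card_insert_le _ _).trans (by simp)
    rw [hdim]; omega
  have hone_mem : one ∈ Submodule.span F ({one, t} : Set C) := Submodule.subset_span (by simp)
  have ht_mem : t ∈ Submodule.span F ({one, t} : Set C) := Submodule.subset_span (by simp)
  by_cases h2 : (2 : F) = 0
  · -- characteristic 2
    have key : ∀ u : C, QuadraticMap.polar n t one • u + QuadraticMap.polar n u one • t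
        - QuadraticMap.polar n t u • one = 0 := by
      intro u
      rw [← hcomm5 t u, hcm u, ← two_smul F (mul u t), h2, zero_smul]
    have hγ : QuadraticMap.polar n t one = 0 := by
      by_contra hg
      apply hz
      have e : QuadraticMap.polar n t one • z
          = QuadraticMap.polar n t z • one - QuadraticMap.polar n z one • t := by
        have e0 : QuadraticMap.polar n t one • z
            = (QuadraticMap.polar n t one • z + QuadraticMap.polar n z one • t
                - QuadraticMap.polar n t z • one)
              - QuadraticMap.polar n z one • t + QuadraticMap.polar n t z • one := by module
        rw [e0, key z]; module
      have : z = (QuadraticMap.polar n t one)⁻¹ • (QuadraticMap.polar n t z • one - QuadraticMap.polar n z one • t) := by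
        rw [← e, smul_smul, inv_mul_cancel₀ hg, one_smul]
      rw [this]
      exact Submodule.smul_mem _ _ (Submodule.sub_mem _ (Submodule.smul_mem _ _ hone_mem)
        (Submodule.smul_mem _ _ ht_mem))
    have hk := key u0
    rw [hγ, zero_smul, zero_add] at hk
    have e : QuadraticMap.polar n u0 one • t = QuadraticMap.polar n t u0 • one := sub_eq_zero.mp hk
    have : t = ((QuadraticMap.polar n u0 one)⁻¹ * QuadraticMap.polar n t u0) • one := by
      rw [← smul_smul, ← e, smul_smul, inv_mul_cancel₀ hu0, one_smul]
    rw [this]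
    exact Submodule.smul_mem _ _ (Submodule.mem_span_singleton_self one)
  · -- characteristic ≠ 2
    set s : C := (2:F) • t - QuadraticMap.polar n t one • one with hs_def
    have hscomm : ∀ u : C, mul s u = QuadraticMap.polar n u one • t - QuadraticMap.polar n t u • one := by
      intro u
      have e : mul s u = (2:F) • mul t u - QuadraticMap.polar n t one • u := by
        rw [hs_def]
        simp only [_root_.map_sub, _root_.map_smul, LinearMap.sub_apply, LinearMap.smul_apply, h1l u]
      have e2 : (2:F) • mul t u = QuadraticMap.polar n t one • u + QuadraticMap.polar n u one • t
          - QuadraticMap.polar n t u • one := by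
        rw [two_smul]
        nth_rewrite 2 [hcm u]
        exact hcomm5 t u
      rw [e, e2]; module
    have hpoo : QuadraticMap.polar n one one = 2 := by
      have e : (one + one : C) = (2:F) • one := (two_smul F one).symm
      simp only [QuadraticMap.polar, e, QuadraticMap.map_smul, hn1, smul_eq_mul]
      ring
    have hptt : QuadraticMap.polar n t t = 2 * n t := by
      have e : (t + t : C) = (2:F) • t := (two_smul F t).symm
      simp only [QuadraticMap.polar, e, QuadraticMap.map_smul, smul_eq_mul]
      ring
    have hs1 : QuadraticMap.polar n s one = 0 := by
      rw [hs_def, QuadraticMap.polar_sub_left, QuadraticMap.polar_smul_left, QuadraticMap.polar_smul_left,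
        hpoo, smul_eq_mul, smul_eq_mul]
      ring
    have hpts : QuadraticMap.polar n t s = 2 * (2 * n t) - QuadraticMap.polar n t one * QuadraticMap.polar n t one := by
      rw [hs_def, QuadraticMap.polar_sub_right, QuadraticMap.polar_smul_right, QuadraticMap.polar_smul_right,
        hptt, smul_eq_mul, smul_eq_mul]
    have hss : mul s s = (QuadraticMap.polar n t one * QuadraticMap.polar n t one - 2 * (2 * n t)) • one := by
      rw [hscomm s, hs1, hpts, zero_smul, zero_sub]
      module
    have hst : mul s t = QuadraticMap.polar n t one • t - (2 * n t) • one := by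
      rw [hscomm t, hptt]
    have hd : ∀ u : C, (QuadraticMap.polar n t one * QuadraticMap.polar n t one - 2 * (2 * n t)) • u
        = (QuadraticMap.polar n t one * QuadraticMap.polar n u one - 2 * QuadraticMap.polar n t u) • t
          + (QuadraticMap.polar n t one * QuadraticMap.polar n t u
              - 2 * (n t * QuadraticMap.polar n u one)) • one := by
      intro u
      have e1 : mul (mul s s) u
          = (QuadraticMap.polar n t one * QuadraticMap.polar n t one - 2 * (2 * n t)) • u := by
        rw [hss, _root_.map_smul, LinearMap.smul_apply, h1l u]
      have e2 : mul (mul s s) u = mul s (mul s u) := (hla s u).symm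
      rw [← e1, e2, hscomm u, _root_.map_sub, _root_.map_smul, _root_.map_smul, hst, h1r s, hs_def]
      module
    have hd0 : QuadraticMap.polar n t one * QuadraticMap.polar n t one - 2 * (2 * n t) = 0 := by
      by_contra hdne
      apply hz
      have e := hd z
      have : z = (QuadraticMap.polar n t one * QuadraticMap.polar n t one - 2 * (2 * n t))⁻¹ •
          ((QuadraticMap.polar n t one * QuadraticMap.polar n z one - 2 * QuadraticMap.polar n t z) • t
            + (QuadraticMap.polar n t one * QuadraticMap.polar n t z
                - 2 * (n t * QuadraticMap.polar n z one)) • one) := by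
        rw [← e, smul_smul, inv_mul_cancel₀ hdne, one_smul]
      rw [this]
      exact Submodule.smul_mem _ _ (Submodule.add_mem _ (Submodule.smul_mem _ _ ht_mem)
        (Submodule.smul_mem _ _ hone_mem))
    by_contra htn
    have hco : ∀ u : C, QuadraticMap.polar n t one * QuadraticMap.polar n u one
        - 2 * QuadraticMap.polar n t u = 0 := by
      intro u
      by_contra hb
      apply htn
      have h := hd u
      rw [hd0, zero_smul] at h
      have e : (QuadraticMap.polar n t one * QuadraticMap.polar n u one - 2 * QuadraticMap.polar n t u) • t
          = -((QuadraticMap.polar n t one * QuadraticMap.polar n t u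
              - 2 * (n t * QuadraticMap.polar n u one)) • one) := by
        have e0 : (QuadraticMap.polar n t one * QuadraticMap.polar n u one - 2 * QuadraticMap.polar n t u) • t
            = ((QuadraticMap.polar n t one * QuadraticMap.polar n u one - 2 * QuadraticMap.polar n t u) • t
                + (QuadraticMap.polar n t one * QuadraticMap.polar n t u
                    - 2 * (n t * QuadraticMap.polar n u one)) • one)
              - (QuadraticMap.polar n t one * QuadraticMap.polar n t u
                  - 2 * (n t * QuadraticMap.polar n u one)) • one := by module
        rw [e0, ← h]; module
      have : t = ((QuadraticMap.polar n t one * QuadraticMap.polar n u one - 2 * QuadraticMap.polar n t u)⁻¹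
          * -(QuadraticMap.polar n t one * QuadraticMap.polar n t u
              - 2 * (n t * QuadraticMap.polar n u one))) • one := by
        rw [← smul_smul, neg_smul, ← e, smul_smul, inv_mul_cancel₀ hb, one_smul]
      rw [this]
      exact Submodule.smul_mem _ _ (Submodule.mem_span_singleton_self one)
    have hs0 : s = 0 := by
      apply hnondeg
      intro y
      rw [hs_def, QuadraticMap.polar_sub_left, QuadraticMap.polar_smul_left, QuadraticMap.polar_smul_left,
        QuadraticMap.polar_comm n one y, smul_eq_mul, smul_eq_mul]
      have := hco y
      linear_combination -this
    apply htn
    rw [hs_def] at hs0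
    have e : (2:F) • t = QuadraticMap.polar n t one • one := sub_eq_zero.mp hs0
    have : t = ((2:F)⁻¹ * QuadraticMap.polar n t one) • one := by
      rw [← smul_smul, ← e, smul_smul, inv_mul_cancel₀ h2, one_smul]
    rw [this]
    exact Submodule.smul_mem _ _ (Submodule.mem_span_singleton_self one)


/-- In a Cayley algebra, for `w` with `w³ = 1` the map
`φ : x ↦ w·x·w²` is an algebra automorphism; it is the identity if `w ∈ F·1`
and has order exactly 3 otherwise. -/
theorem cube_root_conjugation_automorphism
    {F C : Type*} [Field F] [AddCommGroup C] [Module F C]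
    (mul : C →ₗ[F] C →ₗ[F] C) (one : C)
    (hone : ∀ x : C, mul one x = x ∧ mul x one = x)
    (n : QuadraticForm F C)
    (hcomp : ∀ x y : C, n (mul x y) = n x * n y)
    (hnondeg : ∀ x : C, (∀ y : C, polar n x y = 0) → x = 0)
    (hdim : Module.finrank F C = 8)
    (hla : ∀ x y : C, mul x (mul x y) = mul (mul x x) y)
    (hra : ∀ x y : C, mul (mul x y) y = mul x (mul y y))
    (w : C) (hw : mul w (mul w w) = one)
    (φ : C → C) (hφ : ∀ x, φ x = mul w (mul x (mul w w))) :
    (∀ x y : C, φ (mul x y) = mul (φ x) (φ y)) ∧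
    Function.Bijective φ ∧
    (∀ x : C, φ (φ (φ x)) = x) ∧
    (w ∈ Submodule.span F {one} → ∀ x, φ x = x) ∧
    (w ∉ Submodule.span F {one} → ∃ x, φ x ≠ x) := by
  have h1l : ∀ x : C, mul one x = x := fun x => (hone x).1
  have h1r : ∀ x : C, mul x one = x := fun x => (hone x).2
  have lA := linA mul hla
  have lB := linB mul hra
  have flx := flexc mul hla hra
  have htw : mul (mul w w) w = one := by rw [← hla w w]; exact hw
  have aTW : ∀ x : C, mul (mul (mul w w) w) x = mul (mul w w) (mul w x) := P1c mul hla hra w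
  have aWT : ∀ x : C, mul (mul w (mul w w)) x = mul w (mul (mul w w) x) := by
    intro x
    have h := lA (mul w w) w x
    rw [← aTW x] at h
    exact (add_left_cancel h).symm
  have aTXW : ∀ x : C, mul (mul (mul w w) x) w = mul (mul w w) (mul x w) := by
    intro x
    have h := lB (mul w w) x w
    rw [aTW x] at h
    exact add_right_cancel h
  have aWXT : ∀ x : C, mul (mul w x) (mul w w) = mul w (mul x (mul w w)) := by
    intro x
    have h := lB w x (mul w w)
    rw [aWT x] at h
    exact add_right_cancel h
  have aXTW : ∀ x : C, mul (mul x (mul w w)) w = mul x (mul (mul w w) w) := by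
    intro x
    have h := lA x (mul w w) w
    rw [← aTXW x] at h
    exact (add_right_cancel h).symm
  have htt : mul (mul w w) (mul w w) = w := by
    rw [← hra (mul w w) w, htw]
    exact h1l w
  have hwx : ∀ x : C, mul (mul w (mul x (mul w w))) w = mul w x := by
    intro x
    rw [flx w (mul x (mul w w)), aXTW x, htw, h1r x]
  have mult : ∀ x y : C, φ (mul x y) = mul (φ x) (φ y) := by
    intro x y
    rw [hφ, hφ, hφ]
    calc mul w (mul (mul x y) (mul w w))
        = mul w (mul (mul (mul x y) w) w) := by rw [hra (mul x y) w]
      _ = mul (mul w (mul (mul x y) w)) w := by rw [flx w (mul (mul x y) w)]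
      _ = mul (mul (mul w x) (mul y w)) w := by rw [← MMc mul hla hra w x y]
      _ = mul (mul (mul (mul w (mul x (mul w w))) w) (mul y w)) w := by rw [← hwx x]
      _ = mul (mul w (mul x (mul w w))) (mul w (mul (mul y w) w)) := by
            rw [RMc mul hla hra w (mul w (mul x (mul w w))) (mul y w)]
      _ = mul (mul w (mul x (mul w w))) (mul w (mul y (mul w w))) := by rw [hra y w]
  have hphi2 : ∀ x : C, φ (φ x) = mul (mul w w) (mul x w) := by
    intro x
    rw [hφ, hφ]
    rw [aWXT (mul x (mul w w)), hra x (mul w w), htt, hla w (mul x w)]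
  have h3 : ∀ x : C, φ (φ (φ x)) = x := by
    intro x
    rw [hphi2 (φ x), hφ x, hwx x, ← aTW x, htw]
    exact h1l x
  have hbij : Function.Bijective φ := by
    constructor
    · exact Function.LeftInverse.injective (g := fun z => φ (φ z)) (fun x => h3 x)
    · exact Function.RightInverse.surjective (g := fun z => φ (φ z)) (fun x => h3 x)
  refine ⟨mult, hbij, h3, ?_, ?_⟩
  · -- w ∈ F·1 → φ = id
    intro hm x
    have hone0 : one ≠ 0 := cayleyOneNe mul one hone hdim
    obtain ⟨c, hc⟩ := Submodule.mem_span_singleton.mp hm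
    have hc3 : c * c * c = 1 := by
      have h := hw
      rw [← hc] at h
      simp only [_root_.map_smul, LinearMap.smul_apply, h1l] at h
      rw [smul_smul, smul_smul] at h
      have h' : (c * c * c - 1) • one = 0 := by rw [sub_smul, one_smul, h, sub_self]
      have := (smul_eq_zero.mp h').resolve_right hone0
      exact sub_eq_zero.mp this
    rw [hφ x, ← hc]
    simp only [_root_.map_smul, LinearMap.smul_apply, h1l, h1r]
    rw [smul_smul, smul_smul, hc3, one_smul]
  · -- w ∉ F·1 → φ ≠ id
    intro hns
    by_contra hcon
    push_neg at hcon
    have hcm : ∀ x : C, mul (mul w w) x = mul x (mul w w) := by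
      intro x
      have h1 := hcon x
      rw [hφ] at h1
      have h2 : mul (mul w w) (mul w (mul x (mul w w))) = mul (mul w w) x :=
        congrArg (fun z => mul (mul w w) z) h1
      rw [← aTW (mul x (mul w w)), htw, h1l] at h2
      exact h2.symm
    have hts : mul w w ∈ Submodule.span F ({one} : Set C) :=
      commutant mul one hone n hcomp hnondeg hdim hla (mul w w) hcm
    obtain ⟨c, hc⟩ := Submodule.mem_span_singleton.mp hts
    apply hns
    have hww : w = (c * c) • one := by
      rw [← htt, ← hc]
      simp only [_root_.map_smul, LinearMap.smul_apply, h1l]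
      rw [smul_smul]
    rw [hww]
    exact Submodule.smul_mem _ _ (Submodule.mem_span_singleton_self one)
end

section
/- Let (C, ·, n) be a Cayley algebra over F, let τ be an order 3 automorphism of C, and define the Petersson product x*y = τ(x̄)·τ²(ȳ). Then (C,*,n) is a para-Cayley algebra (i.e., has a para-unit) if and only if there exists w ∈ C \ F·1 with w² + w + 1 = 0 such that τ(x) = w·x·w² for all x; in that case w is the para-unit of (C,*,n), meaning w*x = x*w = n(x,w)w − x for all x. -/
open QuadraticMap

open QuadraticMap

section Aux
variable {F C : Type*} [Field F] [AddCommGroup C] [Module F C]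
variable (mul : C →ₗ[F] C →ₗ[F] C) (one : C) (n : QuadraticForm F C)

theorem aux_one_ne (hone : ∀ x : C, mul one x = x ∧ mul x one = x)
    (hdim : Module.finrank F C = 8) : one ≠ (0 : C) := by
  intro h
  have hsub : Subsingleton C := by
    constructor
    intro a b
    have ha := (hone a).1
    have hb := (hone b).1
    rw [h] at ha hb
    simp only [map_zero, LinearMap.zero_apply] at ha hb
    rw [← ha, ← hb]
  rw [Module.finrank_zero_of_subsingleton (R := F) (M := C)] at hdim
  exact absurd hdim (by norm_num)

theorem aux_none (hone : ∀ x : C, mul one x = x ∧ mul x one = x)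
    (hcomp : ∀ x y : C, n (mul x y) = n x * n y)
    (hnondeg : ∀ x : C, (∀ y : C, polar n x y = 0) → x = 0)
    (hone_ne : one ≠ (0 : C)) : n one = 1 := by
  by_contra h
  have hz : ∀ x : C, n x = 0 := by
    intro x
    have := hcomp one x
    rw [(hone x).1] at this
    have h2 : n x * (1 - n one) = 0 := by linear_combination this
    rcases mul_eq_zero.1 h2 with h3 | h3
    · exact h3
    · exact absurd (by linear_combination -h3 : n one = 1) h
  exact hone_ne (hnondeg one (fun y => by simp [polar, hz]))

theorem aux_polar_one (hone : ∀ x : C, mul one x = x ∧ mul x one = x)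
    (hcomp : ∀ x y : C, n (mul x y) = n x * n y)
    (hnondeg : ∀ x : C, (∀ y : C, polar n x y = 0) → x = 0)
    (hone_ne : one ≠ (0 : C)) : polar n one one = 2 := by
  rw [polar_self, aux_none mul one n hone hcomp hnondeg hone_ne]
  norm_num

theorem aux_lin2 (hcomp : ∀ x y : C, n (mul x y) = n x * n y) (x y z : C) :
    polar n (mul x y) (mul x z) = n x * polar n y z := by
  have : mul x y + mul x z = mul x (y + z) := by rw [map_add]
  rw [polar, this, hcomp, hcomp, hcomp, polar]; ring

theorem aux_lin1 (hcomp : ∀ x y : C, n (mul x y) = n x * n y) (x y z : C) :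
    polar n (mul x y) (mul z y) = polar n x z * n y := by
  have : mul x y + mul z y = mul (x + z) y := by rw [map_add, LinearMap.add_apply]
  rw [polar, this, hcomp, hcomp, hcomp, polar]; ring

theorem aux_lin3 (hcomp : ∀ x y : C, n (mul x y) = n x * n y) (x y w z : C) :
    polar n (mul x y) (mul w z) + polar n (mul w y) (mul x z)
      = polar n x w * polar n y z := by
  have h1 : polar n (mul (x + w) y) (mul (x + w) z) = n (x + w) * polar n y z :=
    aux_lin2 mul n hcomp _ _ _
  have e1 : mul (x + w) y = mul x y + mul w y := by
    rw [map_add]; rfl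
  have e2 : mul (x + w) z = mul x z + mul w z := by
    rw [map_add]; rfl
  have h2 : n (x + w) = n x + n w + polar n x w := by rw [polar]; ring
  rw [e1, e2, h2, polar_add_left, polar_add_right, polar_add_right,
    aux_lin2 mul n hcomp, aux_lin2 mul n hcomp] at h1
  linear_combination h1
end Aux
section Aux2
variable {F C : Type*} [Field F] [AddCommGroup C] [Module F C]
variable (mul : C →ₗ[F] C →ₗ[F] C) (one : C) (n : QuadraticForm F C)
variable (bar : C → C)

theorem aux_barmul (hone : ∀ x : C, mul one x = x ∧ mul x one = x)
    (hbar : ∀ x, bar x = polar n x one • one - x) (x z : C) :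
    mul (bar x) z = polar n x one • z - mul x z := by
  rw [hbar]
  have h : mul (polar n x one • one - x) = polar n x one • mul one - mul x := by
    rw [_root_.map_sub, _root_.map_smul]
  rw [h, LinearMap.sub_apply, LinearMap.smul_apply, (hone z).1]

theorem aux_barmulr (hone : ∀ x : C, mul one x = x ∧ mul x one = x)
    (hbar : ∀ x, bar x = polar n x one • one - x) (x z : C) :
    mul z (bar x) = polar n x one • z - mul z x := by
  rw [hbar, _root_.map_sub, _root_.map_smul, (hone z).2]

theorem aux_L4 (hone : ∀ x : C, mul one x = x ∧ mul x one = x)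
    (hcomp : ∀ x y : C, n (mul x y) = n x * n y)
    (hbar : ∀ x, bar x = polar n x one • one - x) (x y z : C) :
    polar n (mul x y) z = polar n y (mul (bar x) z) := by
  have h := aux_lin3 mul n hcomp x y one z
  rw [(hone z).1, (hone y).1] at h
  rw [aux_barmul mul one n bar hone hbar, polar_sub_right, polar_smul_right]
  rw [polar_comm (⇑n) y (mul x z)] at *
  have : polar n x one • polar n y z = polar n x one * polar n y z := rfl
  rw [this]
  linear_combination h

theorem aux_L5 (hone : ∀ x : C, mul one x = x ∧ mul x one = x)
    (hcomp : ∀ x y : C, n (mul x y) = n x * n y)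
    (hbar : ∀ x, bar x = polar n x one • one - x) (x y z : C) :
    polar n (mul x y) z = polar n x (mul z (bar y)) := by
  have h := aux_lin3 mul n hcomp x y z one
  rw [(hone z).2, (hone x).2] at h
  rw [aux_barmulr mul one n bar hone hbar, polar_sub_right, polar_smul_right]
  rw [polar_comm (⇑n) (mul z y) x] at h
  have : polar n y one • polar n x z = polar n y one * polar n x z := rfl
  rw [this]
  linear_combination h

theorem aux_polar_bar_one (hpo : polar n one one = 2)
    (hbar : ∀ x, bar x = polar n x one • one - x) (x : C) :
    polar n (bar x) one = polar n x one := by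
  rw [hbar, polar_sub_left, polar_smul_left, hpo]
  have : polar n x one • (2:F) = polar n x one * 2 := rfl
  rw [this]; ring

theorem aux_barbar (hpo : polar n one one = 2)
    (hbar : ∀ x, bar x = polar n x one • one - x) (x : C) :
    bar (bar x) = x := by
  rw [hbar (bar x), aux_polar_bar_one one n bar hpo hbar, hbar]
  abel

theorem aux_nsub (a b : C) : n (a - b) = n a + n b - polar n a b := by
  have h : polar (⇑n) a (-b) = n (a + -b) - n a - n (-b) := rfl
  rw [polar_neg_right, QuadraticMap.map_neg] at h
  have h2 : a + -b = a - b := by abel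
  rw [h2] at h
  linear_combination -h

theorem aux_nbar (hno : n one = 1) (hpo : polar n one one = 2)
    (hbar : ∀ x, bar x = polar n x one • one - x) (x : C) :
    n (bar x) = n x := by
  rw [hbar, aux_nsub, QuadraticMap.map_smul, polar_smul_left, hno,
    polar_comm (⇑n) one x]
  simp only [smul_eq_mul]
  ring

theorem aux_polar_barbar (hpo : polar n one one = 2)
    (hbar : ∀ x, bar x = polar n x one • one - x) (x y : C) :
    polar n (bar x) (bar y) = polar n x y := by
  simp only [hbar, polar_sub_left, polar_sub_right, polar_smul_left,
    polar_smul_right, smul_eq_mul, hpo]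
  rw [polar_comm (⇑n) one y]
  ring

end Aux2
section Aux3
variable {F C : Type*} [Field F] [AddCommGroup C] [Module F C]
variable (mul : C →ₗ[F] C →ₗ[F] C) (one : C) (n : QuadraticForm F C)
variable (bar : C → C)
variable (hone : ∀ x : C, mul one x = x ∧ mul x one = x)
variable (hcomp : ∀ x y : C, n (mul x y) = n x * n y)
variable (hnondeg : ∀ x : C, (∀ y : C, polar n x y = 0) → x = 0)
variable (hbar : ∀ x, bar x = polar n x one • one - x)
variable (hpo : polar n one one = 2)

include hone hcomp hnondeg hbar hpo in
theorem aux_L6 (x y : C) : mul (bar x) (mul x y) = n x • y := by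
  have key : ∀ z : C, polar n (mul (bar x) (mul x y) - n x • y) z = 0 := by
    intro z
    rw [polar_sub_left, aux_L4 mul one n bar hone hcomp hbar,
      aux_barbar one n bar hpo hbar, aux_lin2 mul n hcomp, polar_smul_left]
    simp [smul_eq_mul]
  rw [← sub_eq_zero]
  exact hnondeg _ key

include hone hcomp hnondeg hbar hpo in
theorem aux_L7 (x y : C) : mul (mul y x) (bar x) = n x • y := by
  have key : ∀ z : C, polar n (mul (mul y x) (bar x) - n x • y) z = 0 := by
    intro z
    rw [polar_sub_left, aux_L5 mul one n bar hone hcomp hbar,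
      aux_barbar one n bar hpo hbar, aux_lin1 mul n hcomp, polar_smul_left]
    simp [smul_eq_mul]
    ring
  rw [← sub_eq_zero]
  exact hnondeg _ key

include hone hcomp hnondeg hbar hpo in
theorem aux_L8a (x : C) : mul x (bar x) = n x • one := by
  have h := aux_L7 mul one n bar hone hcomp hnondeg hbar hpo x one
  rwa [(hone x).1] at h

include hone hcomp hnondeg hbar hpo in
theorem aux_L8b (x : C) : mul (bar x) x = n x • one := by
  have h := aux_L6 mul one n bar hone hcomp hnondeg hbar hpo x one
  rwa [(hone x).2] at h

include hone hcomp hnondeg hbar hpo in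
theorem aux_L10s (x y : C) :
    mul x (bar y) + mul y (bar x) = polar n x y • one := by
  have hb : bar (x + y) = bar x + bar y := by
    rw [hbar, hbar, hbar, polar_add_left]
    module
  have h := aux_L8a mul one n bar hone hcomp hnondeg hbar hpo (x + y)
  have hn : n (x + y) = n x + n y + polar n x y := by rw [polar]; ring
  rw [hb, hn, _root_.map_add] at h
  have e1 : mul (x + y) (bar x) = mul x (bar x) + mul y (bar x) := by
    rw [map_add]; rfl
  have e2 : mul (x + y) (bar y) = mul x (bar y) + mul y (bar y) := by
    rw [map_add]; rfl
  rw [e1, e2, aux_L8a mul one n bar hone hcomp hnondeg hbar hpo x,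
    aux_L8a mul one n bar hone hcomp hnondeg hbar hpo y] at h
  linear_combination (norm := module) h

include hone hcomp hnondeg hbar hpo in
theorem aux_L10 (x y : C) :
    mul x y + mul y x
      = polar n y one • x + polar n x one • y - polar n x y • one := by
  have h := aux_L10s mul one n bar hone hcomp hnondeg hbar hpo x y
  rw [aux_barmulr mul one n bar hone hbar, aux_barmulr mul one n bar hone hbar] at h
  linear_combination (norm := module) -h

theorem aux_flex (hla : ∀ x y : C, mul x (mul x y) = mul (mul x x) y)
    (hra : ∀ x y : C, mul (mul x y) y = mul x (mul y y)) (x z : C) :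
    mul (mul x z) x = mul x (mul z x) := by
  have h := hla (x + z) x
  simp only [map_add, LinearMap.add_apply] at h
  rw [hla x x, hla z x] at h
  have h2 := hra z x
  linear_combination (norm := module) -h - h2

include hone hcomp hnondeg hbar hpo in
theorem aux_CH (x : C) : mul x x = polar n x one • x - n x • one := by
  have h := aux_L8a mul one n bar hone hcomp hnondeg hbar hpo x
  rw [aux_barmulr mul one n bar hone hbar] at h
  linear_combination (norm := module) -h

end Aux3
section Aux4
variable {F C : Type*} [Field F] [AddCommGroup C] [Module F C]
variable (mul : C →ₗ[F] C →ₗ[F] C) (one : C) (n : QuadraticForm F C)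
variable (bar : C → C) (τ : C → C)
variable (hone : ∀ x : C, mul one x = x ∧ mul x one = x)
variable (hcomp : ∀ x y : C, n (mul x y) = n x * n y)
variable (hnondeg : ∀ x : C, (∀ y : C, polar n x y = 0) → x = 0)
variable (hbar : ∀ x, bar x = polar n x one • one - x)
variable (hpo : polar n one one = 2)
variable (hτlin : IsLinearMap F τ)
variable (hτmul : ∀ x y : C, τ (mul x y) = mul (τ x) (τ y))
variable (hτbij : Function.Bijective τ)
variable (hτ3 : ∀ x : C, τ (τ (τ x)) = x)

include hone hτmul hτbij in
theorem aux_tau_one : τ one = one := by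
  have h1 : ∀ z : C, mul (τ one) z = z := by
    intro z
    obtain ⟨x, rfl⟩ := hτbij.2 z
    rw [← hτmul, (hone x).1]
  have h2 := h1 one
  rwa [(hone (τ one)).2] at h2

include hone hcomp hnondeg hbar hpo hτlin hτmul hτbij hτ3 in
theorem aux_tau_norm (hone_ne : one ≠ (0 : C)) (x : C) : n (τ x) = n x := by
  by_cases hx : τ x ∈ Submodule.span F {one}
  · obtain ⟨c, hc⟩ := Submodule.mem_span_singleton.1 hx
    have hss : τ (c • one) = c • one := by
      rw [hτlin.map_smul, aux_tau_one mul one τ hone hτmul hτbij]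
    have hxe : x = τ x := by
      calc x = τ (τ (τ x)) := (hτ3 x).symm
        _ = τ (τ (c • one)) := by rw [← hc]
        _ = c • one := by rw [hss, hss]
        _ = τ x := hc
    rw [← hxe]
  · have h1 := aux_CH mul one n bar hone hcomp hnondeg hbar hpo x
    have h2 := aux_CH mul one n bar hone hcomp hnondeg hbar hpo (τ x)
    have h3 : τ (mul x x) = mul (τ x) (τ x) := hτmul x x
    have h4 : τ (mul x x) = polar n x one • τ x - n x • one := by
      rw [h1, hτlin.map_sub, hτlin.map_smul, hτlin.map_smul,
        aux_tau_one mul one τ hone hτmul hτbij]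
    have h5 : (polar n x one - polar n (τ x) one) • τ x
        = (n x - n (τ x)) • one := by
      rw [sub_smul, sub_smul]
      linear_combination (norm := module) -h4 + h3 + h2
    by_cases ha : polar n x one - polar n (τ x) one = 0
    · rw [ha, zero_smul] at h5
      have h6 : n x - n (τ x) = 0 := by
        rcases smul_eq_zero.1 h5.symm with h | h
        · exact h
        · exact absurd h hone_ne
      linear_combination -h6
    · exfalso
      apply hx
      have h7 : τ x = ((polar n x one - polar n (τ x) one)⁻¹
          * (n x - n (τ x))) • one := by
        rw [mul_smul, ← h5, inv_smul_smul₀ ha]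
      exact Submodule.mem_span_singleton.2 ⟨_, h7.symm⟩

include hone hcomp hnondeg hbar hpo hτlin hτmul hτbij hτ3 in
theorem aux_tau_polar (hone_ne : one ≠ (0 : C)) (x y : C) :
    polar n (τ x) (τ y) = polar n x y := by
  have h : τ x + τ y = τ (x + y) := (hτlin.map_add x y).symm
  rw [polar, h, aux_tau_norm mul one n bar τ hone hcomp hnondeg hbar hpo hτlin hτmul hτbij hτ3 hone_ne,
    aux_tau_norm mul one n bar τ hone hcomp hnondeg hbar hpo hτlin hτmul hτbij hτ3 hone_ne,
    aux_tau_norm mul one n bar τ hone hcomp hnondeg hbar hpo hτlin hτmul hτbij hτ3 hone_ne, polar]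

include hone hcomp hnondeg hbar hpo hτlin hτmul hτbij hτ3 in
theorem aux_tau_bar (hone_ne : one ≠ (0 : C)) (x : C) :
    τ (bar x) = bar (τ x) := by
  rw [hbar, hbar, hτlin.map_sub, hτlin.map_smul,
    aux_tau_one mul one τ hone hτmul hτbij]
  have h : polar n (τ x) one = polar n x one := by
    conv_lhs => rw [← aux_tau_one mul one τ hone hτmul hτbij]
    rw [aux_tau_polar mul one n bar τ hone hcomp hnondeg hbar hpo hτlin hτmul hτbij hτ3 hone_ne]
  rw [h]

end Aux4
section Aux5
variable {F C : Type*} [Field F] [AddCommGroup C] [Module F C]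
variable (mul : C →ₗ[F] C →ₗ[F] C) (one : C) (n : QuadraticForm F C)
variable (bar : C → C)
variable (hone : ∀ x : C, mul one x = x ∧ mul x one = x)
variable (hcomp : ∀ x y : C, n (mul x y) = n x * n y)
variable (hnondeg : ∀ x : C, (∀ y : C, polar n x y = 0) → x = 0)
variable (hbar : ∀ x, bar x = polar n x one • one - x)
variable (hpo : polar n one one = 2)
variable (hla : ∀ x y : C, mul x (mul x y) = mul (mul x x) y)
variable (hra : ∀ x y : C, mul (mul x y) y = mul x (mul y y))

include hone hcomp hnondeg hbar hpo hra in
theorem aux_exe (e : C) (hpe : polar n e one = -1) (hne : n e = 1) (x : C) :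
    mul e (mul x e) = x + polar n x (bar e) • e - polar n x one • one := by
  have hbe : bar e = -one - e := by
    rw [hbar, hpe, neg_one_smul]
  have hL := aux_L10 mul one n bar hone hcomp hnondeg hbar hpo e (mul x e)
  have h2 : polar n (mul x e) one = polar n x (bar e) := by
    rw [aux_L5 mul one n bar hone hcomp hbar, (hone (bar e)).1]
  have h3 : polar n e (mul x e) = polar n x one := by
    rw [polar_comm (⇑n) e (mul x e), aux_L5 mul one n bar hone hcomp hbar,
      aux_L8a mul one n bar hone hcomp hnondeg hbar hpo, hne, one_smul]
  have hB : mul (mul x e) e = -x - mul x e := by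
    rw [hra, aux_CH mul one n bar hone hcomp hnondeg hbar hpo e, hpe, hne,
      neg_one_smul, one_smul]
    have h0 : mul x (-e - one) = -(mul x e) - mul x one := by
      rw [_root_.map_sub, _root_.map_neg]
    rw [h0, (hone x).2]
    abel
  rw [h2, h3, hpe] at hL
  linear_combination (norm := module) hL - hB

include hone hcomp hnondeg hbar hpo hla hra in
theorem aux_KI1 (e : C) (hpe : polar n e one = -1) (hne : n e = 1) (x : C) :
    mul (mul (bar e) x) e = polar n (bar e) x • bar e - mul e (bar x) := by
  have hbe : bar e = -one - e := by
    rw [hbar, hpe, neg_one_smul]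
  have hA : mul (bar e) x = -x - mul e x := by
    rw [aux_barmul mul one n bar hone hbar, hpe, neg_one_smul]
  have hB : mul (mul (bar e) x) e = -(mul x e) - mul e (mul x e) := by
    have h0 : mul (-x - mul e x) = -(mul x) - mul (mul e x) := by
      rw [_root_.map_sub, _root_.map_neg]
    rw [hA, h0, LinearMap.sub_apply, LinearMap.neg_apply, aux_flex mul hla hra]
  have hC := aux_exe mul one n bar hone hcomp hnondeg hbar hpo hra e hpe hne x
  have hD : mul e (bar x) = polar n x one • e - mul e x :=
    aux_barmulr mul one n bar hone hbar x e
  have hE := aux_L10 mul one n bar hone hcomp hnondeg hbar hpo e x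
  rw [hpe] at hE
  have hF : polar n (bar e) x = -polar n x one - polar n e x := by
    rw [hbe, polar_sub_left, polar_neg_left, polar_comm (⇑n) one x]
  have hG : polar n x (bar e) = -polar n x one - polar n e x := by
    rw [hbe, polar_sub_right, polar_neg_right, polar_comm (⇑n) x e]
  rw [hB, hC, hD, hF, hG, hbe]
  linear_combination (norm := module) -hE

include hone hcomp hnondeg hbar hpo hla hra in
theorem aux_KI2 (e : C) (hpe : polar n e one = -1) (hne : n e = 1) (x : C) :
    mul e (mul x (bar e)) = polar n (bar e) x • bar e - mul (bar x) e := by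
  have hbe : bar e = -one - e := by
    rw [hbar, hpe, neg_one_smul]
  have hA : mul x (bar e) = -x - mul x e := by
    rw [aux_barmulr mul one n bar hone hbar, hpe, neg_one_smul]
  have hB : mul e (mul x (bar e)) = -(mul e x) - mul e (mul x e) := by
    rw [hA, _root_.map_sub, _root_.map_neg]
  have hC := aux_exe mul one n bar hone hcomp hnondeg hbar hpo hra e hpe hne x
  have hD : mul (bar x) e = polar n x one • e - mul x e :=
    aux_barmul mul one n bar hone hbar x e
  have hE := aux_L10 mul one n bar hone hcomp hnondeg hbar hpo e x
  rw [hpe] at hE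
  have hF : polar n (bar e) x = -polar n x one - polar n e x := by
    rw [hbe, polar_sub_left, polar_neg_left, polar_comm (⇑n) one x]
  have hG : polar n x (bar e) = -polar n x one - polar n e x := by
    rw [hbe, polar_sub_right, polar_neg_right, polar_comm (⇑n) x e]
  rw [hB, hC, hD, hF, hG, hbe]
  linear_combination (norm := module) -hE

end Aux5
section Aux6
variable {F C : Type*} [Field F] [AddCommGroup C] [Module F C]
variable (mul : C →ₗ[F] C →ₗ[F] C) (one : C) (n : QuadraticForm F C)
variable (bar : C → C) (τ : C → C) (star : C → C → C)
variable (hone : ∀ x : C, mul one x = x ∧ mul x one = x)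
variable (hcomp : ∀ x y : C, n (mul x y) = n x * n y)
variable (hnondeg : ∀ x : C, (∀ y : C, polar n x y = 0) → x = 0)
variable (hbar : ∀ x, bar x = polar n x one • one - x)
variable (hpo : polar n one one = 2)
variable (hno : n one = 1)
variable (hone_ne : one ≠ (0 : C))
variable (hla : ∀ x y : C, mul x (mul x y) = mul (mul x x) y)
variable (hra : ∀ x y : C, mul (mul x y) y = mul x (mul y y))
variable (hτlin : IsLinearMap F τ)
variable (hτmul : ∀ x y : C, τ (mul x y) = mul (τ x) (τ y))
variable (hτbij : Function.Bijective τ)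
variable (hτ3 : ∀ x : C, τ (τ (τ x)) = x)
variable (hstar : ∀ x y, star x y = mul (τ (bar x)) (τ (τ (bar y))))

include hone hcomp hnondeg hbar hpo hno hone_ne hla hra hτlin hτmul hτbij hτ3 hstar in
theorem aux_part2 (w : C) (hw1 : w ∉ Submodule.span F {one})
    (hw2 : mul w w + w + one = 0)
    (hw3 : ∀ x : C, τ x = mul w (mul x (mul w w))) :
    star w w = w ∧
      ∀ x : C, star w x = polar n x w • w - x ∧
        star x w = polar n x w • w - x := by
  -- basic scalar facts about w
  have hmulww : mul w w = -w - one := by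
    linear_combination (norm := module) hw2
  have hCH := aux_CH mul one n bar hone hcomp hnondeg hbar hpo w
  have hkey : (polar n w one + 1) • w = (n w - 1) • one := by
    rw [hmulww] at hCH
    rw [add_smul, sub_smul, one_smul, one_smul]
    linear_combination (norm := module) -hCH
  have hpe : polar n w one = -1 := by
    by_contra hne'
    have ha : polar n w one + 1 ≠ 0 := fun h => hne' (by linear_combination h)
    exact hw1 (Submodule.mem_span_singleton.2
      ⟨(polar n w one + 1)⁻¹ * (n w - 1), by
        rw [mul_smul, ← hkey, inv_smul_smul₀ ha]⟩)
  have hnw : n w = 1 := by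
    rw [hpe] at hkey
    simp only [neg_add_cancel, zero_smul] at hkey
    rcases smul_eq_zero.1 hkey.symm with h | h
    · linear_combination h
    · exact absurd h hone_ne
  have hbw : bar w = -one - w := by rw [hbar, hpe, neg_one_smul]
  have hww : mul w w = bar w := by rw [hmulww, hbw]; abel
  -- τ fixes w and bar w
  have hwbw : mul w (bar w) = one := by
    rw [aux_L8a mul one n bar hone hcomp hnondeg hbar hpo, hnw, one_smul]
  have hbww : mul (bar w) w = one := by
    rw [aux_L8b mul one n bar hone hcomp hnondeg hbar hpo, hnw, one_smul]
  have hτw : τ w = w := by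
    rw [hw3, hww, hwbw, (hone w).2]
  have hτbw : τ (bar w) = bar w := by
    rw [aux_tau_bar mul one n bar τ hone hcomp hnondeg hbar hpo hτlin hτmul hτbij hτ3 hone_ne,
      hτw]
  -- mul (bar w) (bar w) = w
  have hbb : mul (bar w) (bar w) = w := by
    have h1 : mul (-one - w) (-one - w)
        = mul one one + mul one w + mul w one + mul w w := by
      have e1 : mul (-one - w) = -(mul one) - mul w := by
        rw [_root_.map_sub, _root_.map_neg]
      rw [e1]
      simp only [LinearMap.sub_apply, LinearMap.neg_apply, _root_.map_sub,
        _root_.map_neg]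
      abel
    rw [hbw, h1, (hone one).1, (hone w).1, (hone w).2, hmulww]
    abel
  -- τ² = ρ where ρ y = ((bar w) y) w
  have hτ2 : ∀ y : C, τ (τ y) = mul (mul (bar w) y) w := by
    intro y
    apply hτbij.1
    rw [hτ3 y, hw3, hww]
    have h1 : mul (mul (mul (bar w) y) w) (bar w) = mul (bar w) y := by
      rw [aux_L7 mul one n bar hone hcomp hnondeg hbar hpo, hnw, one_smul]
    rw [h1]
    have h2 : mul w (mul (bar w) y) = y := by
      have := aux_L6 mul one n bar hone hcomp hnondeg hbar hpo (bar w) y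
      rwa [aux_barbar one n bar hpo hbar,
        aux_nbar one n bar hno hpo hbar, hnw, one_smul] at this
    rw [h2]
  -- star w w = w
  have hsww : star w w = w := by
    rw [hstar, hτbw, hτbw, hbb]
  refine ⟨hsww, fun x => ?_⟩
  have hpbb : polar n (bar w) (bar x) = polar n w x :=
    aux_polar_barbar one n bar hpo hbar w x
  constructor
  · -- star w x
    rw [hstar, hτbw, hτ2 (bar x),
      aux_KI1 mul one n bar hone hcomp hnondeg hbar hpo hla hra w hpe hnw (bar x),
      aux_barbar one n bar hpo hbar, hpbb]
    have h1 : mul (bar w) (polar n w x • bar w - mul w x)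
        = polar n w x • mul (bar w) (bar w) - mul (bar w) (mul w x) := by
      rw [_root_.map_sub, _root_.map_smul]
    rw [h1, hbb]
    have h2 : mul (bar w) (mul w x) = x := by
      have := aux_L6 mul one n bar hone hcomp hnondeg hbar hpo w x
      rwa [hnw, one_smul] at this
    rw [h2, polar_comm (⇑n) w x]
  · -- star x w
    rw [hstar, hτbw, hτbw, hw3, hww,
      aux_KI2 mul one n bar hone hcomp hnondeg hbar hpo hla hra w hpe hnw (bar x),
      aux_barbar one n bar hpo hbar, hpbb]
    have h1 : mul (polar n w x • bar w - mul x w) (bar w)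
        = polar n w x • mul (bar w) (bar w) - mul (mul x w) (bar w) := by
      have e1 : mul (polar n w x • bar w - mul x w)
          = polar n w x • mul (bar w) - mul (mul x w) := by
        rw [_root_.map_sub, _root_.map_smul]
      rw [e1, LinearMap.sub_apply, LinearMap.smul_apply]
    rw [h1, hbb]
    have h2 : mul (mul x w) (bar w) = x := by
      have := aux_L7 mul one n bar hone hcomp hnondeg hbar hpo w x
      rwa [hnw, one_smul] at this
    rw [h2, polar_comm (⇑n) w x]

end Aux6
section Aux7
variable {F C : Type*} [Field F] [AddCommGroup C] [Module F C]
variable (mul : C →ₗ[F] C →ₗ[F] C) (one : C) (n : QuadraticForm F C)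
variable (bar : C → C) (τ : C → C) (star : C → C → C)
variable (hone : ∀ x : C, mul one x = x ∧ mul x one = x)
variable (hcomp : ∀ x y : C, n (mul x y) = n x * n y)
variable (hnondeg : ∀ x : C, (∀ y : C, polar n x y = 0) → x = 0)
variable (hbar : ∀ x, bar x = polar n x one • one - x)
variable (hpo : polar n one one = 2)
variable (hno : n one = 1)
variable (hone_ne : one ≠ (0 : C))
variable (hla : ∀ x y : C, mul x (mul x y) = mul (mul x x) y)
variable (hra : ∀ x y : C, mul (mul x y) y = mul x (mul y y))
variable (hτlin : IsLinearMap F τ)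
variable (hτmul : ∀ x y : C, τ (mul x y) = mul (τ x) (τ y))
variable (hτbij : Function.Bijective τ)
variable (hτ3 : ∀ x : C, τ (τ (τ x)) = x)
variable (hstar : ∀ x y, star x y = mul (τ (bar x)) (τ (τ (bar y))))

include hone hcomp hnondeg hbar hpo hno hone_ne hla hra hτlin hτmul hτbij hτ3 hstar in
theorem aux_forward (hτne : τ ≠ id)
    (e : C) (he0 : e ≠ 0) (hee : star e e = e)
    (heq : ∀ x : C, star e x = polar n e x • e - x ∧
      star x e = polar n e x • e - x) :
    e ∉ Submodule.span F {one} ∧ mul e e + e + one = 0 ∧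
      ∀ x : C, τ x = mul e (mul x (mul e e)) := by
  have hbone : bar one = one := by
    rw [hbar, hpo]; module
  -- Step A : e is not a scalar multiple of one
  have hspan : e ∉ Submodule.span F {one} := by
    intro hmem
    obtain ⟨c, hc⟩ := Submodule.mem_span_singleton.1 hmem
    have hbare : bar e = e := by
      rw [← hc, hbar, polar_smul_left, hpo]
      simp only [smul_eq_mul]
      module
    have hτe : τ e = e := by
      rw [← hc, hτlin.map_smul, aux_tau_one mul one τ hone hτmul hτbij]
    have hse : star e e = mul e e := by rw [hstar, hbare, hτe, hτe]
    have hmm : mul e e = (c * c) • one := by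
      rw [← hc]
      have e1 : mul (c • one) = c • mul one := by rw [_root_.map_smul]
      rw [e1, LinearMap.smul_apply, _root_.map_smul, (hone one).1, smul_smul]
    have hc0 : c ≠ 0 := fun h => he0 (by rw [← hc, h, zero_smul])
    have hc2 : c * c = c := by
      have h0 : (c * c) • one = c • one := by rw [← hmm, ← hse, hee, ← hc]
      have h1 : (c * c - c) • one = 0 := by rw [sub_smul, h0, sub_self]
      rcases smul_eq_zero.1 h1 with h | h
      · linear_combination h
      · exact absurd h hone_ne
    have hc1 : c = 1 := mul_left_cancel₀ hc0 (by rw [hc2, mul_one])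
    have he1 : e = one := by rw [← hc, hc1, one_smul]
    have hkey : ∀ x : C, τ (τ (bar x)) = bar x := by
      intro x
      have h := (heq x).1
      rw [hstar, hbare, hτe, he1, (hone _).1] at h
      rw [h, hbar, polar_comm (⇑n) one x]
    have hτ2 : ∀ y : C, τ (τ y) = y := by
      intro y
      have h := hkey (bar y)
      rwa [aux_barbar one n bar hpo hbar] at h
    apply hτne
    funext y
    exact (hτ2 (τ y)).symm.trans (hτ3 y)
  -- Step B : τ fixes bar e, polar n e one = -1
  have hA : τ (bar e) = polar n e one • e - one := by
    have h := (heq one).1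
    rw [hstar, hbone, aux_tau_one mul one τ hone hτmul hτbij,
      aux_tau_one mul one τ hone hτmul hτbij, (hone _).2] at h
    exact h
  have hB : τ (τ (bar e)) = polar n e one • e - one := by
    have h := (heq one).2
    rw [hstar, hbone, aux_tau_one mul one τ hone hτmul hτbij, (hone _).1] at h
    exact h
  have hfix : τ (bar e) = bar e := hτbij.1 (hB.trans hA.symm)
  have hpe : polar n e one = -1 := by
    have h : polar n e one • one - e = polar n e one • e - one := by
      rw [← hbar, ← hfix, hA]
    by_contra hne'
    have ha : polar n e one + 1 ≠ 0 := fun h' => hne' (by linear_combination h')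
    have he1 : e = one := by
      have h2 : (polar n e one + 1) • e = (polar n e one + 1) • one := by
        rw [add_smul, add_smul, one_smul, one_smul]
        linear_combination (norm := module) -h
      calc e = (polar n e one + 1)⁻¹ • ((polar n e one + 1) • e) :=
            (inv_smul_smul₀ ha e).symm
        _ = (polar n e one + 1)⁻¹ • ((polar n e one + 1) • one) := by rw [h2]
        _ = one := inv_smul_smul₀ ha one
    exact hspan (Submodule.mem_span_singleton.2 ⟨1, by rw [one_smul, he1]⟩)
  have hbe : bar e = -one - e := by rw [hbar, hpe, neg_one_smul]
  have hτe : τ e = e := by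
    have h := aux_tau_bar mul one n bar τ hone hcomp hnondeg hbar hpo hτlin
      hτmul hτbij hτ3 hone_ne (bar e)
    rwa [aux_barbar one n bar hpo hbar, hfix, aux_barbar one n bar hpo hbar] at h
  have hsee : star e e = mul (bar e) (bar e) := by rw [hstar, hfix, hfix]
  have hbbe : mul (bar e) (bar e) = e := by rw [← hsee, hee]
  have he2 : mul e e + e + one = 0 := by
    have h1 : mul (-one - e) (-one - e)
        = mul one one + mul one e + mul e one + mul e e := by
      have e1 : mul (-one - e) = -(mul one) - mul e := by
        rw [_root_.map_sub, _root_.map_neg]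
      rw [e1]
      simp only [LinearMap.sub_apply, LinearMap.neg_apply, _root_.map_sub,
        _root_.map_neg]
      abel
    rw [hbe, h1, (hone one).1, (hone e).1, (hone e).2] at hbbe
    linear_combination (norm := module) hbbe
  have hne : n e = 1 := by
    have hCH := aux_CH mul one n bar hone hcomp hnondeg hbar hpo e
    rw [hpe, neg_one_smul] at hCH
    have h0 : (n e - 1) • one = 0 := by
      rw [sub_smul, one_smul]
      linear_combination (norm := module) hCH - he2
    rcases smul_eq_zero.1 h0 with h | h
    · linear_combination h
    · exact absurd h hone_ne
  have hmulee : mul e e = bar e := by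
    rw [hbe]
    linear_combination (norm := module) he2
  have hτ2 : ∀ y : C, τ (τ y) = mul (mul (bar e) y) e := by
    intro y
    have h := (heq (bar y)).1
    rw [hstar, hfix, aux_barbar one n bar hpo hbar] at h
    have h2 : mul e (mul (bar e) (τ (τ y))) = τ (τ y) := by
      have h3 := aux_L6 mul one n bar hone hcomp hnondeg hbar hpo (bar e) (τ (τ y))
      rwa [aux_barbar one n bar hpo hbar, aux_nbar one n bar hno hpo hbar,
        hne, one_smul] at h3
    have h4 : τ (τ y) = polar n e (bar y) • mul e e - mul e (bar y) := by
      rw [← h2, h, _root_.map_sub, _root_.map_smul]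
    have h5 : polar n e (bar y) = polar n (bar e) y := by
      conv_rhs => rw [← aux_barbar one n bar hpo hbar y]
      rw [aux_polar_barbar one n bar hpo hbar]
    rw [h4, hmulee,
      aux_KI1 mul one n bar hone hcomp hnondeg hbar hpo hla hra e hpe hne y, h5]
  refine ⟨hspan, he2, fun x => ?_⟩
  apply hτbij.1
  apply hτbij.1
  rw [hτ3 x, hτ2 (mul e (mul x (mul e e))), hmulee]
  have h1 : mul (bar e) (mul e (mul x (bar e))) = mul x (bar e) := by
    have h := aux_L6 mul one n bar hone hcomp hnondeg hbar hpo e (mul x (bar e))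
    rwa [hne, one_smul] at h
  rw [h1]
  have h2 : mul (mul x (bar e)) e = x := by
    have h := aux_L7 mul one n bar hone hcomp hnondeg hbar hpo (bar e) x
    rwa [aux_barbar one n bar hpo hbar, aux_nbar one n bar hno hpo hbar,
      hne, one_smul] at h
  rw [h2]

end Aux7
/-- For an order 3 automorphism `τ` of a Cayley algebra, the
Petersson algebra `x*y = τ(x̄)·τ²(ȳ)` has a para-unit (is para-Cayley) iff
`τ(x) = w·x·w²` for some `w ∉ F·1` with `w² + w + 1 = 0`; in that case `w` is
the para-unit. -/
theorem paraCayley_iff_inner_order3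
    {F C : Type*} [Field F] [AddCommGroup C] [Module F C]
    (mul : C →ₗ[F] C →ₗ[F] C) (one : C)
    (hone : ∀ x : C, mul one x = x ∧ mul x one = x)
    (n : QuadraticForm F C)
    (hcomp : ∀ x y : C, n (mul x y) = n x * n y)
    (hnondeg : ∀ x : C, (∀ y : C, polar n x y = 0) → x = 0)
    (hdim : Module.finrank F C = 8)
    (hla : ∀ x y : C, mul x (mul x y) = mul (mul x x) y)
    (hra : ∀ x y : C, mul (mul x y) y = mul x (mul y y))
    (τ : C → C) (hτlin : IsLinearMap F τ)
    (hτmul : ∀ x y : C, τ (mul x y) = mul (τ x) (τ y))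
    (hτbij : Function.Bijective τ)
    (hτ3 : ∀ x : C, τ (τ (τ x)) = x) (hτne : τ ≠ id)
    (bar : C → C) (hbar : ∀ x, bar x = polar n x one • one - x)
    (star : C → C → C)
    (hstar : ∀ x y, star x y = mul (τ (bar x)) (τ (τ (bar y)))) :
    ((∃ e : C, e ≠ 0 ∧ star e e = e ∧
        ∀ x : C, star e x = polar n e x • e - x ∧ star x e = polar n e x • e - x) ↔
      (∃ w : C, w ∉ Submodule.span F {one} ∧ mul w w + w + one = 0 ∧
        ∀ x : C, τ x = mul w (mul x (mul w w)))) ∧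
    (∀ w : C, w ∉ Submodule.span F {one} → mul w w + w + one = 0 →
      (∀ x : C, τ x = mul w (mul x (mul w w))) →
      star w w = w ∧
        ∀ x : C, star w x = polar n x w • w - x ∧ star x w = polar n x w • w - x) := by
  have hone_ne : one ≠ (0 : C) := aux_one_ne mul one hone hdim
  have hno : n one = 1 := aux_none mul one n hone hcomp hnondeg hone_ne
  have hpo : polar n one one = 2 :=
    aux_polar_one mul one n hone hcomp hnondeg hone_ne
  constructor
  · constructor
    · rintro ⟨e, he0, hee, heq⟩
      obtain ⟨h1, h2, h3⟩ := aux_forward mul one n bar τ star hone hcomp hnondeg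
        hbar hpo hno hone_ne hla hra hτlin hτmul hτbij hτ3 hstar hτne e he0 hee heq
      exact ⟨e, h1, h2, h3⟩
    · rintro ⟨w, hw1, hw2, hw3⟩
      obtain ⟨hs1, hs2⟩ := aux_part2 mul one n bar τ star hone hcomp hnondeg
        hbar hpo hno hone_ne hla hra hτlin hτmul hτbij hτ3 hstar w hw1 hw2 hw3
      refine ⟨w, fun h0 => hw1 (by rw [h0]; exact Submodule.zero_mem _), hs1,
        fun x => ?_⟩
      obtain ⟨ha, hb⟩ := hs2 x
      exact ⟨by rw [ha, polar_comm (⇑n) x w], by rw [hb, polar_comm (⇑n) x w]⟩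
  · intro w hw1 hw2 hw3
    exact aux_part2 mul one n bar τ star hone hcomp hnondeg
      hbar hpo hno hone_ne hla hra hτlin hτmul hτbij hτ3 hstar w hw1 hw2 hw3
end

section
/- Let (C, ·, n) be a Cayley algebra with associated para-Cayley product x•y = x̄·ȳ. Then the set of idempotents of (C, •) equals {1} ∪ {w ∈ C \ F·1 : w² + w + 1 = 0}. -/
open QuadraticMap

/-- The idempotents of the para-Cayley algebra `x•y = x̄·ȳ`
associated to a Cayley algebra `(C,·,n)` are exactly `1` together with the
elements `w ∉ F·1` satisfying `w² + w + 1 = 0`. -/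
theorem paraCayley_idempotents
    {F C : Type*} [Field F] [AddCommGroup C] [Module F C]
    (mul : C →ₗ[F] C →ₗ[F] C) (one : C)
    (hone : ∀ x : C, mul one x = x ∧ mul x one = x)
    (n : QuadraticForm F C)
    (hcomp : ∀ x y : C, n (mul x y) = n x * n y)
    (hnondeg : ∀ x : C, (∀ y : C, polar n x y = 0) → x = 0)
    (hdim : Module.finrank F C = 8)
    (bar : C → C) (hbar : ∀ x, bar x = polar n x one • one - x)
    (bullet : C → C → C) (hbullet : ∀ x y, bullet x y = mul (bar x) (bar y)) :
    {x : C | x ≠ 0 ∧ bullet x x = x} =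
      {one} ∪ {w : C | w ∉ Submodule.span F {one} ∧ mul w w + w + one = 0} := by
  -- n(one) = 1
  have hnn : n one * n one = n one := by
    have h := hcomp one one; rw [(hone one).1] at h; exact h.symm
  have hn1 : n one = 1 := by
    rcases mul_eq_zero.mp (show n one * (n one - 1) = 0 by ring_nf; linear_combination hnn) with h | h
    · exfalso
      have hall : ∀ x : C, n x = 0 := fun x => by
        have hx := hcomp one x; rw [(hone x).1] at hx; rw [hx, h, zero_mul]
      have hallz : ∀ x : C, x = 0 := fun x => hnondeg x (fun y => by
        simp [QuadraticMap.polar, hall])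
      have : Subsingleton C := ⟨fun a b => by rw [hallz a, hallz b]⟩
      rw [Module.finrank_zero_of_subsingleton] at hdim
      exact absurd hdim (by norm_num)
    · linear_combination h
  have hone0 : one ≠ 0 := fun h => by
    rw [h, QuadraticMap.map_zero] at hn1; exact zero_ne_one hn1
  have hb2 : polar n one one = 2 := by
    have h2 : one + one = (2 : F) • one := by module
    simp only [QuadraticMap.polar, h2, QuadraticMap.map_smul, smul_eq_mul, hn1]
    norm_num
  -- linearizations of the composition law
  have comp2 : ∀ x y z : C, polar n (mul x y) (mul x z) = n x * polar n y z := by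
    intro x y z
    simp only [QuadraticMap.polar, ← map_add (mul x), hcomp]
    ring
  have lin : ∀ w x y z : C, polar n (mul x y) (mul w z) + polar n (mul w y) (mul x z)
      = polar n x w * polar n y z := by
    intro w x y z
    have h1 := comp2 (x + w) y z
    rw [map_add, LinearMap.add_apply, LinearMap.add_apply,
      polar_add_left, polar_add_right, polar_add_right, comp2 x y z, comp2 w y z] at h1
    have hx : n (x + w) = n x + n w + polar n x w := by
      simp only [QuadraticMap.polar]; ring
    rw [hx] at h1
    linear_combination h1
  have tz : ∀ x z : C, polar n (mul x x) z
      = polar n x one * polar n x z - n x * polar n one z := by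
    intro x z
    have h3 := lin one x x z
    rw [(hone z).1, (hone x).1] at h3
    have h5 : polar n x (mul x z) = n x * polar n one z := by
      have h := comp2 x one z; rwa [(hone x).2] at h
    linear_combination h3 - h5
  -- Cayley–Hamilton
  have CH : ∀ x : C, mul x x = polar n x one • x - n x • one := by
    intro x
    have key : ∀ z, polar n (mul x x - (polar n x one • x - n x • one)) z = 0 := by
      intro z
      rw [polar_sub_left, polar_sub_left, polar_smul_left, polar_smul_left, tz]
      simp only [smul_eq_mul]
      ring
    exact sub_eq_zero.mp (hnondeg _ key)
  -- bullet formula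
  have hbul : ∀ x : C, bullet x x
      = (polar n x one ^ 2 - n x) • one - polar n x one • x := by
    intro x
    rw [hbullet, hbar x]
    simp only [_root_.map_sub, _root_.map_smul, LinearMap.sub_apply, LinearMap.smul_apply]
    rw [(hone one).1, (hone x).1, (hone x).2, CH x]
    module
  ext x
  simp only [Set.mem_setOf_eq, Set.mem_union, Set.mem_singleton_iff]
  constructor
  · rintro ⟨hx0, hid⟩
    rw [hbul] at hid
    have eq1 : (polar n x one ^ 2 - n x) • one = (1 + polar n x one) • x := by
      linear_combination (norm := module) hid
    by_cases hsp : x ∈ Submodule.span F {one}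
    · left
      obtain ⟨c, hc⟩ := Submodule.mem_span_singleton.mp hsp
      subst hc
      rw [polar_smul_left, hb2, QuadraticMap.map_smul, hn1] at eq1
      have h0 : ((c • (2:F)) ^ 2 - (c * c) • 1 - (1 + c • (2:F)) * c) • one = 0 := by
        linear_combination (norm := module) eq1
      have hs := (smul_eq_zero.mp h0).resolve_right hone0
      simp only [smul_eq_mul] at hs
      have hc0 : c ≠ 0 := fun h => hx0 (by rw [h, zero_smul])
      have : c = 1 := by
        rcases mul_eq_zero.mp (show c * (c - 1) = 0 by linear_combination hs) with h | h
        · exact absurd h hc0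
        · linear_combination h
      rw [this, one_smul]
    · right
      have key : ∀ a c : F, a • x = c • one → a = 0 := by
        intro a c h
        by_contra ha
        exact hsp (Submodule.mem_span_singleton.mpr
          ⟨a⁻¹ * c, by rw [mul_smul, ← h, smul_smul, inv_mul_cancel₀ ha, one_smul]⟩)
      have ht0 : 1 + polar n x one = 0 := key _ _ eq1.symm
      have ht : polar n x one = -1 := by linear_combination ht0
      rw [ht] at eq1
      have hnx : n x = 1 := by
        have h0 : (((-1:F)) ^ 2 - n x) • one = 0 := by
          rw [eq1]; module
        have := (smul_eq_zero.mp h0).resolve_right hone0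
        linear_combination -this
      refine ⟨hsp, ?_⟩
      rw [CH x, ht, hnx]
      module
  · rintro (rfl | ⟨hsp, heq⟩)
    · refine ⟨hone0, ?_⟩
      rw [hbul, hb2, hn1]
      module
    · have hx0 : x ≠ 0 := fun h => hsp (by rw [h]; exact Submodule.zero_mem _)
      have eq2 : (polar n x one + 1) • x = (n x - 1) • one := by
        rw [CH x] at heq
        linear_combination (norm := module) heq
      have key : ∀ a c : F, a • x = c • one → a = 0 := by
        intro a c h
        by_contra ha
        exact hsp (Submodule.mem_span_singleton.mpr
          ⟨a⁻¹ * c, by rw [mul_smul, ← h, smul_smul, inv_mul_cancel₀ ha, one_smul]⟩)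
      have ht0 : polar n x one + 1 = 0 := key _ _ eq2
      have ht : polar n x one = -1 := by linear_combination ht0
      rw [ht] at eq2
      have hnx : n x = 1 := by
        have h0 : (n x - 1) • one = 0 := by rw [← eq2]; module
        have := (smul_eq_zero.mp h0).resolve_right hone0
        linear_combination this
      refine ⟨hx0, ?_⟩
      rw [hbul, ht, hnx]
      module
end

section
/- The automorphism group of a two-dimensional étale quadratic F-algebra K (with respect to its algebra structure) is cyclic of order 2; in particular it contains no element of order 3, and therefore every idempotent of a 2-dimensional symmetric composition algebra is a para-unit. -/
open QuadraticMap

universe u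

section AuxHelpers
open Module

section Helpers
variable {F V : Type*} [Field F] [AddCommGroup V] [Module F V]

theorem aux_exists_indep (h2 : Module.finrank F V = 2) (x : V) :
    ∃ y : V, ∀ a : F, a • x ≠ y := by
  by_contra hcon
  push_neg at hcon
  rcases eq_or_ne x 0 with hx | hx
  · have hall : ∀ y : V, y = 0 := fun y => by
      obtain ⟨a, ha⟩ := hcon y; rw [← ha, hx, smul_zero]
    have hsub : Subsingleton V := ⟨fun a b => by rw [hall a, hall b]⟩
    have : Module.finrank F V = 0 := Module.finrank_zero_of_subsingleton
    omega
  · have hspan : (Submodule.span F {x}) = ⊤ := by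
      rw [Submodule.eq_top_iff']
      intro y
      obtain ⟨a, ha⟩ := hcon y
      exact Submodule.mem_span_singleton.2 ⟨a, ha⟩
    have h1 : Module.finrank F (Submodule.span F ({x} : Set V)) = 1 :=
      finrank_span_singleton hx
    rw [hspan, finrank_top] at h1
    omega

theorem aux_basis' (h2 : Module.finrank F V = 2) {x y : V} (hx : x ≠ 0)
    (hxy : ∀ a : F, a • x ≠ y) :
    ∃ B : Basis (Fin 2) F V, B 0 = x ∧ B 1 = y := by
  have li : LinearIndependent F ![x, y] := (LinearIndependent.pair_iff' hx).2 hxy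
  have hfin : Module.Finite F V := Module.finite_of_finrank_eq_succ h2
  have card : Fintype.card (Fin 2) = Module.finrank F V := by simp [h2]
  refine ⟨basisOfLinearIndependentOfCardEqFinrank li card, ?_, ?_⟩ <;>
    · rw [show ((basisOfLinearIndependentOfCardEqFinrank li card : Fin 2 → V))
        = ![x,y] from coe_basisOfLinearIndependentOfCardEqFinrank li card]
      rfl

theorem aux_repr (B : Basis (Fin 2) F V) {x y : V} (h0 : B 0 = x) (h1 : B 1 = y)
    (z : V) : ∃ p q : F, z = p • x + q • y := by
  have := B.sum_repr z
  rw [Fin.sum_univ_two, h0, h1] at this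
  exact ⟨_, _, this.symm⟩

theorem aux_coef (B : Basis (Fin 2) F V) {x y : V} (h0 : B 0 = x) (h1 : B 1 = y)
    {p q r s : F} (heq : p • x + q • y = r • x + s • y) : p = r ∧ q = s := by
  have li := B.linearIndependent
  have h00 : (p - r) • x + (q - s) • y = 0 := by
    rw [sub_smul, sub_smul, sub_add_sub_comm, heq, sub_self]
  rw [← h0, ← h1] at h00
  have h2 : ((p - r) • B 0 + (q - s) • B 1 : V)
      = Finset.univ.sum (fun i : Fin 2 => (![p-r, q-s] i) • B i) := by
    rw [Fin.sum_univ_two]; rfl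
  have h3 := linearIndependent_iff'.1 li Finset.univ ![p-r, q-s]
    (by rw [← h2, h00])
  have hp := h3 0 (Finset.mem_univ _)
  have hq := h3 1 (Finset.mem_univ _)
  simp only [Matrix.cons_val_zero, Matrix.cons_val_one, Matrix.head_cons] at hp hq
  exact ⟨sub_eq_zero.1 hp, sub_eq_zero.1 hq⟩
end Helpers

theorem aux_paraunit {F S : Type*} [Field F] [AddCommGroup S] [Module F S]
    (mul : S →ₗ[F] S →ₗ[F] S) (n : QuadraticForm F S)
    (hcomp : ∀ x y : S, n (mul x y) = n x * n y)
    (hnondeg : ∀ x : S, (∀ y : S, polar n x y = 0) → x = 0)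
    (hassoc : ∀ x y z : S, polar n (mul x y) z = polar n x (mul y z))
    (hS2 : Module.finrank F S = 2)
    (e : S) (he : e ≠ 0) (hee : mul e e = e) :
    ∀ x : S, mul e x = polar n e x • e - x ∧ mul x e = polar n e x • e - x := by
  classical
  have hsub : ∀ u v : S, (∀ z : S, polar n u z = polar n v z) → u = v := by
    intro u v h
    have := hnondeg (u - v) (fun z => by rw [polar_sub_left, h z, sub_self])
    exact sub_eq_zero.1 this
  have hlin1 : ∀ x y z : S, polar n (mul x y) (mul x z) = n x * polar n y z := by
    intro x y z
    simp only [polar]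
    rw [← map_add (mul x), hcomp, hcomp, hcomp]
    ring
  have hlin2 : ∀ x y z : S, polar n (mul x z) (mul y z) = polar n x y * n z := by
    intro x y z
    simp only [polar]
    rw [show mul x z + mul y z = mul (x + y) z by
      rw [map_add mul x y, LinearMap.add_apply], hcomp, hcomp, hcomp]
    ring
  have hrid : ∀ x y : S, mul (mul x y) x = n x • y := by
    intro x y
    apply hsub
    intro z
    rw [hassoc, hlin1, polar_smul_left, smul_eq_mul]
  have hlid : ∀ x y : S, mul x (mul y x) = n x • y := by
    intro x y
    apply hsub
    intro z
    rw [polar_comm, ← hassoc, hlin2, polar_smul_left, smul_eq_mul, polar_comm (⇑n) z y]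
    ring
  have hne1 : n e = 1 := by
    have h := hcomp e e
    rw [hee] at h
    by_cases h0 : n e = 0
    · exfalso
      have h1 := hrid e e
      rw [hee, hee, h0, zero_smul] at h1
      exact he h1
    · exact (mul_left_cancel₀ h0 (show n e * 1 = n e * n e by rw [mul_one]; exact h)).symm
  have hRL : ∀ x : S, mul (mul e x) e = x := by
    intro x; rw [hrid e x, hne1, one_smul]
  have hLR : ∀ x : S, mul e (mul x e) = x := by
    intro x; rw [hlid e x, hne1, one_smul]
  have hphiL : ∀ x : S, polar n e (mul e x) = polar n e x := by
    intro x
    have h := hassoc e e x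
    rw [hee] at h
    exact h.symm
  have hφe : polar n e e = (2:F) := by
    rw [polar_self, hne1]
    norm_num
  have hrel2 : ∀ x : S, mul (mul x e) e + mul e x = polar n e x • e := by
    intro x
    have h := hrid (x + e) e
    rw [map_add mul x e, LinearMap.add_apply, hee, map_add mul (mul x e) e,
      LinearMap.add_apply, map_add (mul (mul x e)), map_add (mul e),
      hrid x e, hee] at h
    have hn : n (x + e) = n x + n e + polar n x e := by simp only [polar]; ring
    rw [hn, hne1, polar_comm (⇑n) x e] at h
    linear_combination (norm := module) h
  obtain ⟨x1, hx1⟩ := aux_exists_indep hS2 e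
  have goal1 : ∀ x : S, mul e x = polar n e x • e - x := by
    by_cases hchar : (2:F) = 0
    · -- characteristic 2
      have hφe0 : polar n e e = 0 := hφe.trans hchar
      obtain ⟨B, hB0, hB1⟩ := aux_basis' hS2 he hx1
      have hrepr2 := aux_repr B hB0 hB1
      have hcoefS := fun {p q r s : F} h =>
        aux_coef B hB0 hB1 (p := p) (q := q) (r := r) (s := s) h
      have hφx1 : polar n e x1 ≠ 0 := by
        intro h0
        apply he
        apply hnondeg e
        intro y
        obtain ⟨p, q, hy⟩ := hrepr2 y
        rw [hy, polar_add_right, polar_smul_right, polar_smul_right, hφe0, h0]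
        simp
      obtain ⟨p, q, hL1⟩ := hrepr2 (mul e x1)
      have hq1 : q = 1 := by
        have h := hphiL x1
        rw [hL1, polar_add_right, polar_smul_right, polar_smul_right, hφe0] at h
        simp only [smul_eq_mul, mul_zero, zero_add] at h
        exact mul_right_cancel₀ hφx1 (by rw [h, one_mul])
      rw [hq1, one_smul] at hL1
      have hLL : mul e (mul e x1) = x1 := by
        rw [hL1, map_add (mul e), _root_.map_smul (mul e), hee, hL1]
        have h2p : p • e + (p • e + x1) = (2*p) • e + x1 := by
          match_scalars <;> ring
        rw [h2p, show (2:F)*p = 0 by rw [hchar, zero_mul], zero_smul, zero_add]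
      have hLinj : ∀ u v : S, mul e u = mul e v → u = v := by
        intro u v h
        have hu := hRL u; have hv := hRL v
        rw [← hu, ← hv, h]
      have hRx1 : mul x1 e = mul e x1 := by
        apply hLinj
        rw [hLR x1, hLL]
      have hpφ : p = polar n e x1 := by
        have h := hrel2 x1
        rw [hRx1, hL1, map_add mul, LinearMap.add_apply, _root_.map_smul mul p e,
          LinearMap.smul_apply, hee, hRx1, hL1] at h
        have h' : (p + p + p) • e + ((1:F) + 1) • x1
            = polar n e x1 • e + ((0:F)) • x1 := by
          rw [← h]; module
        obtain ⟨e1, _⟩ := aux_coef B hB0 hB1 h'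
        linear_combination e1 - p * hchar
      intro x
      obtain ⟨r, s, hx⟩ := hrepr2 x
      rw [hx, map_add (mul e), _root_.map_smul (mul e), _root_.map_smul (mul e),
        hee, hL1, hpφ, polar_add_right, polar_smul_right, polar_smul_right, hφe0]
      match_scalars <;> (try simp only [smul_eq_mul]) <;>
        first
        | linear_combination r * hchar
        | linear_combination s * hchar
        | ring
    · -- characteristic ≠ 2
      set w : S := (2:F) • x1 - polar n e x1 • e with hw
      have hφw : polar n e w = 0 := by
        rw [hw, polar_sub_right, polar_smul_right, polar_smul_right, hφe]
        simp only [smul_eq_mul]; ring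
      have hwne : ∀ a : F, a • e ≠ w := by
        intro a hae
        have h1 : (2:F) • x1 = (a + polar n e x1) • e := by
          rw [add_smul, hae, hw]; abel
        apply hx1 ((2:F)⁻¹ * (a + polar n e x1))
        calc ((2:F)⁻¹ * (a + polar n e x1)) • e = (2:F)⁻¹ • ((a + polar n e x1) • e) := by
              rw [mul_smul]
          _ = (2:F)⁻¹ • ((2:F) • x1) := by rw [h1]
          _ = x1 := by rw [smul_smul, inv_mul_cancel₀ hchar, one_smul]
      obtain ⟨B, hB0, hB1⟩ := aux_basis' hS2 he hwne
      have hrepr2 := aux_repr B hB0 hB1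
      have hwnz : w ≠ 0 := fun h => hwne 0 (by rw [h, zero_smul])
      have hnw : n w ≠ 0 := by
        intro h0
        apply hwnz
        apply hnondeg w
        intro y
        obtain ⟨p, q, hy⟩ := hrepr2 y
        rw [hy, polar_add_right, polar_smul_right, polar_smul_right,
          polar_comm (⇑n) w e, hφw, polar_self, h0]
        simp
      obtain ⟨p, c, hLw⟩ := hrepr2 (mul e w)
      have hp0 : p = 0 := by
        have h := hphiL w
        rw [hLw, hφw, polar_add_right, polar_smul_right, polar_smul_right, hφe, hφw] at h
        simp only [smul_eq_mul, mul_zero, add_zero] at h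
        exact (mul_eq_zero.1 h).resolve_right hchar
      rw [hp0, zero_smul, zero_add] at hLw
      have hc2 : c * c = 1 := by
        have h := hcomp e w
        rw [hne1, one_mul, hLw, QuadraticMap.map_smul] at h
        simp only [smul_eq_mul] at h
        exact mul_right_cancel₀ hnw (by rw [h, one_mul])
      have hc0 : c ≠ 0 := by
        intro h; rw [h, mul_zero] at hc2; exact zero_ne_one hc2
      have hRw : mul w e = c⁻¹ • w := by
        have h := hRL w
        rw [hLw, _root_.map_smul mul c w, LinearMap.smul_apply] at h
        calc mul w e = (c⁻¹ * c) • mul w e := by rw [inv_mul_cancel₀ hc0, one_smul]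
          _ = c⁻¹ • (c • mul w e) := by rw [mul_smul]
          _ = c⁻¹ • w := by rw [h]
      have hcm1 : c = -1 := by
        have h := hrel2 w
        rw [hφw, zero_smul, hRw, _root_.map_smul mul, LinearMap.smul_apply, hRw, hLw] at h
        have h' : (c⁻¹ * c⁻¹ + c) • w = 0 := by
          rw [add_smul, ← smul_smul]; exact h
        have h0 : c⁻¹ * c⁻¹ + c = 0 := by
          rcases smul_eq_zero.1 h' with h | h
          · exact h
          · exact absurd h hwnz
        have hcinv : c⁻¹ = c := by
          field_simp
          linear_combination -hc2
        rw [hcinv, hc2] at h0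
        linear_combination h0
      intro x
      obtain ⟨r, s, hx⟩ := hrepr2 x
      rw [hx, map_add (mul e), _root_.map_smul (mul e), _root_.map_smul (mul e),
        hee, hLw, hcm1, polar_add_right, polar_smul_right, polar_smul_right, hφe, hφw]
      match_scalars <;> (try simp only [smul_eq_mul]) <;> ring
  intro x
  refine ⟨goal1 x, ?_⟩
  apply hsub
  intro z
  rw [hassoc x e z, goal1 z, polar_sub_right, polar_smul_right, polar_sub_left,
    polar_smul_left, polar_comm (⇑n) x e]
  simp only [smul_eq_mul]
  ring



theorem autK_classify {F K : Type u} [Field F] [CommRing K] [Algebra F K]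
    [Algebra.FormallyEtale F K] (hK2 : Module.finrank F K = 2) :
    ∃ σ : K ≃ₐ[F] K, σ ≠ 1 ∧ ∀ g : K ≃ₐ[F] K, g = 1 ∨ g = σ := by
  classical
  have hnt : Nontrivial K := by
    rcases subsingleton_or_nontrivial K with h | h
    · exact absurd (Module.finrank_zero_of_subsingleton (R := F) (M := K)) (by omega)
    · exact h
  obtain ⟨k, hk⟩ := aux_exists_indep hK2 (1 : K)
  obtain ⟨B, hB0, hB1⟩ := aux_basis' hK2 (one_ne_zero) hk
  have hrepr := aux_repr B hB0 hB1
  have hcoef := fun {p q r s : F} h => aux_coef B hB0 hB1 (p := p) (q := q) (r := r) (s := s) h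
  obtain ⟨m, t, hkk⟩ := hrepr (k * k)
  -- product formula
  have hprod : ∀ p q r s : F, (p • (1:K) + q • k) * (r • (1:K) + s • k)
      = (p*r + q*s*m) • (1:K) + (p*s + q*r + q*s*t) • k := by
    intro p q r s
    have expand : (p • (1:K) + q • k) * (r • (1:K) + s • k)
        = (p*r) • (1:K) + (p*s + q*r) • k + (q*s) • (k*k) := by
      rw [add_mul, mul_add, mul_add, smul_mul_smul_comm, smul_mul_smul_comm,
        smul_mul_smul_comm, smul_mul_smul_comm]
      simp only [one_mul, mul_one]
      module
    rw [expand, hkk]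
    module
  -- discriminant nonzero, via a nonzero derivation otherwise
  have hdisc : t*t + 4*m ≠ 0 := by
    intro hd0
    set w : K := (-t) • (1:K) + (2:F) • k with hw
    have hww : w * w = 0 := by
      rw [hw, hprod]
      have c1 : -t * -t + 2*2*m = (0:F) := by linear_combination hd0
      have c2 : -t*2 + 2*(-t) + 2*2*t = (0:F) := by ring
      rw [c1, c2, zero_smul, zero_smul, add_zero]
    set v : K := if w = 0 then (1:K) else w with hv
    have hvne : v ≠ 0 := by
      rw [hv]; split
      · exact one_ne_zero
      · assumption
    have hwv : w * v = 0 := by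
      rw [hv]; split
      · rename_i h; rw [h, zero_mul]
      · exact hww
    have hkv : t • v = (2:F) • (k * v) := by
      have h0 : ((-t) • (1:K) + (2:F) • k) * v = 0 := by rw [← hw]; exact hwv
      rw [add_mul, smul_mul_assoc, smul_mul_assoc, one_mul] at h0
      linear_combination (norm := module) (-1 : F) • h0
    set f : K →ₗ[F] K := B.constr F ![0, v] with hf
    have hf1 : f (1:K) = 0 := by
      rw [hf, ← hB0]; simpa using B.constr_basis F ![0, v] 0
    have hfk : f k = v := by
      rw [hf, ← hB1]; simpa using B.constr_basis F ![0, v] 1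
    have hfval : ∀ p q : F, f (p • (1:K) + q • k) = q • v := by
      intro p q
      rw [map_add, _root_.map_smul, _root_.map_smul, hf1, hfk, smul_zero, zero_add]
    have hleib : ∀ x y : K, f (x * y) = x • f y + y • f x := by
      intro x y
      obtain ⟨p, q, hx⟩ := hrepr x
      obtain ⟨r, s, hy⟩ := hrepr y
      rw [hx, hy, hprod, hfval, hfval, hfval, smul_eq_mul, smul_eq_mul,
        mul_smul_comm, mul_smul_comm, add_mul, add_mul,
        smul_mul_assoc, smul_mul_assoc, smul_mul_assoc, smul_mul_assoc,
        one_mul]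
      linear_combination (norm := module) (q*s) • hkv
    let D : Derivation F K K :=
      { toLinearMap := f, map_one_eq_zero' := hf1, leibniz' := hleib }
    have hDk : D k = 0 := by
      have h1 : (KaehlerDifferential.D F K) k = 0 := Subsingleton.elim _ _
      have h2 := D.liftKaehlerDifferential_comp_D k
      rw [h1, map_zero] at h2
      exact h2.symm
    exact hvne (by rw [← hfk]; exact hDk)
  -- construction of the nontrivial automorphism
  set σl : K →ₗ[F] K := B.constr F ![(1:K), t • (1:K) + (-1 : F) • k] with hσl
  have hσ1 : σl 1 = 1 := by
    rw [hσl, ← hB0]; simpa using B.constr_basis F ![(1:K), t • (1:K) + (-1 : F) • k] 0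
  have hσk : σl k = t • (1:K) + (-1 : F) • k := by
    rw [hσl, ← hB1]; simpa using B.constr_basis F ![(1:K), t • (1:K) + (-1 : F) • k] 1
  have hσval : ∀ p q : F, σl (p • (1:K) + q • k) = (p + q*t) • (1:K) + (-q) • k := by
    intro p q
    rw [map_add, _root_.map_smul, _root_.map_smul, hσ1, hσk]
    module
  have hσmul : ∀ x y : K, σl (x * y) = σl x * σl y := by
    intro x y
    obtain ⟨p, q, hx⟩ := hrepr x
    obtain ⟨r, s, hy⟩ := hrepr y
    rw [hx, hy, hprod, hσval, hσval, hσval, hprod]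
    match_scalars <;> ring
  have hσinv : ∀ x : K, σl (σl x) = x := by
    intro x
    obtain ⟨p, q, hx⟩ := hrepr x
    rw [hx, hσval, hσval]
    match_scalars <;> ring
  set σa : K →ₐ[F] K := AlgHom.ofLinearMap σl hσ1 hσmul with hσa
  have hσa_apply : ∀ x : K, σa x = σl x := fun x => rfl
  set σe : K ≃ₐ[F] K := AlgEquiv.ofAlgHom σa σa
    (AlgHom.ext fun x => hσinv x) (AlgHom.ext fun x => hσinv x) with hσe
  have hσe_apply : ∀ x : K, σe x = σl x := fun x => rfl
  have hext : ∀ g h : K ≃ₐ[F] K, g k = h k → g = h := by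
    intro g h hgh
    apply AlgEquiv.ext
    intro x
    obtain ⟨p, q, hx⟩ := hrepr x
    rw [hx, map_add, map_add, _root_.map_smul, _root_.map_smul, _root_.map_smul, _root_.map_smul,
      map_one, map_one, hgh]
  refine ⟨σe, ?_, ?_⟩
  · intro hcon
    have hc : σe k = (1 : K ≃ₐ[F] K) k := by rw [hcon]
    rw [hσe_apply, hσk, AlgEquiv.one_apply] at hc
    have hc' : t • (1:K) + (-1 : F) • k = (0:F) • (1:K) + (1:F) • k := by
      rw [hc]; module
    obtain ⟨h1, h2⟩ := hcoef hc'
    exact hdisc (by linear_combination t*h1 + (-2*m)*h2)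
  · intro g
    obtain ⟨a, b, hg⟩ := hrepr (g k)
    have hbne : b ≠ 0 := by
      intro hb0
      apply hk a
      apply g.injective
      rw [show g (a • (1:K)) = a • (1:K) by rw [_root_.map_smul, map_one], hg, hb0,
        zero_smul, add_zero]
    have E0 := map_mul g k k
    rw [hkk, map_add, _root_.map_smul, _root_.map_smul, map_one, hg, hprod] at E0
    have E0' : (m + t*a) • (1:K) + (t*b) • k
        = (a*a + b*b*m) • (1:K) + (a*b + b*a + b*b*t) • k := by
      rw [← E0]; module
    obtain ⟨e1, e2⟩ := hcoef E0'
    have key : b*b*(b*b-1)*(t*t+4*m) = 0 := by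
      linear_combination (-4*b*b)*e1 + (-(2*t*b*b + t*b - a*b - b*a - b*b*t))*e2
    have hb2 : b*b - 1 = 0 := by
      rcases mul_eq_zero.1 key with h | h
      · rcases mul_eq_zero.1 h with h' | h'
        · exact absurd h' (mul_ne_zero hbne hbne)
        · exact h'
      · exact absurd h hdisc
    have ha : a = 0 ∨ a = t := by
      have haa : a * (a - t) = 0 := by linear_combination -e1 - m*hb2
      rcases mul_eq_zero.1 haa with h | h
      · exact Or.inl h
      · exact Or.inr (sub_eq_zero.1 h)
    have hb2' : b = 1 ∨ b = -1 := mul_self_eq_one_iff.1 (by linear_combination hb2)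
    rcases hb2' with hb1 | hbm
    · rw [hb1] at hg e2
      have h2a : a + a = 0 := by linear_combination -e2
      rcases ha with ha0 | hat
      · left
        apply hext
        rw [hg, ha0, AlgEquiv.one_apply, zero_smul, one_smul, zero_add]
      · rcases eq_or_ne t 0 with ht0 | htn
        · left
          apply hext
          rw [hg, hat, ht0, AlgEquiv.one_apply, zero_smul, one_smul, zero_add]
        · right
          apply hext
          rw [hg, hat, hσe_apply, hσk]
          have h2 : (2:F) = 0 := by
            rw [hat] at h2a
            exact mul_left_cancel₀ htn (by linear_combination h2a)
          have hneg : (1:F) = -1 := by linear_combination h2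
          rw [← hneg]
    · rw [hbm] at hg e2
      rcases ha with ha0 | hat
      · have h2t : t + t = 0 := by
          rw [ha0] at e2
          linear_combination -e2
        rcases eq_or_ne t 0 with ht0 | htn
        · right
          apply hext
          rw [hg, ha0, hσe_apply, hσk, ht0]
        · left
          apply hext
          have h2 : (2:F) = 0 := mul_left_cancel₀ htn (by linear_combination h2t)
          have hneg : (-1:F) = 1 := by linear_combination -h2
          rw [hg, ha0, hneg, AlgEquiv.one_apply, zero_smul, one_smul, zero_add]
      · right
        apply hext
        rw [hg, hat, hσe_apply, hσk]

end AuxHelpers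

/-- The automorphism group of a two-dimensional étale quadratic
`F`-algebra is cyclic of order 2, hence contains no element of order 3; therefore
every idempotent of a 2-dimensional symmetric composition algebra is a para-unit. -/
theorem quadratic_etale_aut_and_paraunit
    {F K : Type u} {S : Type*} [Field F] [CommRing K] [Algebra F K]
    [Algebra.FormallyEtale F K]
    (hK2 : Module.finrank F K = 2)
    [AddCommGroup S] [Module F S]
    (mul : S →ₗ[F] S →ₗ[F] S)
    (n : QuadraticForm F S)
    (hcomp : ∀ x y : S, n (mul x y) = n x * n y)
    (hnondeg : ∀ x : S, (∀ y : S, polar n x y = 0) → x = 0)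
    (hassoc : ∀ x y z : S, polar n (mul x y) z = polar n x (mul y z))
    (hS2 : Module.finrank F S = 2)
    (e : S) (he : e ≠ 0) (hee : mul e e = e) :
    (IsCyclic (K ≃ₐ[F] K) ∧ Nat.card (K ≃ₐ[F] K) = 2 ∧
      ∀ g : K ≃ₐ[F] K, orderOf g ≠ 3) ∧
    (∀ x : S, mul e x = polar n e x • e - x ∧ mul x e = polar n e x • e - x) := by
  obtain ⟨σ, hσ1, hσall⟩ := autK_classify hK2
  have hcard : Nat.card (K ≃ₐ[F] K) = 2 := by
    rw [Nat.card_eq_two_iff]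
    refine ⟨1, σ, Ne.symm hσ1, ?_⟩
    ext g
    simp only [Set.mem_insert_iff, Set.mem_singleton_iff, Set.mem_univ, iff_true]
    exact hσall g
  have hfact : Fact (Nat.Prime 2) := ⟨Nat.prime_two⟩
  refine ⟨⟨isCyclic_of_prime_card hcard, hcard, ?_⟩,
    fun x => aux_paraunit mul n hcomp hnondeg hassoc hS2 e he hee x⟩
  intro g hg
  have hd := orderOf_dvd_natCard g
  rw [hcard, hg] at hd
  norm_num at hd
end

section
/- Let char F ≠ 3 and let K = F[X]/(X²+X+1) be the quadratic étale algebra generated by an element w with w² + w + 1 = 0. Then the para-quadratic algebra (K, •, n), where x•y = x̄·ȳ, has exactly three idempotents: 1, w, and w², and its automorphism group is the symmetric group S₃, acting by permuting these three idempotents. -/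
/-!
In the basis `1, w` the conjugation is `a + c w ↦ (a - c) - c w`, an `F`-algebra involution
fixing `1` and exchanging `w` and `w² = -1 - w`. The idempotent equation `x̄² = x` becomes
`a² - 2ac = a`, `c² - 2ac = c`, whose nonzero solutions (as `3 ≠ 0`) are `1`, `w`, `w²`.
Automorphisms of `•` permute these idempotents and are determined by the images of `1` and `w`.
Conversely, for an idempotent `u` (so `u³ = 1` and `ū² = u`) both `x ↦ u x` and `x ↦ u x̄`
are automorphisms of `•`, and these six maps realise every permutation.
-/

open Module

section LinearAut

variable {R M : Type*} [Semiring R] [AddCommMonoid M] [Module R M]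

variable (R) in
def linearAutOf (op : M → M → M) : Subgroup (M ≃ₗ[R] M) where
  carrier := {f | ∀ x y, f (op x y) = op (f x) (f y)}
  one_mem' _ _ := rfl
  mul_mem' {f g} hf hg x y := by
    simp only [LinearEquiv.mul_apply, hg x y, hf (g x) (g y)]
  inv_mem' {f} hf x y := f.injective <| by simp [hf (f.symm x) (f.symm y)]

theorem mapsTo_of_mem_linearAutOf {op : M → M → M} {f : M ≃ₗ[R] M} (hf : f ∈ linearAutOf R op) :
    Set.MapsTo f {x | x ≠ 0 ∧ op x x = x} {x | x ≠ 0 ∧ op x x = x} :=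
  fun x ⟨hx0, hxx⟩ => ⟨by simpa using hx0, by rw [← hf, hxx]⟩

def permHomOfMapsTo (G : Subgroup (M ≃ₗ[R] M)) (S : Set M)
    (hS : ∀ f ∈ G, Set.MapsTo f S S) : G →* Equiv.Perm S where
  toFun f := Equiv.Perm.subtypePerm (f : M ≃ₗ[R] M).toEquiv fun x =>
    ⟨fun h => by simpa using hS _ (inv_mem f.2) h, fun h => hS f f.2 h⟩
  map_one' := rfl
  map_mul' _ _ := rfl

theorem permHomOfMapsTo_injective {G : Subgroup (M ≃ₗ[R] M)} {S : Set M}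
    (hS : ∀ f ∈ G, Set.MapsTo f S S) (hspan : Submodule.span R S = ⊤) :
    Function.Injective (permHomOfMapsTo G S hS) := fun _ _ hfg =>
  Subtype.ext <| LinearEquiv.toLinearMap_injective <| LinearMap.ext_on hspan fun x hx =>
    congrArg Subtype.val (Equiv.ext_iff.mp hfg ⟨x, hx⟩)

end LinearAut

theorem Equiv.Perm.eq_of_apply_eq_of_apply_eq {α : Type*} {x y z : α}
    (hα : ∀ t, t = x ∨ t = y ∨ t = z) {σ τ : Equiv.Perm α} (hx : σ x = τ x) (hy : σ y = τ y) :
    σ = τ := by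
  set ρ := τ⁻¹ * σ
  have hρx : ρ x = x := by simp [ρ, hx]
  have hρy : ρ y = y := by simp [ρ, hy]
  have hρz : ρ z = z := by
    rcases hα (ρ z) with h | h | h
    · rw [h, ← ρ.injective (h.trans hρx.symm)]
    · rw [h, ← ρ.injective (h.trans hρy.symm)]
    · exact h
  have hρ : ρ = 1 := by
    ext t
    rcases hα t with rfl | rfl | rfl <;> assumption
  exact (inv_mul_eq_one.mp hρ).symm

section ParaMul

variable {F K : Type*} [CommSemiring F] [CommRing K] [Algebra F K]

def paraMul (σ : K ≃ₐ[F] K) (x y : K) : K := σ x * σ y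

theorem toLinearEquiv_mem_linearAutOf_paraMul (σ : K ≃ₐ[F] K) :
    σ.toLinearEquiv ∈ linearAutOf F (paraMul σ) := fun _ _ => map_mul σ _ _

/-- `σ (u x) * σ (u y) = (σ u)² * σ x * σ y`. -/
theorem mulLeftLinearEquiv_mem_linearAutOf_paraMul (σ : K ≃ₐ[F] K) {u : Kˣ}
    (hu : paraMul σ u u = u) : u.mulLeftLinearEquiv F K ∈ linearAutOf F (paraMul σ) := by
  intro x y
  simp only [paraMul, Units.mulLeftLinearEquiv_apply, map_mul] at hu ⊢
  linear_combination -(σ x * σ y) * hu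

end ParaMul

namespace ParaQuadratic

theorem idempotent_coords_cases {R : Type*} [CommRing R] [NoZeroDivisors R] (h3 : (3 : R) ≠ 0)
    {a c : R} (ha : a * a - 2 * a * c = a) (hc : c * c - 2 * a * c = c) :
    (a = 0 ∧ c = 0) ∨ (a = 1 ∧ c = 0) ∨ (a = 0 ∧ c = 1) ∨ (a = -1 ∧ c = -1) := by
  have hd : (a - c) * (a + c - 1) = 0 := by linear_combination ha - hc
  rcases mul_eq_zero.mp hd with hac | hac
  · have hca : c = a := by linear_combination -hac
    subst hca
    have : c * (c + 1) = 0 := by linear_combination -ha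
    rcases mul_eq_zero.mp this with h | h
    · exact Or.inl ⟨h, h⟩
    · have : c = -1 := by linear_combination h
      exact Or.inr <| Or.inr <| Or.inr ⟨this, this⟩
  · have : 3 * (a * (a - 1)) = 0 := by linear_combination ha + 2 * a * hac
    rcases mul_eq_zero.mp ((mul_eq_zero.mp this).resolve_left h3) with h | h
    · exact Or.inr <| Or.inr <| Or.inl ⟨h, by linear_combination hac - h⟩
    · exact Or.inr <| Or.inl ⟨by linear_combination h, by linear_combination hac - h⟩

variable {F K : Type*} [Field F] [CommRing K] [Algebra F K] {w : K} {b : Basis (Fin 2) F K}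

theorem w_mul_w_eq (hw : w ^ 2 + w + 1 = 0) : w * w = -1 - w := by
  linear_combination hw

theorem w_mul_w_mul_w_eq_one (hw : w ^ 2 + w + 1 = 0) : w * (w * w) = 1 := by
  linear_combination (w - 1) * hw

theorem coe_basis (hb0 : b 0 = 1) (hb1 : b 1 = w) : ⇑b = ![1, w] := by
  ext i; fin_cases i <;> simp [hb0, hb1]

theorem exists_eq_smul_one_add_smul (hb0 : b 0 = 1) (hb1 : b 1 = w) (x : K) :
    ∃ a c : F, x = a • 1 + c • w :=
  ⟨b.repr x 0, b.repr x 1, (b.sum_repr x).symm.trans (by rw [Fin.sum_univ_two, hb0, hb1])⟩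

theorem eq_zero_of_smul_one_add_smul_eq_zero (hb0 : b 0 = 1) (hb1 : b 1 = w) {a c : F}
    (h : a • (1 : K) + c • w = 0) : a = 0 ∧ c = 0 :=
  LinearIndependent.pair_iff.mp (coe_basis hb0 hb1 ▸ b.linearIndependent) a c h

theorem trace_one (b : Basis (Fin 2) F K) : Algebra.trace F K 1 = 2 := by
  simpa [two_smul, one_add_one_eq_two] using Algebra.trace_algebraMap_of_basis b (1 : F)

theorem trace_w (hw : w ^ 2 + w + 1 = 0) (hb0 : b 0 = 1) (hb1 : b 1 = w) :
    Algebra.trace F K w = -1 := by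
  have hw0 : w * b 0 = b 1 := by rw [hb0, hb1, mul_one]
  have hw1 : w * b 1 = -b 0 - b 1 := by rw [hb0, hb1]; exact w_mul_w_eq hw
  rw [Algebra.trace_eq_matrix_trace b, Matrix.trace_fin_two, Algebra.leftMulMatrix_eq_repr_mul,
    Algebra.leftMulMatrix_eq_repr_mul, hw0, hw1]
  simp

variable (F K) in
noncomputable def traceReflection : K →ₗ[F] K := (Algebra.trace F K).smulRight 1 - LinearMap.id

theorem traceReflection_apply (x : K) :
    traceReflection F K x = Algebra.trace F K x • 1 - x := rfl

theorem traceReflection_one (b : Basis (Fin 2) F K) : traceReflection F K 1 = 1 := by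
  rw [traceReflection_apply, trace_one b, two_smul, add_sub_cancel_right]

theorem traceReflection_w (hw : w ^ 2 + w + 1 = 0) (hb0 : b 0 = 1) (hb1 : b 1 = w) :
    traceReflection F K w = w * w := by
  rw [traceReflection_apply, trace_w hw hb0 hb1, neg_one_smul, w_mul_w_eq hw]

theorem traceReflection_w_mul_w (hw : w ^ 2 + w + 1 = 0) (hb0 : b 0 = 1) (hb1 : b 1 = w) :
    traceReflection F K (w * w) = w := by
  rw [w_mul_w_eq hw, map_sub, map_neg, traceReflection_one b, traceReflection_w hw hb0 hb1]
  linear_combination -hw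

theorem traceReflection_mul (hw : w ^ 2 + w + 1 = 0) (hb0 : b 0 = 1) (hb1 : b 1 = w) (x y : K) :
    traceReflection F K (x * y) = traceReflection F K x * traceReflection F K y := by
  have h := LinearMap.ext_basis (B := (LinearMap.mul F K).compr₂ (traceReflection F K))
    (B' := (LinearMap.mul F K).compl₁₂ (traceReflection F K) (traceReflection F K)) b b
    fun i j => by
      fin_cases i <;> fin_cases j <;>
        simp [hb0, hb1, traceReflection_one b, traceReflection_w hw hb0 hb1,
          traceReflection_w_mul_w hw hb0 hb1]
      linear_combination (w - w ^ 2) * hw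
  exact LinearMap.congr_fun₂ h x y

theorem traceReflection_involutive (hw : w ^ 2 + w + 1 = 0) (hb0 : b 0 = 1) (hb1 : b 1 = w) :
    Function.Involutive (traceReflection F K) := by
  have h : traceReflection F K ∘ₗ traceReflection F K = LinearMap.id := b.ext fun i => by
    fin_cases i <;> simp [hb0, hb1, traceReflection_one b, traceReflection_w hw hb0 hb1,
      traceReflection_w_mul_w hw hb0 hb1]
  exact LinearMap.congr_fun h

noncomputable def conj (hw : w ^ 2 + w + 1 = 0) (hb0 : b 0 = 1) (hb1 : b 1 = w) : K ≃ₐ[F] K :=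
  AlgEquiv.ofLinearEquiv
    (LinearEquiv.ofInvolutive (traceReflection F K) (traceReflection_involutive hw hb0 hb1))
    (traceReflection_one b) (traceReflection_mul hw hb0 hb1)

theorem conj_apply (hw : w ^ 2 + w + 1 = 0) (hb0 : b 0 = 1) (hb1 : b 1 = w) (x : K) :
    conj hw hb0 hb1 x = Algebra.trace F K x • 1 - x := rfl

theorem conj_w (hw : w ^ 2 + w + 1 = 0) (hb0 : b 0 = 1) (hb1 : b 1 = w) :
    conj hw hb0 hb1 w = w * w :=
  traceReflection_w hw hb0 hb1

theorem conj_w_mul_w (hw : w ^ 2 + w + 1 = 0) (hb0 : b 0 = 1) (hb1 : b 1 = w) :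
    conj hw hb0 hb1 (w * w) = w :=
  traceReflection_w_mul_w hw hb0 hb1

theorem one_ne_w (hb0 : b 0 = 1) (hb1 : b 1 = w) : (1 : K) ≠ w := by
  rw [← hb0, ← hb1]
  exact b.injective.ne Fin.zero_ne_one

theorem ncard_eq_three (hw : w ^ 2 + w + 1 = 0) (hb0 : b 0 = 1) (hb1 : b 1 = w) :
    ({1, w, w * w} : Set K).ncard = 3 := by
  have h1w := one_ne_w hb0 hb1
  have hw3 := w_mul_w_mul_w_eq_one hw
  refine Set.ncard_eq_three.mpr ⟨1, w, w * w, h1w, fun h => h1w ?_, fun h => h1w ?_, rfl⟩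
  · rw [← hw3, ← h, mul_one]
  · rw [← hw3, ← h, ← h]

theorem cube_eq_one_of_mem (hw : w ^ 2 + w + 1 = 0) {u : K} (hu : u ∈ ({1, w, w * w} : Set K)) :
    u * (u * u) = 1 := by
  have hw3 := w_mul_w_mul_w_eq_one hw
  rcases hu with rfl | rfl | rfl
  · simp
  · exact hw3
  · linear_combination (w * (w * w) + 1) * hw3

theorem eq_mul_w_or_eq_mul_w_mul_w (hw : w ^ 2 + w + 1 = 0) {u v : K}
    (hu : u ∈ ({1, w, w * w} : Set K)) (hv : v ∈ ({1, w, w * w} : Set K)) (huv : u ≠ v) :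
    v = u * w ∨ v = u * (w * w) := by
  have hw3 := w_mul_w_mul_w_eq_one hw
  rcases hu with rfl | rfl | rfl <;> rcases hv with rfl | rfl | rfl <;> grind

theorem paraMul_conj_smul_one_add_smul_self (hw : w ^ 2 + w + 1 = 0) (hb0 : b 0 = 1)
    (hb1 : b 1 = w) (a c : F) :
    paraMul (conj hw hb0 hb1) (a • 1 + c • w) (a • 1 + c • w) - (a • 1 + c • w) =
      (a * a - 2 * a * c - a) • (1 : K) + (c * c - 2 * a * c - c) • w := by
  simp only [paraMul, map_add, map_smul, map_one, conj_w hw hb0 hb1]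
  simp only [Algebra.smul_def, mul_one, map_sub, map_mul, map_ofNat]
  linear_combination (2 * algebraMap F K a * algebraMap F K c +
    algebraMap F K c * algebraMap F K c * (w ^ 2 - w)) * hw

theorem ne_zero_and_paraMul_conj_self_of_mem (hw : w ^ 2 + w + 1 = 0) (hb0 : b 0 = 1)
    (hb1 : b 1 = w) {x : K} (hx : x ∈ ({1, w, w * w} : Set K)) :
    x ≠ 0 ∧ paraMul (conj hw hb0 hb1) x x = x := by
  refine ⟨fun h0 => b.ne_zero 0 ?_, ?_⟩
  · rw [hb0, ← cube_eq_one_of_mem hw hx, h0, zero_mul]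
  · rcases hx with h | h | h <;> rw [h] <;> simp only [paraMul, map_one, mul_one,
      conj_w hw hb0 hb1, conj_w_mul_w hw hb0 hb1]
    linear_combination (w ^ 2 - w) * hw

theorem setOf_paraMul_conj_self_eq (h3 : (3 : F) ≠ 0) (hw : w ^ 2 + w + 1 = 0) (hb0 : b 0 = 1)
    (hb1 : b 1 = w) :
    {x | x ≠ 0 ∧ paraMul (conj hw hb0 hb1) x x = x} = ({1, w, w * w} : Set K) := by
  refine Set.Subset.antisymm ?_ fun x hx => ne_zero_and_paraMul_conj_self_of_mem hw hb0 hb1 hx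
  rintro x ⟨hx0, hxx⟩
  obtain ⟨a, c, rfl⟩ := exists_eq_smul_one_add_smul hb0 hb1 x
  have hcoord := eq_zero_of_smul_one_add_smul_eq_zero hb0 hb1 <|
    (paraMul_conj_smul_one_add_smul_self hw hb0 hb1 a c).symm.trans (sub_eq_zero.mpr hxx)
  rcases idempotent_coords_cases h3 (sub_eq_zero.mp hcoord.1) (sub_eq_zero.mp hcoord.2) with
    ⟨rfl, rfl⟩ | ⟨rfl, rfl⟩ | ⟨rfl, rfl⟩ | ⟨rfl, rfl⟩
  · simp at hx0
  · simp
  · simp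
  · simp [w_mul_w_eq hw, sub_eq_add_neg]

theorem exists_mem_linearAutOf_apply_one_apply_w (hw : w ^ 2 + w + 1 = 0) (hb0 : b 0 = 1)
    (hb1 : b 1 = w) {u v : K} (hu : u ∈ ({1, w, w * w} : Set K))
    (hv : v ∈ ({1, w, w * w} : Set K)) (huv : u ≠ v) :
    ∃ f ∈ linearAutOf F (paraMul (conj hw hb0 hb1)), f 1 = u ∧ f w = v := by
  set σ := conj hw hb0 hb1
  let U : Kˣ := Units.mkOfMulEqOne u (u * u) (cube_eq_one_of_mem hw hu)
  have hU : U.mulLeftLinearEquiv F K ∈ linearAutOf F (paraMul σ) :=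
    mulLeftLinearEquiv_mem_linearAutOf_paraMul σ
      (ne_zero_and_paraMul_conj_self_of_mem hw hb0 hb1 hu).2
  rcases eq_mul_w_or_eq_mul_w_mul_w hw hu hv huv with rfl | rfl
  · exact ⟨_, hU, mul_one u, rfl⟩
  · refine ⟨_, mul_mem hU (toLinearEquiv_mem_linearAutOf_paraMul σ), ?_, ?_⟩
    · simp [U]
    · simp [U, σ, conj_w hw hb0 hb1]

theorem permHomOfMapsTo_surjective (hw : w ^ 2 + w + 1 = 0) (hb0 : b 0 = 1) (hb1 : b 1 = w)
    (hS : ∀ f ∈ linearAutOf F (paraMul (conj hw hb0 hb1)),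
      Set.MapsTo f ({1, w, w * w} : Set K) {1, w, w * w}) :
    Function.Surjective (permHomOfMapsTo _ _ hS) := by
  intro τ
  let one : ({1, w, w * w} : Set K) := ⟨1, by simp⟩
  let w' : ({1, w, w * w} : Set K) := ⟨w, by simp⟩
  obtain ⟨f, hf, hf1, hfw⟩ := exists_mem_linearAutOf_apply_one_apply_w hw hb0 hb1 (τ one).2
    (τ w').2 fun h => one_ne_w hb0 hb1 (congrArg Subtype.val (τ.injective (Subtype.ext h)))
  refine ⟨⟨f, hf⟩, Equiv.Perm.eq_of_apply_eq_of_apply_eq (x := one) (y := w')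
    (z := ⟨w * w, by simp⟩) ?_ (Subtype.ext hf1) (Subtype.ext hfw)⟩
  rintro ⟨t, rfl | rfl | rfl⟩ <;> simp [one, w']

theorem span_eq_top (hb0 : b 0 = 1) (hb1 : b 1 = w) :
    Submodule.span F ({1, w, w * w} : Set K) = ⊤ :=
  eq_top_mono (Submodule.span_mono (by simp [Set.range_subset_iff, Fin.forall_fin_two, hb0, hb1]))
    b.span_eq

end ParaQuadratic

open ParaQuadratic in
/-- For `char F ≠ 3` and `K = F[X]/(X²+X+1) = F·1 ⊕ F·w`, the
para-quadratic algebra `x•y = x̄·ȳ` has exactly three idempotents `1, w, w²`,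
and its automorphism group is the symmetric group `S₃` permuting these three
idempotents. -/
theorem paraquadratic_idempotents_and_S3
    {F K : Type*} [Field F] [CommRing K] [Algebra F K]
    (hchar : (3 : F) ≠ 0)
    (w : K) (hw : w ^ 2 + w + 1 = 0)
    (b : Module.Basis (Fin 2) F K) (hb0 : b 0 = 1) (hb1 : b 1 = w)
    (bar : K → K) (hbar : ∀ x, bar x = (Algebra.trace F K x) • (1 : K) - x)
    (bullet : K → K → K) (hbullet : ∀ x y, bullet x y = bar x * bar y) :
    {x : K | x ≠ 0 ∧ bullet x x = x} = {1, w, w * w} ∧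
    ({1, w, w * w} : Set K).ncard = 3 ∧
    ∃ G : Subgroup (K ≃ₗ[F] K),
      (G : Set (K ≃ₗ[F] K)) =
        {f : K ≃ₗ[F] K | ∀ x y : K, f (bullet x y) = bullet (f x) (f y)} ∧
      ∃ Φ : G ≃* Equiv.Perm ({1, w, w * w} : Set K),
        ∀ (f : G) (x : ({1, w, w * w} : Set K)),
          ((Φ f) x : K) = (f : K ≃ₗ[F] K) (x : K) := by
  obtain rfl : bar = conj hw hb0 hb1 :=
    funext fun x => (hbar x).trans (conj_apply hw hb0 hb1 x).symm
  obtain rfl : bullet = paraMul (conj hw hb0 hb1) := funext₂ hbullet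
  have hidem := setOf_paraMul_conj_self_eq hchar hw hb0 hb1
  have hS : ∀ f ∈ linearAutOf F (paraMul (conj hw hb0 hb1)),
      Set.MapsTo f ({1, w, w * w} : Set K) {1, w, w * w} :=
    hidem ▸ fun _ hf => mapsTo_of_mem_linearAutOf hf
  refine ⟨hidem, ncard_eq_three hw hb0 hb1, _, rfl,
    MulEquiv.ofBijective (permHomOfMapsTo _ _ hS) ⟨?_, permHomOfMapsTo_surjective hw hb0 hb1 hS⟩,
    fun _ _ => rfl⟩
  exact permHomOfMapsTo_injective hS (span_eq_top hb0 hb1)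
end

section
/- Let (C, ·, n) be a Cayley algebra over a field F of characteristic ≠ 3, and let w ∈ C \ F·1 with w² + w + 1 = 0. Then the fixed subalgebra of the order 3 automorphism τ_w : x ↦ w·x·w² equals F·1 + F·w. In particular, for x orthogonal to F·1 + F·w one has τ_w(x) = x·w ≠ x. -/
open QuadraticMap

/-- In a Cayley algebra over a field of characteristic ≠ 3, for
`w ∉ F·1` with `w² + w + 1 = 0`, the fixed subalgebra of `τ_w : x ↦ w·x·w²`
equals `F·1 + F·w`; and for `x ≠ 0` orthogonal to `F·1 + F·w` one has
`τ_w(x) = x·w ≠ x`. -/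
theorem fix_tau_w_char_not_three
    {F C : Type*} [Field F] [AddCommGroup C] [Module F C]
    (hchar : (3 : F) ≠ 0)
    (mul : C →ₗ[F] C →ₗ[F] C) (one : C)
    (hone : ∀ x : C, mul one x = x ∧ mul x one = x)
    (n : QuadraticForm F C)
    (hcomp : ∀ x y : C, n (mul x y) = n x * n y)
    (hnondeg : ∀ x : C, (∀ y : C, polar n x y = 0) → x = 0)
    (hdim : Module.finrank F C = 8)
    (hla : ∀ x y : C, mul x (mul x y) = mul (mul x x) y)
    (hra : ∀ x y : C, mul (mul x y) y = mul x (mul y y))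
    (w : C) (hwnot : w ∉ Submodule.span F {one})
    (hw : mul w w + w + one = 0)
    (τ : C → C) (hτ : ∀ x, τ x = mul w (mul x (mul w w))) :
    {x : C | τ x = x} = (Submodule.span F {one, w} : Submodule F C) ∧
    ∀ x : C, polar n x one = 0 → polar n x w = 0 →
      τ x = mul x w ∧ (x ≠ 0 → τ x ≠ x) := by
  -- basic bilinearity
  have mal : ∀ a b c : C, mul (a + b) c = mul a c + mul b c := by
    intro a b c; rw [_root_.map_add]; rfl
  have msl : ∀ (t : F) (a c : C), mul (t • a) c = t • mul a c := by
    intro t a c; rw [_root_.map_smul]; rfl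
  -- w² = -w - one
  have hmw2 : mul w w = -w - one := by
    have h := hw; rw [add_assoc, add_eq_zero_iff_eq_neg] at h
    rw [h]; abel
  -- n(one) = 1, one ≠ 0
  have hone0 : one ≠ 0 := by
    intro h
    apply hwnot
    have hw0 : w = 0 := by
      have h2 := (hone w).2; rw [h, map_zero] at h2; exact h2.symm
    rw [hw0]; exact Submodule.zero_mem _
  have hn1 : n one = 1 := by
    have h := hcomp one one; rw [(hone one).1] at h
    have hne : n one ≠ 0 := by
      intro h0
      have hy : ∀ y, n y = 0 := by
        intro y; have := hcomp one y; rwa [(hone y).1, h0, zero_mul] at this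
      have hw0 : w = 0 := hnondeg w (fun y => by simp [QuadraticMap.polar, hy])
      exact hwnot (hw0 ▸ Submodule.zero_mem _)
    have := mul_left_cancel₀ hne (by rw [mul_one, ← h] : n one * 1 = n one * n one)
    exact this.symm
  -- linearized composition identities
  have h1 : ∀ x y z : C, polar n (mul x y) (mul x z) = n x * polar n y z := by
    intro x y z
    simp only [QuadraticMap.polar, ← _root_.map_add (mul x), hcomp]
    ring
  have h3 : ∀ x u y z : C,
      polar n (mul x y) (mul u z) + polar n (mul u y) (mul x z)
        = polar n x u * polar n y z := by
    intro x u y z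
    have e := h1 (x + u) y z
    rw [mal x u y, mal x u z] at e
    rw [polar_add_left, polar_add_right, polar_add_right] at e
    have e1 := h1 x y z
    have e2 := h1 u y z
    have hn : n (x + u) = polar n x u + n x + n u := by
      simp only [QuadraticMap.polar]; ring
    rw [hn] at e
    linear_combination e - e1 - e2
  -- Cayley–Hamilton
  have hCH : ∀ x : C, mul x x = polar n x one • x - n x • one := by
    intro x
    have key : ∀ y : C, polar n (mul x x) y
        = polar n x one * polar n x y - n x * polar n one y := by
      intro y
      have e := h3 x one x y
      rw [(hone y).1, (hone x).1] at e
      have e2 : polar n x (mul x y) = n x * polar n one y := by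
        have := h1 x one y; rwa [(hone x).2] at this
      linear_combination e - e2
    have hz : mul x x - (polar n x one • x - n x • one) = 0 := by
      apply hnondeg
      intro y
      rw [polar_sub_left, polar_sub_left, polar_smul_left, polar_smul_left, key]
      simp only [smul_eq_mul]
      ring
    exact sub_eq_zero.mp hz
  -- linearized Cayley–Hamilton
  have hnadd : ∀ x y : C, n (x + y) = n x + n y + polar n x y := by
    intro x y; simp only [QuadraticMap.polar]; ring
  have hswap : ∀ x y : C, mul x y + mul y x
      = polar n y one • x + polar n x one • y - polar n x y • one := by
    intro x y
    have c1 : mul x y + mul y x = mul (x + y) (x + y) - mul x x - mul y y := by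
      rw [mal, _root_.map_add, _root_.map_add]; abel
    rw [c1, hCH, hCH, hCH, polar_add_left, hnadd]
    module
  -- scalar relation killer
  have hcd : ∀ c d : F, c • w = d • one → c = 0 ∧ d = 0 := by
    intro c d h
    have hc : c = 0 := by
      by_contra hc
      apply hwnot
      have hwe : w = (c⁻¹ * d) • one := by
        calc w = c⁻¹ • (c • w) := (inv_smul_smul₀ hc w).symm
        _ = c⁻¹ • (d • one) := by rw [h]
        _ = (c⁻¹ * d) • one := (mul_smul _ _ _).symm
      exact Submodule.mem_span_singleton.mpr ⟨c⁻¹ * d, hwe.symm⟩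
    refine ⟨hc, ?_⟩
    rw [hc, zero_smul] at h
    rcases smul_eq_zero.mp h.symm with h' | h'
    · exact h'
    · exact absurd h' hone0
  -- trace and norm of w
  have e := hCH w
  rw [hmw2] at e
  have e2 : (polar n w one + 1) • w = (n w - 1) • one := by
    rw [add_smul, sub_smul, one_smul, one_smul, sub_eq_iff_eq_add.mp e.symm]
    abel
  obtain ⟨hc0, hd0⟩ := hcd _ _ e2
  have hBw1 : polar n w one = -1 := eq_neg_of_add_eq_zero_left hc0
  have hnw : n w = 1 := sub_eq_zero.mp hd0
  -- w·w² = one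
  have ww2 : mul w (mul w w) = one := by
    rw [hmw2, _root_.map_sub, _root_.map_neg, (hone w).2, hmw2]; abel
  -- key part-2 lemma
  have key2 : ∀ z : C, polar n z one = 0 → polar n z w = 0 → τ z = mul z w := by
    intro z h1z h2z
    have hswzw := hswap z w
    rw [hBw1, h1z, h2z] at hswzw
    simp only [neg_smul, one_smul, zero_smul, add_zero, sub_zero] at hswzw
    have hzw : mul z w = -z - mul w z := eq_sub_iff_add_eq.mpr hswzw
    have hzw2 : mul z (mul w w) = mul w z := by
      rw [hmw2, _root_.map_sub, _root_.map_neg, (hone z).2, hzw]; abel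
    rw [hτ, hzw2, hla, hmw2]
    have hml : mul (-w - one) z = -(mul w z) - z := by
      have : (-w - one : C) = -w + -one := by abel
      rw [this, mal]
      have h4 : mul (-w) z = -(mul w z) := by rw [_root_.map_neg]; rfl
      have h5 : mul (-one) z = -z := by rw [_root_.map_neg]; simp [(hone z).1]
      rw [h4, h5]; abel
    rw [hml, hzw]; abel
  -- injectivity of right multiplication by (w - 1)
  have hinj : ∀ z : C, mul z w = z → z = 0 := by
    intro z hz
    have ha : mul z (w - one) = 0 := by
      rw [_root_.map_sub, (hone z).2, hz, sub_self]
    have hp : polar n (w - one) one = -3 := by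
      rw [polar_sub_left, hBw1, polar_self, hn1]
      norm_num
    have hna : n (w - one) = 3 := by
      have h6 : n (w - one) = n w + n (-one) + polar n w (-one) := by
        rw [sub_eq_add_neg, hnadd]
      rw [h6, QuadraticMap.map_neg, polar_neg_right, hBw1, hnw, hn1]
      norm_num
    have hCHa := hCH (w - one)
    rw [hp, hna] at hCHa
    have hfin : (3 : F) • z = 0 := by
      have step1 : (3 : F) • one = (-3 : F) • (w - one) - mul (w - one) (w - one) := by
        rw [hCHa]; abel
      calc (3 : F) • z = mul z ((3 : F) • one) := by rw [_root_.map_smul, (hone z).2]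
      _ = mul z ((-3 : F) • (w - one) - mul (w - one) (w - one)) := by rw [step1]
      _ = (-3 : F) • mul z (w - one) - mul (mul z (w - one)) (w - one) := by
          rw [_root_.map_sub, _root_.map_smul, hra]
      _ = 0 := by rw [ha]; simp
    rcases smul_eq_zero.mp hfin with h' | h'
    · exact absurd h' hchar
    · exact h'
  -- τ fixes one and w, and is linear
  have hτ1 : τ one = one := by rw [hτ, (hone (mul w w)).1, ww2]
  have hτw : τ w = w := by rw [hτ, ww2, (hone w).2]
  have hτadd : ∀ a b : C, τ (a + b) = τ a + τ b := by
    intro a b; simp only [hτ, _root_.map_add, LinearMap.add_apply]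
  have hτsmul : ∀ (c : F) (a : C), τ (c • a) = c • τ a := by
    intro c a; simp only [hτ, _root_.map_smul, LinearMap.smul_apply]
  constructor
  · ext x
    simp only [Set.mem_setOf_eq, SetLike.mem_coe]
    constructor
    · intro hx
      set a : F := (2 * polar n x one + polar n x w) / 3 with ha
      set b : F := (polar n x one + 2 * polar n x w) / 3 with hb
      set z : C := x - a • one - b • w with hzdef
      have hz1 : polar n z one = 0 := by
        rw [hzdef, polar_sub_left, polar_sub_left, polar_smul_left, polar_smul_left,
          polar_self, hn1, hBw1]
        simp only [smul_eq_mul, nsmul_eq_mul, Nat.cast_ofNat]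
        rw [ha, hb]; field_simp; ring
      have hz2 : polar n z w = 0 := by
        rw [hzdef, polar_sub_left, polar_sub_left, polar_smul_left, polar_smul_left,
          polar_self, hnw, polar_comm n one w, hBw1]
        simp only [smul_eq_mul, nsmul_eq_mul, Nat.cast_ofNat]
        rw [ha, hb]; field_simp; ring
      have hxz : x = a • one + b • w + z := by rw [hzdef]; abel
      have hτx2 : τ x = a • one + b • w + mul z w := by
        conv_lhs => rw [hxz]
        rw [hτadd, hτadd, hτsmul, hτsmul, hτ1, hτw, key2 z hz1 hz2]
      have hzz : mul z w = z := by
        have h7 : a • one + b • w + mul z w = a • one + b • w + z := by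
          rw [← hτx2, hx, hxz]
        exact add_left_cancel h7
      have hz0 : z = 0 := hinj z hzz
      exact Submodule.mem_span_pair.mpr ⟨a, b, by rw [hxz, hz0, add_zero]⟩
    · intro hx
      obtain ⟨c, d, hcd'⟩ := Submodule.mem_span_pair.mp hx
      rw [← hcd', hτadd, hτsmul, hτsmul, hτ1, hτw]
  · intro x h1x h2x
    refine ⟨key2 x h1x h2x, ?_⟩
    intro hx0 hτx
    exact hx0 (hinj x (by rw [← key2 x h1x h2x, hτx]))
end

section
/- Let (C, ·, n) be a Cayley algebra over a field F of characteristic 3 and let τ be an automorphism of C of order 3. Then the norm n of C is isotropic, hence C is the split Cayley algebra. -/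
open QuadraticMap

/-- A Cayley algebra over a field of characteristic 3 admitting an
automorphism of order 3 has isotropic norm, hence is the split Cayley algebra. -/
theorem char3_order3_implies_isotropic
    {F C : Type*} [Field F] [CharP F 3] [AddCommGroup C] [Module F C]
    (mul : C →ₗ[F] C →ₗ[F] C) (one : C)
    (hone : ∀ x : C, mul one x = x ∧ mul x one = x)
    (n : QuadraticForm F C)
    (hcomp : ∀ x y : C, n (mul x y) = n x * n y)
    (hnondeg : ∀ x : C, (∀ y : C, polar n x y = 0) → x = 0)
    (hdim : Module.finrank F C = 8)
    (τ : C → C) (hτlin : IsLinearMap F τ)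
    (hτmul : ∀ x y : C, τ (mul x y) = mul (τ x) (τ y))
    (hτbij : Function.Bijective τ)
    (hτ3 : ∀ x : C, τ (τ (τ x)) = x) (hτne : τ ≠ id) :
    ∃ x : C, x ≠ 0 ∧ n x = 0 := by
  -- basic characteristic facts
  have h3 : (3 : F) = 0 := by exact_mod_cast (CharP.cast_eq_zero F 3)
  have h2 : (2 : F) ≠ 0 := by
    intro h
    have : (1 : F) = 0 := by linear_combination h3 - h
    exact one_ne_zero this
  have hthree : ∀ v : C, v + v + v = 0 := by
    intro v
    have : ((3 : F)) • v = v + v + v := by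
      rw [show (3 : F) = 1 + 1 + 1 by norm_num, add_smul, add_smul, one_smul]
    rw [← this, h3, zero_smul]
  -- one ≠ 0
  have hone_ne : one ≠ 0 := by
    intro h
    have hall : ∀ x : C, x = 0 := by
      intro x
      have := (hone x).1
      rw [h] at this
      simpa using this.symm
    have : Subsingleton C := ⟨fun a b => by rw [hall a, hall b]⟩
    have h0 := Module.finrank_zero_of_subsingleton (R := F) (M := C)
    rw [hdim] at h0
    exact (by norm_num : (8 : ℕ) ≠ 0) h0
  -- Step 1 : polar multiplicativity
  have step1 : ∀ x y z : C, polar n (mul x y) (mul x z) = n x * polar n y z := by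
    intro x y z
    have hadd : mul x y + mul x z = mul x (y + z) := (map_add (mul x) y z).symm
    simp only [QuadraticMap.polar, hadd, hcomp]
    ring
  -- Step 2 : fully linearized identity
  have key2 : ∀ x w y z : C,
      polar n (mul x y) (mul w z) + polar n (mul w y) (mul x z)
        = polar n x w * polar n y z := by
    intro x w y z
    have hxw := step1 (x + w) y z
    have e2 : mul (x + w) y = mul x y + mul w y := by
      rw [map_add]; rfl
    have e3 : mul (x + w) z = mul x z + mul w z := by
      rw [map_add]; rfl
    rw [e2, e3, polar_add_left, polar_add_right, polar_add_right] at hxw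
    have e1 : n (x + w) = n x + n w + polar n x w := by
      simp only [QuadraticMap.polar]; ring
    rw [e1] at hxw
    have s1 := step1 x y z
    have s2 := step1 w y z
    linear_combination hxw - s1 - s2
  -- Step 3 : b(xy, w) + b(wy, x) = b(x,w) t(y)
  have bmul1 : ∀ x y w : C,
      polar n (mul x y) w + polar n (mul w y) x = polar n x w * polar n y one := by
    intro x y w
    have := key2 x w y one
    rwa [(hone x).2, (hone w).2] at this
  -- Step 4 : b(wx, x) = b(w,1) n(x)
  have bwx : ∀ x w : C, polar n (mul w x) x = polar n w one * n x := by
    intro x w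
    have h := key2 w one x x
    rw [(hone x).1] at h
    rw [polar_comm n x (mul w x)] at h
    have hxx : polar n x x = 2 * n x := by
      rw [polar_self n x, two_smul, two_mul]
    rw [hxx] at h
    have h' : 2 * polar n (mul w x) x = 2 * (polar n w one * n x) := by
      linear_combination h
    exact mul_left_cancel₀ h2 h'
  -- Step 5 : Cayley–Hamilton : x² = t(x) x - n(x) 1
  have CH : ∀ x : C, mul x x = polar n x one • x - n x • one := by
    intro x
    have hE : ∀ w : C, polar n (mul x x - (polar n x one • x - n x • one)) w = 0 := by
      intro w
      rw [polar_sub_left, polar_sub_left, polar_smul_left, polar_smul_left]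
      have h1 := bmul1 x x w
      have h2' := bwx x w
      have hc1 : polar n one w = polar n w one := polar_comm n one w
      rw [hc1]
      simp only [smul_eq_mul]
      linear_combination h1 - h2'
    have := hnondeg _ hE
    exact sub_eq_zero.mp this
  -- τ fixes one
  have hτone : τ one = one := by
    have hLid : ∀ z : C, mul (τ one) z = z := by
      intro z
      obtain ⟨y, hy⟩ := hτbij.2 z
      rw [← hy, ← hτmul]
      rw [(hone y).1]
    have := hLid one
    rwa [(hone (τ one)).2] at this
  -- τ preserves the norm
  have hτn : ∀ x : C, n (τ x) = n x := by
    intro x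
    by_cases hc : ∃ c : F, τ x = c • one
    · obtain ⟨c, hcx⟩ := hc
      have h1 : τ (c • one) = c • one := by
        rw [hτlin.map_smul, hτone]
      have hx : x = c • one := hτbij.1 (by rw [hcx, h1])
      rw [hcx, hx]
    · have e1 : mul (τ x) (τ x) = polar n x one • τ x - n x • one := by
        rw [← hτmul, CH x, hτlin.map_sub, hτlin.map_smul, hτlin.map_smul, hτone]
      have e2 : mul (τ x) (τ x)
          = polar n (τ x) one • τ x - n (τ x) • one := CH (τ x)
      have e4 : polar n x one • τ x - n x • one
          = polar n (τ x) one • τ x - n (τ x) • one := e1.symm.trans e2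
      have e3 : (polar n x one - polar n (τ x) one) • τ x
          = (n x - n (τ x)) • one := by
        rw [sub_smul, sub_smul]
        exact sub_eq_sub_iff_sub_eq_sub.mp e4
      by_cases hd : polar n x one - polar n (τ x) one = 0
      · rw [hd, zero_smul] at e3
        have hnn := (smul_eq_zero.mp e3.symm).resolve_right hone_ne
        exact (sub_eq_zero.mp hnn).symm
      · exfalso
        apply hc
        refine ⟨(polar n x one - polar n (τ x) one)⁻¹ * (n x - n (τ x)), ?_⟩
        rw [mul_smul, ← e3, smul_smul, inv_mul_cancel₀ hd, one_smul]
    -- end hτn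
  -- τ preserves the polar form
  have hτb : ∀ x y : C, polar n (τ x) (τ y) = polar n x y := by
    intro x y
    simp only [QuadraticMap.polar, ← hτlin.map_add, hτn]
  -- the nilpotent part
  set N : C → C := fun v => τ v - v with hN
  have hNsub : ∀ u w : C, τ (u - w) = τ u - τ w := fun u w => hτlin.map_sub u w
  have hN3 : ∀ v : C, N (N (N v)) = 0 := by
    intro v
    show τ (τ (τ v - v) - (τ v - v)) - (τ (τ v - v) - (τ v - v)) = 0
    rw [hNsub, hNsub, hNsub]
    have h1 := hthree (τ v)
    have h2' := hthree (τ (τ v))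
    have : τ (τ (τ v)) = v := hτ3 v
    -- expand and use three-torsion
    have expand : τ (τ (τ v)) - τ (τ v) - (τ (τ v) - τ v) - (τ (τ v) - τ v - (τ v - v))
        = (τ (τ (τ v)) - v) - ((τ (τ v) + τ (τ v) + τ (τ v)) - (τ v + τ v + τ v)) := by
      abel
    rw [expand, this, h1, h2']
    abel
  -- choose the isotropic vector
  obtain ⟨u0, hu0⟩ : ∃ u : C, τ u ≠ u := by
    by_contra h
    push_neg at h
    exact hτne (funext fun x => h x)
  have main : ∃ v : C, N v ≠ 0 ∧ τ (N v) = N v := by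
    by_cases hc : ∃ u : C, N (N u) ≠ 0
    · obtain ⟨u, hu⟩ := hc
      refine ⟨N u, hu, ?_⟩
      have h' : τ (N (N u)) - N (N u) = 0 := hN3 u
      exact sub_eq_zero.mp h'
    · push_neg at hc
      refine ⟨u0, ?_, ?_⟩
      · exact sub_ne_zero.mpr hu0
      · have := hc u0
        show τ (N u0) = N u0
        have h' : τ (N u0) - N u0 = 0 := this
        linear_combination (norm := abel) h'
  obtain ⟨v, hvne, hvfix⟩ := main
  refine ⟨N v, hvne, ?_⟩
  -- N v is fixed by τ and lies in the image of τ - 1, so it is isotropic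
  have hb0 : polar n (N v) (N v) = 0 := by
    have h1 : polar n (N v) (τ v) = polar n (N v) v := by
      calc polar n (N v) (τ v) = polar n (τ (N v)) (τ v) := by rw [hvfix]
        _ = polar n (N v) v := hτb (N v) v
    have : polar n (N v) (N v) = polar n (N v) (τ v) - polar n (N v) v := by
      rw [← polar_sub_right]
    rw [this, h1, sub_self]
  have h2n : (2 : F) * n (N v) = 0 := by
    have hps := polar_self n (N v)
    rw [hb0] at hps
    have : (0 : F) = 2 * n (N v) := by
      rw [hps, two_smul, two_mul]
    exact this.symm
  have := mul_eq_zero.mp h2n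
  exact this.resolve_left h2
end

section
/- Let (O, *, n) be the split Okubo algebra over a field F of characteristic 3, i.e., the Petersson algebra of the split Cayley algebra (C,·,n) with respect to τ_st: x*y = τ_st(x̄)·τ_st²(ȳ). Let e = 1 be the quaternionic idempotent and let R = Centr(e) ∩ Centr(e)^⊥. Then any element x ∈ R satisfies x*x = 0, and for every x ∈ R the element e + x is an idempotent of (O,*). -/
/-- The Zorn matrix algebra: elements `(α, u, v, β)` with `α, β ∈ F`, `u, v ∈ F³`. -/
abbrev Zorn (F : Type*) [Field F] := F × (Fin 3 → F) × (Fin 3 → F) × F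

/-- The Zorn matrix (vector matrix) multiplication. -/
def zornMul {F : Type*} [Field F] (x y : Zorn F) : Zorn F :=
  (x.1 * y.1 + dotProduct x.2.1 y.2.2.1,
   x.1 • y.2.1 + y.2.2.2 • x.2.1 - crossProduct x.2.2.1 y.2.2.1,
   y.1 • x.2.2.1 + x.2.2.2 • y.2.2.1 + crossProduct x.2.1 y.2.1,
   x.2.2.2 * y.2.2.2 + dotProduct x.2.2.1 y.2.1)

/-! Since `1 = e₁ + e₂` is the unit of the Zorn algebra and is fixed by `τ_st` and by conjugation,
`1 * y = τ_st²(ȳ)` and `y * 1 = τ_st(ȳ)`; hence `Centr(1)` consists of the `τ_st`-fixed elements,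
`a e₁ + c u + d v + b e₂`. Pairing with `e₁, e₂ ∈ Centr(1)` kills `a` and `b` on `Centr(1)^⊥`, so
`R = F u + F v`. There `x̄ = -x` and the Zorn product of such elements only produces multiples of `3`,
so `x * x = x · x = 0` and `(1 + x) * (1 + x) = (1 - x) · (1 - x) = 1 - 2x = 1 + x`. -/

lemma eq_const_of_comp_sub_one_eq {α : Type*} {u : Fin 3 → α} (h : (fun j => u (j - 1)) = u) :
    u = fun _ => u 0 := by
  have h₁ : u 1 = u 0 := by simpa using (congrFun h 1).symm
  have h₂ : u 2 = u 1 := by simpa using (congrFun h 2).symm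
  funext j; fin_cases j <;> simp [h₁, h₂]

namespace Zorn

variable {F : Type*} [Field F]

/-- `τ_st` -/
def shift (x : Zorn F) : Zorn F :=
  (x.1, fun j => x.2.1 (j - 1), fun j => x.2.2.1 (j - 1), x.2.2.2)

def conj (x : Zorn F) : Zorn F := (x.2.2.2, -x.2.1, -x.2.2.1, x.1)

def norm (x : Zorn F) : F := x.1 * x.2.2.2 - dotProduct x.2.1 x.2.2.1

/-- `a e₁ + c u + d v + b e₂`, with `u = u₁ + u₂ + u₃` and `v = v₁ + v₂ + v₃`. -/
def ofScalars (a c d b : F) : Zorn F := (a, fun _ => c, fun _ => d, b)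

lemma one_zornMul (z : Zorn F) : zornMul (1, 0, 0, 1) z = z := by
  simp [zornMul, dotProduct]

lemma zornMul_one (z : Zorn F) : zornMul z (1, 0, 0, 1) = z := by
  refine Prod.ext ?_ (Prod.ext ?_ (Prod.ext ?_ ?_))
  · simp [zornMul, dotProduct]
  · funext i; fin_cases i <;> simp [zornMul, cross_apply, Matrix.vecHead, Matrix.vecTail]
  · funext i; fin_cases i <;> simp [zornMul, cross_apply, Matrix.vecHead, Matrix.vecTail]
  · simp [zornMul, dotProduct]

lemma shift_one : shift ((1, 0, 0, 1) : Zorn F) = (1, 0, 0, 1) := rfl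

lemma conj_one : conj ((1, 0, 0, 1) : Zorn F) = (1, 0, 0, 1) := by
  simp [conj]

lemma shift_conj (x : Zorn F) : shift (conj x) = conj (shift x) := rfl

lemma shift_injective : Function.Injective (shift : Zorn F → Zorn F) := by
  intro x y h
  simp only [shift, Prod.mk.injEq] at h
  obtain ⟨h₁, hu, hv, h₂⟩ := h
  refine Prod.ext h₁ (Prod.ext ?_ (Prod.ext ?_ h₂)) <;> funext j
  · simpa using congrFun hu (j + 1)
  · simpa using congrFun hv (j + 1)

lemma conj_involutive : Function.Involutive (conj : Zorn F → Zorn F) := by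
  intro x
  simp [conj]

lemma shift_eq_self_iff (x : Zorn F) :
    shift x = x ↔ x = ofScalars x.1 (x.2.1 0) (x.2.2.1 0) x.2.2.2 := by
  constructor
  · intro h
    simp only [shift, Prod.ext_iff] at h
    exact Prod.ext rfl (Prod.ext (eq_const_of_comp_sub_one_eq h.2.1)
      (Prod.ext (eq_const_of_comp_sub_one_eq h.2.2.1) rfl))
  · intro h
    rw [h]; rfl

lemma ofScalars_zero : ofScalars (0 : F) 0 0 0 = 0 := rfl

lemma shift_ofScalars (a c d b : F) : shift (ofScalars a c d b) = ofScalars a c d b := rfl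

lemma conj_ofScalars (a c d b : F) : conj (ofScalars a c d b) = ofScalars b (-c) (-d) a := rfl

lemma ofScalars_zornMul_ofScalars (a c d b a' c' d' b' : F) :
    zornMul (ofScalars a c d b) (ofScalars a' c' d' b')
      = ofScalars (a * a' + 3 * (c * d')) (a * c' + b' * c) (a' * d + b * d')
          (b * b' + 3 * (d * c')) := by
  refine Prod.ext ?_ (Prod.ext ?_ (Prod.ext ?_ ?_))
  · simp [zornMul, ofScalars, dotProduct]
  · funext i; fin_cases i <;> simp [zornMul, ofScalars, cross_apply, Matrix.vecHead, Matrix.vecTail]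
  · funext i; fin_cases i <;> simp [zornMul, ofScalars, cross_apply, Matrix.vecHead, Matrix.vecTail]
  · simp [zornMul, ofScalars, dotProduct]

lemma polar_norm_ofScalars_zero_zero (x : Zorn F) (a b : F) :
    QuadraticMap.polar norm x (ofScalars a 0 0 b) = a * x.2.2.2 + b * x.1 := by
  simp only [QuadraticMap.polar, norm, ofScalars, Prod.fst_add, Prod.snd_add, dotProduct,
    Pi.add_apply, add_zero, mul_zero, Finset.sum_const_zero, sub_zero]
  ring

end Zorn

open Zorn

/-- The Okubo product `x * y = τ_st(x̄) · τ_st²(ȳ)`. -/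
def okuboMul {F : Type*} [Field F] (x y : Zorn F) : Zorn F :=
  zornMul (shift (conj x)) (shift (shift (conj y)))

section Okubo

variable {F : Type*} [Field F]

lemma okuboMul_one_left (y : Zorn F) : okuboMul (1, 0, 0, 1) y = shift (shift (conj y)) := by
  rw [okuboMul, conj_one, shift_one, one_zornMul]

lemma okuboMul_one_right (y : Zorn F) : okuboMul y (1, 0, 0, 1) = shift (conj y) := by
  rw [okuboMul, conj_one, shift_one, shift_one, zornMul_one]

lemma okuboMul_one_comm_iff (x : Zorn F) :
    okuboMul (1, 0, 0, 1) x = okuboMul x (1, 0, 0, 1) ↔ shift x = x := by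
  rw [okuboMul_one_left, okuboMul_one_right, shift_injective.eq_iff, shift_conj,
    conj_involutive.injective.eq_iff]

lemma okuboMul_ofScalars_self [CharP F 3] (t c d : F) :
    okuboMul (ofScalars t c d t) (ofScalars t c d t) = ofScalars (t ^ 2) (t * c) (t * d) (t ^ 2) := by
  have h3 : (3 : F) = 0 := by exact_mod_cast CharP.cast_eq_zero F 3
  rw [okuboMul, conj_ofScalars, shift_ofScalars, shift_ofScalars, ofScalars_zornMul_ofScalars]
  congr 1
  · linear_combination (c * d) * h3
  · linear_combination (-(t * c)) * h3
  · linear_combination (-(t * d)) * h3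
  · linear_combination (c * d) * h3

end Okubo

/-- In the split Okubo algebra `x*y = τ_st(x̄)·τ_st²(ȳ)` over a field
of characteristic 3, with quaternionic idempotent `e = 1` and
`R = Centr(e) ∩ Centr(e)^⊥`, every `x ∈ R` satisfies `x*x = 0` and `e + x` is an
idempotent. -/
theorem okubo_singular_idempotents {F : Type*} [Field F] [CharP F 3]
    (τ : Zorn F → Zorn F)
    (hτ : ∀ x : Zorn F,
      τ x = (x.1, fun j => x.2.1 (j - 1), fun j => x.2.2.1 (j - 1), x.2.2.2))
    (bar : Zorn F → Zorn F)
    (hbar : ∀ x : Zorn F, bar x = (x.2.2.2, -x.2.1, -x.2.2.1, x.1))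
    (star : Zorn F → Zorn F → Zorn F)
    (hstar : ∀ x y, star x y = zornMul (τ (bar x)) (τ (τ (bar y))))
    (nz : Zorn F → F)
    (hnz : ∀ x : Zorn F, nz x = x.1 * x.2.2.2 - dotProduct x.2.1 x.2.2.1)
    (e : Zorn F) (he : e = ((1, 0, 0, 1) : Zorn F))
    (R : Set (Zorn F))
    (hR : ∀ x, x ∈ R ↔ (star e x = star x e ∧
      ∀ y : Zorn F, star e y = star y e → QuadraticMap.polar nz x y = 0)) :
    ∀ x ∈ R, star x x = 0 ∧ star (e + x) (e + x) = e + x := by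
  obtain rfl : τ = shift := funext hτ
  obtain rfl : bar = conj := funext hbar
  obtain rfl : star = okuboMul := funext fun x => funext (hstar x)
  obtain rfl : nz = Zorn.norm := funext hnz
  subst he
  intro x hx
  obtain ⟨hcomm, horth⟩ := (hR x).1 hx
  have hb : x.2.2.2 = 0 := by
    simpa [polar_norm_ofScalars_zero_zero] using
      horth _ ((okuboMul_one_comm_iff _).2 (shift_ofScalars 1 0 0 0))
  have ha : x.1 = 0 := by
    simpa [polar_norm_ofScalars_zero_zero] using
      horth _ ((okuboMul_one_comm_iff _).2 (shift_ofScalars 0 0 0 1))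
  obtain ⟨c, d, rfl⟩ : ∃ c d, x = ofScalars 0 c d 0 := by
    have hx' := (shift_eq_self_iff x).1 ((okuboMul_one_comm_iff x).1 hcomm)
    rw [ha, hb] at hx'
    exact ⟨_, _, hx'⟩
  have hsum : ((1, 0, 0, 1) : Zorn F) + ofScalars 0 c d 0 = ofScalars 1 c d 1 := by
    simp [ofScalars]
  refine ⟨by simpa [ofScalars_zero] using okuboMul_ofScalars_self 0 c d, ?_⟩
  rw [hsum]
  simpa using okuboMul_ofScalars_self 1 c d
end

section
/- Let (C, ·, n) be a Cayley algebra, K ⊆ C a quadratic étale subalgebra, and W = K^⊥. Define σ : W × W → K and × : W × W → W by x·y = −σ(x,y) + x×y (decomposition along C = K ⊕ W). Then σ is a nondegenerate K-hermitian form on the K-module W (σ is F-bilinear, σ(a·x, y) = a·σ(x,y), σ(y,x) = conj(σ(x,y)) for a ∈ K), × is anticommutative with (a·x)×y = ā·(x×y) = x×(a·y), and the K-trilinear form Φ(x,y,z) = σ(x, y×z) is alternating. -/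
open QuadraticMap

/-- For a quadratic étale subalgebra `K` of a Cayley algebra and
`W = K^⊥`, the decomposition `x·y = −σ(x,y) + x×y` (for `x, y ∈ W`) defines a
nondegenerate `K`-hermitian form `σ` and an anticommutative product `×` on `W`
with `(a·x)×y = ā·(x×y) = x×(a·y)`, and the `K`-trilinear form
`Φ(x,y,z) = σ(x, y×z)` is alternating. -/
theorem cayley_hermitian_decomposition
    {F C : Type*} [Field F] [AddCommGroup C] [Module F C]
    (mul : C →ₗ[F] C →ₗ[F] C) (one : C)
    (hone : ∀ x : C, mul one x = x ∧ mul x one = x)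
    (n : QuadraticForm F C)
    (hcomp : ∀ x y : C, n (mul x y) = n x * n y)
    (hnondeg : ∀ x : C, (∀ y : C, polar n x y = 0) → x = 0)
    (hdim : Module.finrank F C = 8)
    (K : Submodule F C) (honeK : one ∈ K)
    (hKmul : ∀ x ∈ K, ∀ y ∈ K, mul x y ∈ K)
    (hKdim : Module.finrank F K = 2)
    (hKnd : ∀ x ∈ K, (∀ y ∈ K, polar n x y = 0) → x = 0)
    (W : Submodule F C)
    (hW : ∀ x : C, x ∈ W ↔ ∀ y ∈ K, polar n x y = 0)
    (bar : C → C) (hbar : ∀ x, bar x = polar n x one • one - x) :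
    ∃ σ : C → C → C, ∃ cr : C → C → C,
      -- decomposition x·y = −σ(x,y) + x×y with σ(x,y) ∈ K, x×y ∈ W
      (∀ x ∈ W, ∀ y ∈ W, σ x y ∈ K ∧ cr x y ∈ W ∧ mul x y = -σ x y + cr x y) ∧
      -- σ is F-bilinear on W
      (∀ x ∈ W, ∀ y ∈ W, ∀ z ∈ W,
        σ (x + y) z = σ x z + σ y z ∧ σ x (y + z) = σ x y + σ x z) ∧
      (∀ (c : F), ∀ x ∈ W, ∀ y ∈ W, σ (c • x) y = c • σ x y ∧ σ x (c • y) = c • σ x y) ∧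
      -- σ is K-hermitian: σ(a·x, y) = a·σ(x,y) and σ(y,x) = conj(σ(x,y))
      (∀ a ∈ K, ∀ x ∈ W, ∀ y ∈ W, σ (mul a x) y = mul a (σ x y)) ∧
      (∀ x ∈ W, ∀ y ∈ W, σ y x = bar (σ x y)) ∧
      -- σ is nondegenerate
      (∀ x ∈ W, (∀ y ∈ W, σ x y = 0) → x = 0) ∧
      -- × is F-bilinear and anticommutative with (a·x)×y = ā·(x×y) = x×(a·y)
      (∀ x ∈ W, ∀ y ∈ W, cr y x = -cr x y) ∧
      (∀ x ∈ W, ∀ y ∈ W, ∀ z ∈ W,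
        cr (x + y) z = cr x z + cr y z ∧ cr x (y + z) = cr x y + cr x z) ∧
      (∀ (c : F), ∀ x ∈ W, ∀ y ∈ W, cr (c • x) y = c • cr x y ∧ cr x (c • y) = c • cr x y) ∧
      (∀ a ∈ K, ∀ x ∈ W, ∀ y ∈ W,
        cr (mul a x) y = mul (bar a) (cr x y) ∧ cr x (mul a y) = mul (bar a) (cr x y)) ∧
      -- Φ(x,y,z) = σ(x, y×z) is alternating
      (∀ x ∈ W, ∀ y ∈ W, σ x (cr x y) = 0 ∧ σ x (cr y y) = 0 ∧ σ x (cr y x) = 0) := by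
  have m1 : ∀ x, mul one x = x := fun x => (hone x).1
  have m1' : ∀ x, mul x one = x := fun x => (hone x).2
  have mulal : ∀ x y z : C, mul (x + y) z = mul x z + mul y z := fun x y z => by
    rw [_root_.map_add]; rfl
  have mulsl : ∀ (c : F) (x z : C), mul (c • x) z = c • mul x z := fun c x z => by
    rw [_root_.map_smul]; rfl
  have mulsubl : ∀ x y z : C, mul (x - y) z = mul x z - mul y z := fun x y z => by
    rw [_root_.map_sub]; rfl
  haveI hFD : FiniteDimensional F C := Module.finite_of_finrank_pos (by rw [hdim]; norm_num)
  haveI hNT : Nontrivial C := Module.nontrivial_of_finrank_pos (R := F) (by rw [hdim]; norm_num)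
  -- linearized composition laws
  have L : ∀ u x y : C, polar n (mul u x) (mul u y) = n u * polar n x y := by
    intro u x y
    have h : mul u x + mul u y = mul u (x + y) := (_root_.map_add _ _ _).symm
    simp only [QuadraticMap.polar, h, hcomp]
    ring
  have R : ∀ u x y : C, polar n (mul x u) (mul y u) = polar n x y * n u := by
    intro u x y
    have h : mul x u + mul y u = mul (x + y) u := (mulal x y u).symm
    simp only [QuadraticMap.polar, h, hcomp]
    ring
  have hnadd : ∀ u v : C, n (u + v) = polar n u v + n u + n v := by
    intro u v; simp only [QuadraticMap.polar]; ring
  have starL : ∀ u v x y : C,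
      polar n (mul u x) (mul v y) + polar n (mul v x) (mul u y) = polar n u v * polar n x y := by
    intro u v x y
    have h := L (u + v) x y
    rw [mulal u v x, mulal u v y, polar_add_left, polar_add_right, polar_add_right, hnadd] at h
    have e1 := L u x y
    have e2 := L v x y
    linear_combination h - e1 - e2
  have starR : ∀ u v x y : C,
      polar n (mul x u) (mul y v) + polar n (mul x v) (mul y u) = polar n x y * polar n u v := by
    intro u v x y
    have h := R (u + v) x y
    rw [_root_.map_add (mul x), _root_.map_add (mul y), polar_add_left, polar_add_right, polar_add_right,
      hnadd] at h
    have e1 := R u x y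
    have e2 := R v x y
    linear_combination h - e1 - e2
  have barmul : ∀ u z : C, mul (bar u) z = polar n u one • z - mul u z := by
    intro u z
    rw [hbar, mulsubl, mulsl, m1]
  have barmul' : ∀ u z : C, mul z (bar u) = polar n u one • z - mul z u := by
    intro u z
    rw [hbar, _root_.map_sub, _root_.map_smul, m1']
  have A1 : ∀ u x y : C, polar n (mul u x) y = polar n x (mul (bar u) y) := by
    intro u x y
    have h := starL u one x y
    rw [m1, m1] at h
    rw [barmul, polar_sub_right, polar_smul_right, smul_eq_mul]
    linear_combination h
  have A2 : ∀ u x y : C, polar n (mul x u) y = polar n x (mul y (bar u)) := by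
    intro u x y
    have h := starR u one x y
    rw [m1', m1'] at h
    rw [barmul', polar_sub_right, polar_smul_right, smul_eq_mul]
    linear_combination h
  have n1 : n one = 1 := by
    obtain ⟨x, hx⟩ := exists_ne (0 : C)
    have h2 : ¬ ∀ y, polar n x y = 0 := fun h => hx (hnondeg x h)
    push_neg at h2
    obtain ⟨y, hy⟩ := h2
    have h3 := R one x y
    rw [m1', m1'] at h3
    have h4 : polar n x y * 1 = polar n x y * n one := by rw [mul_one]; exact h3
    exact (mul_left_cancel₀ hy h4).symm
  have b2 : polar n one one = 2 := by
    rw [polar_self, n1]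
    norm_num
  have hb1 : ∀ u : C, polar n (bar u) one = polar n u one := by
    intro u
    rw [hbar, polar_sub_left, polar_smul_left, b2, smul_eq_mul]
    ring
  have barbar : ∀ u : C, bar (bar u) = u := by
    intro u
    rw [hbar (bar u), hb1, hbar]
    module
  have hbarinv : ∀ u : C, polar n u one • one - bar u = u := by
    intro u
    conv_lhs => rw [← hb1 u, ← hbar (bar u)]
    exact barbar u
  have CH : ∀ u : C, mul u u = polar n u one • u - n u • one := by
    intro u
    have key : ∀ z, polar n (mul u u - (polar n u one • u - n u • one)) z = 0 := by
      intro z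
      have h1 := A2 u u z
      rw [barmul', polar_sub_right, polar_smul_right] at h1
      have h3 : polar n u (mul z u) = polar n one z * n u := by
        have := R u one z; rwa [m1] at this
      rw [h3] at h1
      rw [polar_sub_left, polar_sub_left, polar_smul_left, polar_smul_left, h1,
        polar_comm n one z]
      simp only [smul_eq_mul]
      ring
    exact sub_eq_zero.mp (hnondeg _ key)
  have linCH : ∀ u v : C,
      mul u v + mul v u = polar n u one • v + polar n v one • u - polar n u v • one := by
    intro u v
    have h := CH (u + v)
    have e : mul (u + v) (u + v) = mul u u + mul u v + mul v u + mul v v := by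
      simp only [mulal, _root_.map_add, LinearMap.add_apply]
      abel
    rw [e, CH u, CH v, polar_add_left, hnadd] at h
    linear_combination (norm := module) h
  -- W and K basic facts
  have WK : ∀ x ∈ W, ∀ a ∈ K, polar n x a = 0 := fun x hx => (hW x).mp hx
  have Wx1 : ∀ x ∈ W, polar n x one = 0 := fun x hx => WK x hx one honeK
  have KW0 : ∀ v, v ∈ K → v ∈ W → v = 0 := fun v hk hw =>
    hKnd v hk (fun y hy => WK v hw y hy)
  have barmem : ∀ a ∈ K, bar a ∈ K := fun a ha => by
    rw [hbar]; exact K.sub_mem (K.smul_mem _ honeK) ha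
  have KmulW : ∀ a ∈ K, ∀ x ∈ W, mul a x ∈ W := by
    intro a ha x hx
    rw [hW]
    intro k hk
    rw [A1 a x k]
    exact WK x hx _ (hKmul _ (barmem a ha) _ hk)
  have C1 : ∀ x ∈ W, ∀ a ∈ K, mul x a = mul (bar a) x := by
    intro x hx a ha
    have h := linCH x a
    rw [Wx1 x hx, WK x hx a ha] at h
    rw [barmul]
    linear_combination (norm := module) h
  have leftalt : ∀ u v : C, mul u (mul u v) = mul (mul u u) v := by
    intro u v
    have key : ∀ z, polar n (mul u (mul u v) - mul (mul u u) v) z = 0 := by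
      intro z
      have h1 := A1 u (mul u v) z
      rw [barmul, polar_sub_right, polar_smul_right] at h1
      have h2 : polar n (mul u v) (mul u z) = n u * polar n v z := L u v z
      rw [h2] at h1
      have h4 : mul (mul u u) v = polar n u one • mul u v - n u • v := by
        rw [CH u, mulsubl, mulsl, mulsl, m1]
      rw [polar_sub_left, h4, polar_sub_left, polar_smul_left, polar_smul_left, h1]
      simp only [smul_eq_mul]
      ring
    exact sub_eq_zero.mp (hnondeg _ key)
  have rightalt : ∀ u v : C, mul (mul u v) v = mul u (mul v v) := by
    intro u v
    have key : ∀ z, polar n (mul (mul u v) v - mul u (mul v v)) z = 0 := by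
      intro z
      have h1 := A2 v (mul u v) z
      rw [barmul', polar_sub_right, polar_smul_right] at h1
      have h2 : polar n (mul u v) (mul z v) = polar n u z * n v := R v u z
      rw [h2] at h1
      have h4 : mul u (mul v v) = polar n v one • mul u v - n v • u := by
        rw [CH v, _root_.map_sub, _root_.map_smul, _root_.map_smul, m1']
      rw [polar_sub_left, h4, polar_sub_left, polar_smul_left, polar_smul_left, h1]
      simp only [smul_eq_mul]
      ring
    exact sub_eq_zero.mp (hnondeg _ key)
  have linrightalt : ∀ x u v : C,
      mul (mul x u) v + mul (mul x v) u = mul x (mul u v) + mul x (mul v u) := by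
    intro x u v
    have h := rightalt x (u + v)
    simp only [_root_.map_add, mulal, LinearMap.add_apply] at h
    have h1 := rightalt x u
    have h2 := rightalt x v
    linear_combination (norm := module) h - h1 - h2
  have hone0 : one ≠ (0 : C) := by
    intro h
    have := n1
    rw [h, QuadraticMap.map_zero] at this
    exact zero_ne_one this
  -- commutativity of K
  have Kcomm : ∀ a ∈ K, ∀ k ∈ K, mul a k = mul k a := by
    intro a ha k hk
    haveI : FiniteDimensional F K := inferInstance
    set v : Fin 3 → K := ![⟨one, honeK⟩, ⟨a, ha⟩, ⟨k, hk⟩] with hv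
    have hni : ¬ LinearIndependent F v := by
      intro h
      have := h.fintype_card_le_finrank
      rw [hKdim] at this
      simp at this
    obtain ⟨g, hsum, i, hgi⟩ := Fintype.not_linearIndependent_iff.mp hni
    have hsum' : g 0 • one + g 1 • a + g 2 • k = 0 := by
      have := congrArg (Subtype.val) hsum
      simpa [hv, Fin.sum_univ_three] using this
    by_cases h2 : g 2 = 0
    · by_cases h1 : g 1 = 0
      · exfalso
        have h0 : g 0 ≠ 0 := by
          fin_cases i
          · exact hgi
          · exact (hgi h1).elim
          · exact (hgi h2).elim
        rw [h1, h2, zero_smul, zero_smul, add_zero, add_zero] at hsum'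
        exact hone0 ((smul_eq_zero.mp hsum').resolve_left h0)
      · have ha' : a = ((g 1)⁻¹ * (-(g 0))) • one := by
          rw [h2, zero_smul, add_zero] at hsum'
          have e : g 1 • a = (-(g 0)) • one := by
            linear_combination (norm := module) hsum'
          have := congrArg (fun t => (g 1)⁻¹ • t) e
          simpa [smul_smul, inv_mul_cancel₀ h1] using this
        rw [ha', mulsl, _root_.map_smul, m1, m1']
    · have hk' : k = ((g 2)⁻¹ * (-(g 0))) • one + ((g 2)⁻¹ * (-(g 1))) • a := by
        have e : g 2 • k = (-(g 0)) • one + (-(g 1)) • a := by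
          linear_combination (norm := module) hsum'
        have := congrArg (fun t => (g 2)⁻¹ • t) e
        simpa [smul_smul, smul_add, inv_mul_cancel₀ h2] using this
      rw [hk', _root_.map_add, _root_.map_smul, _root_.map_smul, mulal, mulsl, mulsl, m1, m1']
  -- projection onto K along W
  have decomp : ∀ c : C, ∃ k, k ∈ K ∧ c - k ∈ W := by
    have gdef : ∀ (kk : K), ((LinearMap.compl₁₂ (polarBilin n) K.subtype K.subtype) kk : Module.Dual F K) = (((polarBilin n) (kk : C)).domRestrict K) := fun kk => rfl
    set g : K →ₗ[F] Module.Dual F K := LinearMap.compl₁₂ (polarBilin n) K.subtype K.subtype with hg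
    have ginj : Function.Injective g := by
      intro x y hxy
      have hz : g (x - y) = 0 := by rw [_root_.map_sub, hxy, sub_self]
      have : ∀ k ∈ K, polar n ((x - y : K) : C) k = 0 := by
        intro k hk
        have := congrArg (fun f : Module.Dual F K => f ⟨k, hk⟩) hz
        simpa [hg, LinearMap.compl₁₂_apply, polarBilin_apply_apply] using this
      have := hKnd _ (x - y).2 this
      have : x - y = 0 := Subtype.ext (by simpa using this)
      exact sub_eq_zero.mp this
    haveI : FiniteDimensional F K := inferInstance
    have gsurj : Function.Surjective g := by
      rw [← LinearMap.injective_iff_surjective_of_finrank_eq_finrank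
        (by rw [Subspace.dual_finrank_eq])]
      exact ginj
    intro c
    obtain ⟨k, hk⟩ := gsurj (((polarBilin n) c).domRestrict K)
    refine ⟨k, k.2, ?_⟩
    rw [hW]
    intro y hy
    have := congrArg (fun f : Module.Dual F K => f ⟨y, hy⟩) hk
    simp only [hg, LinearMap.compl₁₂_apply, LinearMap.domRestrict_apply,
      polarBilin_apply_apply, Submodule.coe_subtype] at this
    rw [polar_sub_left, this, sub_self]
  choose p hpK hpW using decomp
  have puniq : ∀ c k, k ∈ K → c - k ∈ W → p c = k := by
    intro c k hk hw
    have hmem : p c - k ∈ K := K.sub_mem (hpK c) hk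
    have hmem2 : p c - k ∈ W := by
      have e : (c - k) - (c - p c) = p c - k := by abel
      rw [← e]
      exact W.sub_mem hw (hpW c)
    exact sub_eq_zero.mp (KW0 _ hmem hmem2)
  have pK : ∀ k ∈ K, p k = k := fun k hk => puniq k k hk (by simpa using W.zero_mem)
  have pW : ∀ w ∈ W, p w = 0 := fun w hw => puniq w 0 K.zero_mem (by simpa using hw)
  have padd : ∀ c d, p (c + d) = p c + p d := by
    intro c d
    refine puniq _ _ (K.add_mem (hpK c) (hpK d)) ?_
    have := W.add_mem (hpW c) (hpW d)
    convert this using 1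
    abel
  have psmul : ∀ (t : F) c, p (t • c) = t • p c := by
    intro t c
    refine puniq _ _ (K.smul_mem t (hpK c)) ?_
    have := W.smul_mem t (hpW c)
    convert this using 1
    rw [smul_sub]
  have pneg : ∀ c, p (-c) = - p c := by
    intro c
    have := psmul (-1) c
    simpa using this
  have psub : ∀ c d, p (c - d) = p c - p d := by
    intro c d
    rw [sub_eq_add_neg, padd, pneg, sub_eq_add_neg]
  -- the key structural identity
  have G : ∀ a ∈ K, ∀ x ∈ W, ∀ y ∈ W, mul (mul a x) y =
      mul a (p (mul x y)) + mul (bar a) (mul x y - p (mul x y)) := by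
    intro a ha x hx y hy
    set s := p (mul x y) with hs
    set w := mul x y - p (mul x y) with hw
    have hsK : s ∈ K := hpK _
    have hwW : w ∈ W := hpW _
    have hxy : mul x y = s + w := by rw [hw]; abel
    have e1 : mul a x = mul x (bar a) := by
      rw [C1 x hx (bar a) (barmem a ha), barbar]
    have e2 := linrightalt x (bar a) y
    have e3 : mul (bar a) y + mul y (bar a) = polar n a one • y := by
      have h := linCH (bar a) y
      have hby : polar n (bar a) y = 0 := by
        rw [polar_comm]; exact WK y hy _ (barmem a ha)
      rw [hb1, hby, Wx1 y hy] at h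
      rw [h]
      module
    have e2' : mul (mul x (bar a)) y + mul (mul x y) (bar a) = polar n a one • mul x y := by
      have hsum : mul x (mul (bar a) y) + mul x (mul y (bar a)) = mul x (polar n a one • y) := by
        rw [← _root_.map_add, e3]
      rw [_root_.map_smul] at hsum
      linear_combination (norm := module) e2 + hsum
    have e4 : mul (mul a x) y = polar n a one • mul x y - mul (mul x y) (bar a) := by
      rw [e1]
      linear_combination (norm := module) e2'
    have e5 : mul (mul x y) (bar a) = mul s (bar a) + mul a w := by
      rw [hxy, mulal, C1 w hwW _ (barmem a ha), barbar]
    have e6 : polar n a one • s - mul s (bar a) = mul a s := by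
      rw [Kcomm s hsK (bar a) (barmem a ha)]
      calc polar n a one • s - mul (bar a) s
          = mul (polar n a one • one - bar a) s := by rw [mulsubl, mulsl, m1]
        _ = mul a s := by rw [hbarinv a]
    have e7 : polar n a one • w - mul a w = mul (bar a) w := by
      rw [barmul]
    rw [e4, e5, hxy]
    linear_combination (norm := module) e6 + e7
  have pG : ∀ a ∈ K, ∀ x ∈ W, ∀ y ∈ W,
      p (mul (mul a x) y) = mul a (p (mul x y)) := by
    intro a ha x hx y hy
    refine puniq _ _ (hKmul a ha _ (hpK _)) ?_
    rw [G a ha x hx y hy, add_sub_cancel_left]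
    exact KmulW (bar a) (barmem a ha) _ (hpW _)
  have crG : ∀ a ∈ K, ∀ x ∈ W, ∀ y ∈ W,
      mul (mul a x) y - p (mul (mul a x) y) = mul (bar a) (mul x y - p (mul x y)) := by
    intro a ha x hx y hy
    rw [pG a ha x hx y hy, G a ha x hx y hy, add_sub_cancel_left]
  have anti0 : ∀ x ∈ W, ∀ y ∈ W, mul y x = - polar n x y • one - mul x y := by
    intro x hx y hy
    have h := linCH x y
    rw [Wx1 x hx, Wx1 y hy] at h
    linear_combination (norm := module) h
  have panti : ∀ x ∈ W, ∀ y ∈ W, p (mul y x) = - polar n x y • one - p (mul x y) := by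
    intro x hx y hy
    rw [anti0 x hx y hy, psub, psmul, pK one honeK]
  have antic : ∀ x ∈ W, ∀ y ∈ W,
      mul y x - p (mul y x) = -(mul x y - p (mul x y)) := by
    intro x hx y hy
    rw [panti x hx y hy, anti0 x hx y hy]
    module
  have bmul1 : ∀ x ∈ W, ∀ y : C, polar n (mul x y) one = - polar n x y := by
    intro x hx y
    rw [A1 x y one, hbar, Wx1 x hx, zero_smul, zero_sub, _root_.map_neg,
      LinearMap.neg_apply, m1', polar_neg_right, polar_comm]
  have pone : ∀ c : C, polar n (p c) one = polar n c one := by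
    intro c
    have := WK _ (hpW c) one honeK
    rw [polar_sub_left] at this
    linear_combination -this
  -- build σ and cr
  refine ⟨fun x y => - p (mul x y), fun x y => mul x y - p (mul x y), ?_, ?_, ?_, ?_, ?_, ?_, ?_, ?_, ?_, ?_, ?_⟩
  · beta_reduce
    intro x hx y hy
    exact ⟨K.neg_mem (hpK _), hpW _, by module⟩
  · beta_reduce
    intro x hx y hy z hz
    constructor
    · rw [mulal, padd]; abel
    · rw [_root_.map_add, padd]; abel
  · beta_reduce
    intro c x hx y hy
    constructor
    · rw [mulsl, psmul, smul_neg]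
    · rw [_root_.map_smul, psmul, smul_neg]
  · beta_reduce
    intro a ha x hx y hy
    rw [pG a ha x hx y hy, _root_.map_neg]
  · beta_reduce
    intro x hx y hy
    have h1 : polar n (- p (mul x y)) one = polar n x y := by
      rw [polar_neg_left, pone, bmul1 x hx y, neg_neg]
    rw [hbar, h1, panti x hx y hy]
    module
  · beta_reduce
    intro x hx h0
    apply hnondeg x
    intro z
    have h1 : polar n x (p z) = 0 := WK x hx _ (hpK z)
    have h2 : polar n x (z - p z) = 0 := by
      have hu : z - p z ∈ W := hpW z
      have e2 : p (mul x (z - p z)) = 0 := neg_eq_zero.mp (h0 _ hu)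
      have e3 : polar n (mul x (z - p z)) one = - polar n x (z - p z) :=
        bmul1 x hx _
      rw [← pone, e2, polar_zero_left] at e3
      exact neg_eq_zero.mp e3.symm
    have e : z = p z + (z - p z) := by abel
    calc polar n x z = polar n x (p z + (z - p z)) := by rw [← e]
      _ = 0 := by rw [polar_add_right, h1, h2, add_zero]
  · beta_reduce
    intro x hx y hy
    exact antic x hx y hy
  · beta_reduce
    intro x hx y hy z hz
    constructor
    · rw [mulal, padd]; abel
    · rw [_root_.map_add, padd]; abel
  · beta_reduce
    intro c x hx y hy
    constructor
    · rw [mulsl, psmul, smul_sub]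
    · rw [_root_.map_smul, psmul, smul_sub]
  · beta_reduce
    intro a ha x hx y hy
    constructor
    · exact crG a ha x hx y hy
    · have hay : mul a y ∈ W := KmulW a ha y hy
      rw [antic (mul a y) hay x hx, crG a ha y hy x hx, antic x hx y hy, _root_.map_neg, neg_neg]
  · beta_reduce
    intro x hx y hy
    have main : ∀ y' ∈ W, mul x (mul x y' - p (mul x y')) ∈ W := by
      intro y' hy'
      rw [_root_.map_sub]
      refine W.sub_mem ?_ ?_
      · have hxx : mul x (mul x y') = (- n x) • y' := by
          rw [leftalt, CH x, Wx1 x hx, zero_smul, zero_sub, ← neg_smul, mulsl, m1]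
        rw [hxx]
        exact W.smul_mem _ hy'
      · rw [C1 x hx _ (hpK _)]
        exact KmulW _ (barmem _ (hpK _)) x hx
    refine ⟨?_, ?_, ?_⟩
    · rw [pW _ (main y hy), neg_zero]
    · have hyy : mul y y - p (mul y y) = 0 := by
        have hK : mul y y ∈ K := by
          rw [CH y, Wx1 y hy, zero_smul, zero_sub, ← neg_smul]
          exact K.smul_mem _ honeK
        rw [pK _ hK, sub_self]
      rw [hyy, _root_.map_zero, pW 0 W.zero_mem, neg_zero]
    · rw [antic x hx y hy, _root_.map_neg, pneg, pW _ (main y hy)]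
      simp
end

section
/- Let char F = 3, let K be a quadratic étale F-algebra with norm n, and let a ∈ K with n(a)=1, writing a = α + βk where K = F·1 ⊕ F·k with n(1,k) = 0. Then a ∈ K³ := {b³ : b ∈ K} if and only if α ∈ F³ (where F³ = {λ³ : λ ∈ F}). -/
/-!
In characteristic 3 cubing is additive, so `(μ + mk)³ = μ³ - ν m³ k`: the `1`-coordinate of a cube
is a cube, which gives one direction. Conversely, if `α = l³` then the norm condition reads
`β²ν = 1 - l⁶ = (1 - l²)³`, and `m = -β / (1 - l²)` solves `-ν m³ = β` (for `β ≠ 0`, which forces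
`1 - l² ≠ 0`), so `l + mk` is a cube root of `α + βk`.
-/

theorem Module.Basis.exists_eq_smul_add_smul {R M : Type*} [Semiring R] [AddCommMonoid M]
    [Module R M] (b : Module.Basis (Fin 2) R M) (c : M) :
    ∃ x y : R, c = x • b 0 + y • b 1 :=
  ⟨b.repr c 0, b.repr c 1, by
    rw [← Fin.sum_univ_two (fun i => b.repr c i • b i), b.sum_repr]⟩

theorem Module.Basis.repr_smul_add_smul_zero {R M : Type*} [Semiring R] [AddCommMonoid M]
    [Module R M] (b : Module.Basis (Fin 2) R M) (x y : R) :
    b.repr (x • b 0 + y • b 1) 0 = x := by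
  simp

theorem smul_one_add_smul_pow_three {F K : Type*} [CommRing F] [CommRing K] [Algebra F K]
    [CharP K 3] {k : K} {ν : F} (hk : k ^ 2 = algebraMap F K (-ν)) (μ m : F) :
    (μ • (1 : K) + m • k) ^ 3 = μ ^ 3 • (1 : K) + (-ν * m ^ 3) • k := by
  have hk3 : k ^ 3 = (-ν) • k := by rw [pow_succ, hk, ← Algebra.smul_def]
  rw [add_pow_char, smul_pow, smul_pow, one_pow, hk3, smul_smul, mul_comm (m ^ 3)]

theorem exists_neg_mul_pow_three_eq_of_sq_add_sq_mul_eq_one {F : Type*} [Field F] [CharP F 3]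
    {ν β : F} (hν : ν ≠ 0) (l : F) (h : (l ^ 3) ^ 2 + β ^ 2 * ν = 1) :
    ∃ m : F, -ν * m ^ 3 = β := by
  have hnorm : β ^ 2 * ν = (1 - l ^ 2) ^ 3 := by
    rw [sub_pow_char, one_pow, ← pow_mul]
    linear_combination h
  rcases eq_or_ne β 0 with rfl | hβ
  · exact ⟨0, by simp⟩
  have hl : 1 - l ^ 2 ≠ 0 := by
    rintro h0
    rw [h0, zero_pow three_ne_zero] at hnorm
    exact mul_ne_zero (pow_ne_zero 2 hβ) hν hnorm
  refine ⟨-β / (1 - l ^ 2), ?_⟩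
  field_simp
  linear_combination hnorm

/-- Over a field of characteristic 3, in a quadratic étale algebra
`K = F·1 ⊕ F·k` with `k² = −ν·1` (`ν ≠ 0`), a norm 1 element `a = α + βk`
(`α² + β²ν = 1`) is a cube in `K` if and only if `α` is a cube in `F`. -/
theorem cube_in_quadratic_etale_char3
    {F K : Type*} [Field F] [CharP F 3] [CommRing K] [Algebra F K]
    (k : K) (b : Module.Basis (Fin 2) F K) (hb0 : b 0 = 1) (hb1 : b 1 = k)
    (ν : F) (hν : ν ≠ 0) (hk : k ^ 2 = algebraMap F K (-ν))
    (α β : F) (ha : α ^ 2 + β ^ 2 * ν = 1) :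
    (∃ c : K, c ^ 3 = α • (1 : K) + β • k) ↔ (∃ l : F, l ^ 3 = α) := by
  have : Nontrivial K := ⟨⟨1, 0, hb0 ▸ b.ne_zero 0⟩⟩
  have : CharP K 3 := charP_of_injective_algebraMap' F 3
  constructor
  · rintro ⟨c, hc⟩
    obtain ⟨μ, m, rfl⟩ := b.exists_eq_smul_add_smul c
    rw [hb0, hb1, smul_one_add_smul_pow_three hk, ← hb0, ← hb1] at hc
    refine ⟨μ, ?_⟩
    simpa only [b.repr_smul_add_smul_zero] using congrArg (fun z => b.repr z 0) hc
  · rintro ⟨l, rfl⟩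
    obtain ⟨m, hm⟩ := exists_neg_mul_pow_three_eq_of_sq_add_sq_mul_eq_one hν l ha
    exact ⟨l • 1 + m • k, by rw [smul_one_add_smul_pow_three hk, hm]⟩
end
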